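/- arXiv:math/0406233 — 7 statements merged into one kernel-verified Lean document; each statement's English description precedes it below -/
import Mathlib

section
/- Let E be a Banach space and let τ be a Hausdorff topology on E. Let {T(t) : t ≥ 0} be a 1-parameter τ-continuous semigroup of mappings on a subset C of E. Let α and β be positive real numbers such that α/β is irrational. Then the set of common fixed points ⋂_{t ≥ 0} F(T(t)) equals F(T(α)) ∩ F(T(β)). -/
/-- For a 1-parameter τ-continuous semigroup `{T(t) : t ≥ 0}` of mappings
on a subset `C` of a Banach space `E`, and positive reals `α, β` with `α/β` irrational,
the set of common fixed points `⋂_{t ≥ 0} F(T(t))` equals `F(T(α)) ∩ F(T(β))`. -/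
theorem common_fixed_points_one_parameter
    {E : Type*} [NormedAddCommGroup E] [NormedSpace ℝ E] [CompleteSpace E]
    (τ : TopologicalSpace E) (hτ : @T2Space E τ)
    (C : Set E) (T : ℝ → E → E)
    (hmaps : ∀ t : ℝ, 0 ≤ t → ∀ x ∈ C, T t x ∈ C)
    (hsemi : ∀ s : ℝ, 0 ≤ s → ∀ t : ℝ, 0 ≤ t → ∀ x ∈ C, T (s + t) x = T s (T t x))
    (hcont : ∀ x ∈ C, @ContinuousOn ℝ E _ τ (fun t => T t x) (Set.Ici 0))
    (α β : ℝ) (hα : 0 < α) (hβ : 0 < β) (hirr : Irrational (α / β)) :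
    (⋂ t ∈ Set.Ici (0 : ℝ), {x ∈ C | T t x = x})
      = {x ∈ C | T α x = x} ∩ {x ∈ C | T β x = x} := by
  ext x
  simp only [Set.mem_iInter, Set.mem_inter_iff, Set.mem_setOf_eq, Set.mem_Ici]
  constructor
  · intro h
    exact ⟨h α hα.le, h β hβ.le⟩
  · rintro ⟨⟨hxC, hfα⟩, ⟨-, hfβ⟩⟩
    intro t ht
    refine ⟨hxC, ?_⟩
    -- T 0 x = x
    have h0 : T 0 x = x := by
      have := hsemi 0 le_rfl α hα.le x hxC
      rw [zero_add, hfα] at this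
      exact this.symm
    -- addition of fixed times
    have hadd : ∀ u v : ℝ, 0 ≤ u → 0 ≤ v → T u x = x → T v x = x → T (u + v) x = x := by
      intro u v hu hv huf hvf
      rw [hsemi u hu v hv x hxC, hvf, huf]
    -- subtraction of fixed times
    have hsub : ∀ a b : ℝ, 0 ≤ b → b ≤ a → T a x = x → T b x = x → T (a - b) x = x := by
      intro a b hb hba haf hbf
      have := hsemi (a - b) (by linarith) b hb x hxC
      rw [sub_add_cancel, haf, hbf] at this
      exact this.symm
    have habs' : ∀ u v : ℝ, 0 ≤ u → 0 ≤ v → T u x = x → T v x = x → T |u - v| x = x := by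
      intro u v hu hv huf hvf
      rcases le_total v u with h | h
      · rw [abs_of_nonneg (by linarith)]; exact hsub u v hv h huf hvf
      · rw [abs_of_nonpos (by linarith), neg_sub]; exact hsub v u hu h hvf huf
    -- K : additive subgroup of fixed "times" (via absolute value)
    have habs : ∀ a b : ℝ, T |a| x = x → T |b| x = x → T |a + b| x = x := by
      intro a b haf hbf
      rcases le_or_gt 0 a with ha | ha <;> rcases le_or_gt 0 b with hb | hb
      · have h1 : |a + b| = |a| + |b| := by
          rw [abs_of_nonneg ha, abs_of_nonneg hb, abs_of_nonneg (by linarith)]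
        rw [h1]; exact hadd _ _ (abs_nonneg a) (abs_nonneg b) haf hbf
      · have h1 : a + b = |a| - |b| := by rw [abs_of_nonneg ha, abs_of_neg hb]; ring
        rw [h1]; exact habs' _ _ (abs_nonneg a) (abs_nonneg b) haf hbf
      · have h1 : a + b = -(|a| - |b|) := by rw [abs_of_neg ha, abs_of_nonneg hb]; ring
        rw [h1, abs_neg]; exact habs' _ _ (abs_nonneg a) (abs_nonneg b) haf hbf
      · have h1 : |a + b| = |a| + |b| := by
          rw [abs_of_neg ha, abs_of_neg hb, abs_of_neg (by linarith)]; ring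
        rw [h1]; exact hadd _ _ (abs_nonneg a) (abs_nonneg b) haf hbf
    set K : AddSubgroup ℝ :=
      { carrier := {s : ℝ | T |s| x = x}
        zero_mem' := by simpa using h0
        add_mem' := fun {a b} haf hbf => habs a b haf hbf
        neg_mem' := fun {a} haf => by simpa [abs_neg] using haf } with hK
    have hαK : α ∈ K := by
      show T |α| x = x; rwa [abs_of_pos hα]
    have hβK : β ∈ K := by
      show T |β| x = x; rwa [abs_of_pos hβ]
    set S : AddSubgroup ℝ := AddSubgroup.closure {α, β} with hS
    have hSK : S ≤ K := by
      rw [hS, AddSubgroup.closure_le]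
      rintro s (rfl | rfl)
      · exact hαK
      · exact hβK
    -- S is dense (not cyclic since α/β irrational)
    have hd : Dense (S : Set ℝ) := by
      rcases S.dense_or_cyclic with hd | ⟨a, hcyc⟩
      · exact hd
      · exfalso
        have hαS : α ∈ S := AddSubgroup.subset_closure (by left; rfl)
        have hβS : β ∈ S := AddSubgroup.subset_closure (by right; rfl)
        rw [hcyc, AddSubgroup.mem_closure_singleton] at hαS hβS
        obtain ⟨m, hm⟩ := hαS
        obtain ⟨n, hn⟩ := hβS
        rw [zsmul_eq_mul] at hm hn
        have ha0 : a ≠ 0 := by rintro rfl; rw [mul_zero] at hn; exact hβ.ne' hn.symm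
        have hn0 : (n : ℝ) ≠ 0 := by rintro h; rw [h, zero_mul] at hn; exact hβ.ne' hn.symm
        have : α / β = (m : ℝ) / (n : ℝ) := by
          rw [← hm, ← hn, mul_comm (m : ℝ) a, mul_comm (n : ℝ) a,
            mul_div_mul_left _ _ ha0]
        rw [this] at hirr
        exact hirr ⟨(m : ℚ) / (n : ℚ), by push_cast; ring⟩
    -- the fixed-time set is closed in [0,∞)
    haveI : T1Space E := @T2Space.t1Space E τ hτ
    have hDc : IsClosed (Set.Ici (0 : ℝ) ∩ (fun s => T s x) ⁻¹' {x}) :=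
      ContinuousOn.preimage_isClosed_of_isClosed (hcont x hxC) isClosed_Ici
        (@isClosed_singleton E τ _ x)
    have hsubD : ((S : Set ℝ) ∩ Set.Ici 0) ⊆ Set.Ici (0 : ℝ) ∩ (fun s => T s x) ⁻¹' {x} := by
      rintro s ⟨hs1, hs2⟩
      refine ⟨hs2, ?_⟩
      have := hSK hs1
      rw [hK] at this
      have : T |s| x = x := this
      rwa [abs_of_nonneg hs2] at this
    -- t is in the closure of S ∩ [0,∞)
    have htcl : t ∈ closure ((S : Set ℝ) ∩ Set.Ici 0) := by
      rcases eq_or_lt_of_le ht with rfl | htpos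
      · exact subset_closure ⟨S.zero_mem, Set.self_mem_Ici⟩
      · rw [mem_closure_iff]
        intro U hU htU
        have hopen : IsOpen (U ∩ Set.Ioi (0 : ℝ)) := hU.inter isOpen_Ioi
        have hne : (U ∩ Set.Ioi (0 : ℝ)).Nonempty := ⟨t, htU, htpos⟩
        obtain ⟨s, hsS, hsU⟩ := hd.exists_mem_open hopen hne
        exact ⟨s, hsU.1, hsS, Set.mem_Ici.mpr (le_of_lt (Set.mem_Ioi.mp hsU.2))⟩
    have htD : t ∈ Set.Ici (0 : ℝ) ∩ (fun s => T s x) ⁻¹' {x} := by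
      have := closure_mono hsubD htcl
      rwa [hDc.closure_eq] at this
    exact htD.2
end

section
/- Let α₁, α₂, …, αₙ be real numbers such that {1, α₁, α₂, …, αₙ} is linearly independent over ℚ. Then the set of cluster points of the sequence ( (kα₁ − ⌊kα₁⌋, kα₂ − ⌊kα₂⌋, …, kαₙ − ⌊kαₙ⌋) )_{k ∈ ℕ} is the full cube [0,1]ⁿ. -/
open Module Filter

lemma line_mem_closure {E : Type*} [NormedAddCommGroup E] [NormedSpace ℝ E]
    (H : AddSubgroup E) {h : ℕ → E} {u : E}
    (hmem : ∀ j, h j ∈ H) (hpos : ∀ j, 0 < ‖h j‖)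
    (hsmall : Tendsto (fun j => ‖h j‖) atTop (nhds 0))
    (hdir : Tendsto (fun j => ‖h j‖⁻¹ • h j) atTop (nhds u)) (t : ℝ) :
    t • u ∈ closure (H : Set E) := by
  rw [Metric.mem_closure_iff]
  intro ε hε
  have hc : (0:ℝ) < ε / (2 * (|t| + 1)) := by positivity
  have h1 : ∀ᶠ j in atTop, ‖h j‖ < ε / 2 :=
    hsmall.eventually (eventually_lt_nhds (by positivity : (0:ℝ) < ε / 2))
  have h2 : ∀ᶠ j in atTop, dist (‖h j‖⁻¹ • h j) u < ε / (2 * (|t| + 1)) :=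
    hdir.eventually (Metric.ball_mem_nhds u hc)
  obtain ⟨j, hj1, hj2⟩ := (h1.and h2).exists
  set b := h j with hb
  set r := ‖b‖ with hr
  have hr0 : 0 < r := hpos j
  set m : ℤ := ⌊t / r⌋ with hm
  refine ⟨m • b, AddSubgroup.zsmul_mem H (hmem j) m, ?_⟩
  have key : dist (t • u) ((m : ℤ) • b) ≤ dist (t • u) ((t / r) • b) + dist ((t/r) • b) (m • b) :=
    dist_triangle _ _ _
  have e1 : dist (t • u) ((t / r) • b) ≤ ε / 2 := by
    have : (t / r) • b = t • (r⁻¹ • b) := by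
      rw [smul_smul]; ring_nf
    rw [this, dist_eq_norm, ← smul_sub, norm_smul]
    have : ‖u - r⁻¹ • b‖ < ε / (2 * (|t| + 1)) := by
      rw [← dist_eq_norm, dist_comm]; exact hj2
    calc ‖t‖ * ‖u - r⁻¹ • b‖ ≤ (|t| + 1) * (ε / (2 * (|t| + 1))) := by
          apply mul_le_mul (by rw [Real.norm_eq_abs]; linarith) this.le
            (norm_nonneg _) (by positivity)
      _ = ε / 2 := by field_simp
  have e2 : dist ((t/r) • b) ((m : ℤ) • b) < ε / 2 := by
    rw [← Int.cast_smul_eq_zsmul ℝ, dist_eq_norm, ← sub_smul, norm_smul]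
    have h3 : |t / r - (m:ℝ)| ≤ 1 := by
      rw [hm, abs_sub_comm]
      have := Int.sub_one_lt_floor (t / r)
      have := Int.floor_le (t / r)
      rw [abs_le]; constructor <;> linarith
    calc ‖t / r - (m:ℝ)‖ * ‖b‖ ≤ 1 * ‖b‖ := by
          apply mul_le_mul_of_nonneg_right _ (norm_nonneg _)
          rwa [Real.norm_eq_abs]
      _ = r := by rw [one_mul]
      _ < ε / 2 := hj1
  calc dist (t • u) ((m:ℤ) • b) ≤ _ + _ := key
    _ < ε / 2 + ε / 2 := by exact add_lt_add_of_le_of_lt e1 e2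
    _ = ε := by ring

theorem dense_of_dense_image_functional
    (d : ℕ) : ∀ (E : Type) (_ : NormedAddCommGroup E), ∀ (_ : NormedSpace ℝ E),
    ∀ (_ : FiniteDimensional ℝ E), finrank ℝ E = d →
    ∀ (H : AddSubgroup E), (∀ f : E →ₗ[ℝ] ℝ, f ≠ 0 → Dense (f '' (H : Set E))) →
    Dense (H : Set E) := by
  induction d using Nat.strong_induction_on with
  | _ d ih =>
  intro E _ _ _ hrank H hd
  rcases Nat.eq_zero_or_pos d with hd0 | hdpos
  · -- dimension 0
    subst hd0
    have : Subsingleton E := finrank_zero_iff.mp hrank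
    intro x
    have : x = 0 := Subsingleton.elim x 0
    rw [this]
    exact subset_closure (H.zero_mem)
  · have hnt : Nontrivial E := by
      apply Module.nontrivial_of_finrank_pos (R := ℝ)
      omega
    by_cases hdisc : ∃ ε > 0, ∀ h ∈ H, ‖h‖ < ε → h = 0
    · -- discrete case
      obtain ⟨ε, hε, hεH⟩ := hdisc
      by_cases hspan : Submodule.span ℝ (H : Set E) = ⊤
      · -- H is a full lattice: use ZLattice theory
        set L : Submodule ℤ E := AddSubgroup.toIntSubmodule H with hL
        have hLcoe : (L : Set E) = (H : Set E) := rfl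
        have hdiscL : DiscreteTopology L := by
          apply discreteTopology_iff_isOpen_singleton_zero.mpr
          rw [isOpen_induced_iff]
          refine ⟨Metric.ball 0 ε, Metric.isOpen_ball, ?_⟩
          ext ⟨z, hz⟩
          simp only [Set.mem_preimage, Metric.mem_ball, dist_zero_right, Set.mem_singleton_iff]
          constructor
          · intro hlt
            exact Subtype.ext (hεH z hz hlt)
          · intro h0
            have hz0 : z = 0 := congrArg Subtype.val h0
            rw [hz0]
            simpa using hε
        have hZL : IsZLattice ℝ L := ⟨by rw [hLcoe]; exact hspan⟩
        have hfree : Module.Free ℤ L := ZLattice.module_free ℝ L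
        have hfin : Module.Finite ℤ L := ZLattice.module_finite ℝ L
        set b := Module.Free.chooseBasis ℤ L with hb
        set bE := b.ofZLatticeBasis ℝ L with hbE
        have hne : Nonempty (Module.Free.ChooseBasisIndex ℤ ↥L) := bE.index_nonempty
        obtain ⟨i0⟩ := hne
        set f : E →ₗ[ℝ] ℝ := bE.coord i0 with hf
        have hf0 : f ≠ 0 := by
          intro hc
          have := LinearMap.congr_fun hc (bE i0)
          rw [hf, LinearMap.zero_apply] at this
          rw [Basis.coord_apply, Basis.repr_self] at this
          simp at this
        have himg : f '' (H : Set E) ⊆ Set.range ((↑) : ℤ → ℝ) := by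
          rintro - ⟨a, ha, rfl⟩
          refine ⟨b.repr ⟨a, ha⟩ i0, ?_⟩
          rw [hf, Basis.coord_apply]
          rw [hbE]
          exact (b.ofZLatticeBasis_repr_apply ℝ L ⟨a, ha⟩ i0).symm
        have : ¬ Dense (f '' (H : Set E)) := by
          intro hdense
          have h12 : (1/2 : ℝ) ∈ closure (f '' (H : Set E)) := hdense _
          have hcl : closure (f '' (H : Set E)) ⊆ Set.range ((↑) : ℤ → ℝ) :=
            closure_minimal himg Int.isClosedEmbedding_coe_real.isClosed_range
          obtain ⟨z, hz⟩ := hcl h12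
          have : (2 : ℝ) * z = 1 := by rw [hz]; norm_num
          have h2z : ((2 * z : ℤ) : ℝ) = ((1 : ℤ) : ℝ) := by push_cast; linarith
          have := Int.cast_injective h2z
          omega
        exact absurd (hd f hf0) this
      · -- H does not span: a functional kills it
        obtain ⟨f, hf0, hfmap⟩ :=
          Submodule.exists_dual_map_eq_bot_of_lt_top (lt_top_iff_ne_top.mpr hspan)
            inferInstance
        have himg : f '' (H : Set E) ⊆ {0} := by
          rintro - ⟨a, ha, rfl⟩
          have : f a ∈ Submodule.map f (Submodule.span ℝ (H : Set E)) :=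
            Submodule.mem_map_of_mem (Submodule.subset_span ha)
          rw [hfmap] at this
          simpa using this
        have : ¬ Dense (f '' (H : Set E)) := by
          intro hdense
          have h12 : (1/2 : ℝ) ∈ closure (f '' (H : Set E)) := hdense _
          have hcl : closure (f '' (H : Set E)) ⊆ {0} :=
            closure_minimal himg isClosed_singleton
          have := hcl h12
          norm_num at this
        exact absurd (hd f hf0) this
    · -- non-discrete case: H contains a line
      push_neg at hdisc
      have hseq : ∀ j : ℕ, ∃ h ∈ H, ‖h‖ < 1 / (j + 1) ∧ h ≠ 0 := by
        intro j
        exact hdisc (1 / (j + 1)) (by positivity)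
      choose h hmem hsmall hne using hseq
      have hpos : ∀ j, 0 < ‖h j‖ := fun j => norm_pos_iff.mpr (hne j)
      have hsmall' : Tendsto (fun j => ‖h j‖) atTop (nhds 0) := by
        apply squeeze_zero (fun j => (norm_nonneg _)) (fun j => (hsmall j).le)
        exact tendsto_one_div_add_atTop_nhds_zero_nat
      -- direction sequence in the sphere
      have hsph : ∀ j, ‖h j‖⁻¹ • h j ∈ Metric.sphere (0:E) 1 := by
        intro j
        simp [norm_smul, abs_of_pos (inv_pos.mpr (hpos j)),
          inv_mul_cancel₀ (hpos j).ne']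
      obtain ⟨u, humem, φ, hφmono, hφtend⟩ :=
        (isCompact_sphere (0:E) 1).tendsto_subseq hsph
      have hu1 : ‖u‖ = 1 := by simpa using humem
      have hu0 : u ≠ 0 := by intro h0; rw [h0] at hu1; simp at hu1
      -- the line through u is in the closure of H
      have hline : ∀ t : ℝ, t • u ∈ closure (H : Set E) := by
        intro t
        exact line_mem_closure H (fun j => hmem (φ j)) (fun j => hpos (φ j))
          (hsmall'.comp hφmono.tendsto_atTop) hφtend t
      -- functional g with g u = 1
      obtain ⟨g, hgnorm, hgu⟩ := exists_dual_vector ℝ u (norm_ne_zero_iff.mpr hu0)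
      rw [hu1] at hgu
      set gl : E →ₗ[ℝ] ℝ := g.toLinearMap with hgl
      have hglu : gl u = 1 := hgu
      set E' : Submodule ℝ E := LinearMap.ker gl with hE'
      -- the projection onto E'
      set P : E →ₗ[ℝ] E := LinearMap.id - gl.smulRight u with hP
      have hPapp : ∀ x, P x = x - gl x • u := fun x => rfl
      have hPmem : ∀ x, P x ∈ E' := by
        intro x
        simp only [hE', LinearMap.mem_ker, hPapp, map_sub, map_smul, smul_eq_mul, hglu, mul_one,
          sub_self]
      set π : E →ₗ[ℝ] E' := P.codRestrict E' hPmem with hπ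
      have hπfix : ∀ y : E', π (y : E) = y := by
        intro y
        ext
        have : gl (y : E) = 0 := y.2
        simp [hπ, LinearMap.codRestrict_apply, hPapp, this]
      -- dimension count
      have hrange : LinearMap.range gl = ⊤ := by
        rw [LinearMap.range_eq_top]
        intro c
        exact ⟨c • u, by simp [map_smul, hglu]⟩
      have hker_rank : finrank ℝ E' = d - 1 := by
        have := LinearMap.finrank_range_add_finrank_ker gl
        rw [hrange, finrank_top, finrank_self, hrank] at this
        rw [hE']
        omega
      -- the image subgroup and its closure
      set Hi : AddSubgroup E' := AddSubgroup.map π.toAddMonoidHom H with hHi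
      set H' : AddSubgroup E' := Hi.topologicalClosure with hH'
      have hclsub : ∀ z : E', z ∈ H' → (z : E) ∈ closure (H : Set E) := by
        intro z hz
        have hsub : (Subtype.val '' (Hi : Set E')) ⊆ closure (H : Set E) := by
          rintro - ⟨w, ⟨a, ha, rfl⟩, rfl⟩
          have h1 : (π a : E) = a + (-(gl a)) • u := by
            simp [hπ, LinearMap.codRestrict_apply, hPapp, neg_smul, sub_eq_add_neg]
          have h0 : ((π.toAddMonoidHom a : E')) = π a := rfl
          rw [h0, h1]
          exact H.topologicalClosure.add_mem (subset_closure ha) (hline _)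
        have : (z : E) ∈ closure (Subtype.val '' (Hi : Set E')) :=
          map_mem_closure continuous_subtype_val hz (Set.mapsTo_image _ _)
        exact (closure_minimal hsub isClosed_closure) this
      -- density hypothesis for the quotient subgroup
      have hd' : ∀ f' : E' →ₗ[ℝ] ℝ, f' ≠ 0 → Dense (f' '' (H' : Set E')) := by
        intro f' hf'
        obtain ⟨y, hy⟩ : ∃ y : E', f' y ≠ 0 := by
          by_contra hc
          push_neg at hc
          exact hf' (LinearMap.ext fun y => by simp [hc y])
        have hF : f'.comp π ≠ 0 := by
          intro hc
          apply hy
          have := LinearMap.congr_fun hc (y : E)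
          rwa [LinearMap.comp_apply, hπfix, LinearMap.zero_apply] at this
        have := hd (f'.comp π) hF
        apply this.mono
        rintro - ⟨a, ha, rfl⟩
        exact ⟨π a, AddSubgroup.le_topologicalClosure Hi ⟨a, ha, rfl⟩, rfl⟩
      -- apply induction hypothesis
      have hdense' : Dense (H' : Set E') :=
        ih (d - 1) (by omega) E' inferInstance inferInstance inferInstance hker_rank H' hd'
      -- conclude
      intro x
      have h1 : P x ∈ closure (H : Set E) := by
        have := hdense' (π x)
        have h2 : (π x : E') ∈ closure (H' : Set E') := this
        have h3 : ((π x : E') : E) ∈ closure (H : Set E) := by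
          have : (π x : E') ∈ H' := by
            rw [hH']
            exact (AddSubgroup.isClosed_topologicalClosure Hi).closure_subset_iff.mpr
              (fun z hz => hz) h2
          exact hclsub _ this
        simpa [hπ, LinearMap.codRestrict_apply] using h3
      have h2 : x = P x + gl x • u := by rw [hPapp]; abel
      rw [h2]
      exact H.topologicalClosure.add_mem h1 (hline _)

theorem kronecker_dense {n : ℕ} (α : Fin n → ℝ)
    (hindep : ∀ (ν₀ : ℤ) (ν : Fin n → ℤ),
      (ν₀ : ℝ) + ∑ i, (ν i : ℝ) * α i = 0 → ν₀ = 0 ∧ ν = 0) :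
    Dense {x : Fin n → ℝ | ∃ (k : ℤ) (m : Fin n → ℤ),
      x = k • α + fun i => ((m i : ℝ))} := by
  classical
  set S : Set (Fin n → ℝ) := insert α (Set.range (fun i => Pi.single i (1:ℝ))) with hS
  set G : AddSubgroup (Fin n → ℝ) := AddSubgroup.closure S with hG
  -- every functional is determined by its values on the standard basis
  have hfx : ∀ (f : (Fin n → ℝ) →ₗ[ℝ] ℝ) (x : Fin n → ℝ),
      f x = ∑ i, x i * f (Pi.single i 1) := by
    intro f x
    have hx : x = ∑ i, x i • (Pi.single i (1:ℝ) : Fin n → ℝ) := by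
      funext j
      simp [Pi.single_apply, Finset.sum_apply]
    conv_lhs => rw [hx]
    rw [map_sum]
    simp [map_smul, smul_eq_mul]
  have hdense : Dense (G : Set (Fin n → ℝ)) := by
    apply dense_of_dense_image_functional (finrank ℝ (Fin n → ℝ)) _ inferInstance inferInstance inferInstance rfl
    intro f hf
    have hset : f '' (G : Set (Fin n → ℝ)) = ((AddSubgroup.map f.toAddMonoidHom G : AddSubgroup ℝ) : Set ℝ) := by
      ext y; simp [AddSubgroup.mem_map]
    rw [hset]
    rcases AddSubgroup.dense_or_cyclic (AddSubgroup.map f.toAddMonoidHom G) with hD | ⟨a, ha⟩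
    · exact hD
    · exfalso
      have hmemα : f α ∈ AddSubgroup.map f.toAddMonoidHom G :=
        ⟨α, AddSubgroup.subset_closure (Set.mem_insert _ _), rfl⟩
      have hmeme : ∀ i, f (Pi.single i 1) ∈ AddSubgroup.map f.toAddMonoidHom G :=
        fun i => ⟨Pi.single i 1,
          AddSubgroup.subset_closure (Set.mem_insert_of_mem _ ⟨i, rfl⟩), rfl⟩
      rw [ha] at hmemα hmeme
      obtain ⟨k0, hk0⟩ := AddSubgroup.mem_closure_singleton.mp hmemα
      have hki : ∀ i, ∃ k : ℤ, k • a = f (Pi.single i 1) := fun i =>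
        AddSubgroup.mem_closure_singleton.mp (hmeme i)
      choose k hk using hki
      -- derive the rational relation
      have h1 : f α = (k0 : ℝ) * a := by rw [← hk0]; simp [zsmul_eq_mul]
      have h2 : f α = ∑ i, α i * ((k i : ℝ) * a) := by
        rw [hfx f α]
        refine Finset.sum_congr rfl fun i _ => ?_
        rw [← hk i]; simp [zsmul_eq_mul]
      have hrel : (-(k0 : ℝ)) * a + (∑ i, (k i : ℝ) * α i) * a = 0 := by
        have h3 : (∑ i, (k i : ℝ) * α i) * a = ∑ i, α i * ((k i : ℝ) * a) := by
          rw [Finset.sum_mul]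
          refine Finset.sum_congr rfl fun i _ => ?_
          ring
        rw [h3, ← h2, h1]
        ring
      have hsingle0 : ∀ i, f (Pi.single i 1) = 0 := by
        rcases eq_or_ne a 0 with rfl | ha0
        · intro i; rw [← hk i]; simp
        · have hfac : ((-(k0 : ℝ)) + ∑ i, (k i : ℝ) * α i) * a = 0 := by
            rw [add_mul]; linarith [hrel]
          have hz : (-(k0 : ℝ)) + ∑ i, (k i : ℝ) * α i = 0 :=
            (mul_eq_zero.mp hfac).resolve_right ha0
          have hres := hindep (-k0) k (by push_cast; linarith [hz])
          intro i
          have hki0 : k i = 0 := congrFun hres.2 i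
          rw [← hk i, hki0]
          simp
      apply hf
      apply LinearMap.ext
      intro x
      rw [LinearMap.zero_apply, hfx f x]
      simp [hsingle0]
  refine Dense.mono ?_ hdense
  intro x hx
  induction hx using AddSubgroup.closure_induction with
  | mem y hy =>
      rcases hy with rfl | ⟨i, rfl⟩
      · exact ⟨1, 0, by funext j; simp⟩
      · refine ⟨0, Pi.single i 1, ?_⟩
        funext j
        rcases eq_or_ne j i with rfl | hji
        · simp
        · simp [Pi.single_apply, hji]
  | zero => exact ⟨0, 0, by funext j; simp⟩
  | add x y hx hy ihx ihy =>
      obtain ⟨k1, m1, rfl⟩ := ihx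
      obtain ⟨k2, m2, rfl⟩ := ihy
      refine ⟨k1 + k2, m1 + m2, ?_⟩
      funext j
      push_cast
      simp [add_smul]
      ring
  | neg x hx ihx =>
      obtain ⟨k1, m1, rfl⟩ := ihx
      refine ⟨-k1, -m1, ?_⟩
      funext j
      push_cast
      simp [neg_smul]
      ring

lemma kronecker_return {n : ℕ} (α : Fin n → ℝ) (ε : ℝ) (hε : 0 < ε) (M : ℕ) :
    ∃ k : ℕ, M ≤ k ∧ 1 ≤ k ∧ ∃ m : Fin n → ℤ, ∀ i, |(k : ℝ) * α i - m i| < ε := by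
  set u : ℕ → (Fin n → ℝ) := fun k => fun i => Int.fract (k * α i) with hu
  have humem : ∀ k, u k ∈ Set.Icc (0 : Fin n → ℝ) 1 := by
    intro k
    rw [Set.mem_Icc]
    constructor <;> intro i
    · exact Int.fract_nonneg _
    · exact (Int.fract_lt_one _).le
  obtain ⟨z, -, φ, hφ, htend⟩ := (isCompact_Icc (a := (0 : Fin n → ℝ)) (b := 1)).tendsto_subseq humem
  rw [Metric.tendsto_atTop] at htend
  obtain ⟨J, hJ⟩ := htend (ε/2) (by positivity)
  set j2 := J + φ J + M + 1 with hj2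
  have hj2J : J ≤ j2 := by omega
  have hφj2 : φ J + M + 1 ≤ φ j2 := le_trans (by omega) (hφ.le_apply)
  refine ⟨φ j2 - φ J, by omega, by omega, fun i => ⌊(φ j2 : ℝ) * α i⌋ - ⌊(φ J : ℝ) * α i⌋, ?_⟩
  intro i
  have hcast : ((φ j2 - φ J : ℕ) : ℝ) = (φ j2 : ℝ) - (φ J : ℝ) := by
    push_cast [Nat.cast_sub (by omega : φ J ≤ φ j2)]
    ring
  have hexp : ((φ j2 - φ J : ℕ) : ℝ) * α i - ((⌊(φ j2 : ℝ) * α i⌋ : ℤ) - ⌊(φ J : ℝ) * α i⌋ : ℤ)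
      = Int.fract ((φ j2 : ℝ) * α i) - Int.fract ((φ J : ℝ) * α i) := by
    rw [hcast, Int.fract, Int.fract]
    push_cast
    ring
  rw [hexp]
  have h1 : dist (u (φ j2) i) (z i) ≤ dist (u (φ j2)) z := dist_le_pi_dist _ _ _
  have h2 : dist (u (φ J) i) (z i) ≤ dist (u (φ J)) z := dist_le_pi_dist _ _ _
  have d1 := hJ j2 hj2J
  have d2 := hJ J le_rfl
  have : dist (u (φ j2) i) (u (φ J) i) < ε :=
    calc dist (u (φ j2) i) (u (φ J) i) ≤ dist (u (φ j2) i) (z i) + dist (z i) (u (φ J) i) :=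
          dist_triangle _ _ _
      _ < ε := by
          rw [dist_comm (z i)]
          have := lt_of_le_of_lt h1 d1
          have := lt_of_le_of_lt h2 d2
          linarith
  rw [Real.dist_eq] at this
  simpa [hu] using this

/-- Kronecker's theorem: if `{1, α₁, …, αₙ}` is linearly independent over ℚ,
then the set of cluster points of the sequence
`((kα₁ − ⌊kα₁⌋, …, kαₙ − ⌊kαₙ⌋))_{k ∈ ℕ}` is the full cube `[0,1]ⁿ`. -/
theorem kronecker_cluster_points
    {n : ℕ} (α : Fin n → ℝ)
    (hindep : ∀ (ν₀ : ℤ) (ν : Fin n → ℤ),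
      (ν₀ : ℝ) + ∑ i, (ν i : ℝ) * α i = 0 → ν₀ = 0 ∧ ν = 0) :
    {x : Fin n → ℝ | MapClusterPt x Filter.atTop
        (fun k : ℕ => fun i => Int.fract (((k : ℝ) + 1) * α i))}
      = Set.Icc (0 : Fin n → ℝ) 1 := by
  set u : ℕ → (Fin n → ℝ) := fun k => fun i => Int.fract (((k : ℝ) + 1) * α i) with hu
  apply Set.eq_of_subset_of_subset
  · -- cluster points are in the cube
    intro x hx
    have h1 : x ∈ closure (Set.range u) := by
      rw [mem_closure_iff_clusterPt]
      exact hx.clusterPt.mono (le_principal_iff.mpr range_mem_map)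
    refine closure_minimal ?_ isClosed_Icc h1
    rintro - ⟨k, rfl⟩
    rw [Set.mem_Icc]
    constructor <;> intro i
    · exact Int.fract_nonneg _
    · exact (Int.fract_lt_one _).le
  · -- every point of the cube is a cluster point
    intro x hx
    rw [Set.mem_Icc] at hx
    rw [Set.mem_setOf_eq, mapClusterPt_iff_frequently]
    intro s hs
    obtain ⟨ε, hε, hball⟩ := Metric.mem_nhds_iff.mp hs
    rw [frequently_atTop]
    intro N
    -- setup: shrink the target into the open cube
    set δ : ℝ := min ε 1 / 4 with hδ
    have hδ0 : 0 < δ := by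
      rw [hδ]
      have : (0:ℝ) < min ε 1 := lt_min hε one_pos
      linarith
    have hδε : 4 * δ ≤ ε := by
      rw [hδ]
      have : min ε 1 ≤ ε := min_le_left _ _
      linarith
    have hδ1 : 4 * δ ≤ 1 := by
      rw [hδ]
      have : min ε 1 ≤ 1 := min_le_right _ _
      linarith
    set y : Fin n → ℝ := fun i => (1 - 2*δ) * x i + δ with hy
    have hyx : ∀ i, |y i - x i| ≤ δ := by
      intro i
      have h0 : (0:ℝ) ≤ x i := by simpa using hx.1 i
      have h1 : x i ≤ 1 := by simpa using hx.2 i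
      simp only [hy]
      rw [abs_le]
      constructor <;> nlinarith
    have hybd : ∀ i, δ ≤ y i ∧ y i ≤ 1 - δ := by
      intro i
      have h0 : (0:ℝ) ≤ x i := by simpa using hx.1 i
      have h1 : x i ≤ 1 := by simpa using hx.2 i
      simp only [hy]
      constructor <;> nlinarith
    -- density of ℤα + ℤⁿ
    have hdense := kronecker_dense α hindep
    have hyc : y ∈ closure {x : Fin n → ℝ | ∃ (k : ℤ) (m : Fin n → ℤ),
        x = k • α + fun i => ((m i : ℝ))} := hdense y
    rw [Metric.mem_closure_iff] at hyc
    obtain ⟨p, ⟨j, m1, rfl⟩, hp⟩ := hyc (δ/2) (by positivity)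
    have hpcoord : ∀ i, |(j : ℝ) * α i + m1 i - y i| < δ/2 := by
      intro i
      have := lt_of_le_of_lt (dist_le_pi_dist (y) (j • α + fun i => ((m1 i : ℝ))) i) hp
      rw [Real.dist_eq] at this
      rw [← abs_neg]
      have hcoord : (j • α + fun i => ((m1 i : ℝ))) i = (j:ℝ) * α i + m1 i := by
        simp [zsmul_eq_mul]
      rw [hcoord] at this
      rw [neg_sub]
      exact this
    -- recurrence
    obtain ⟨k0, hk0M, hk01, m0, hm0⟩ := kronecker_return α (δ/2) (by positivity) (N + 1 + j.natAbs)
    -- the combined integer K = j + k0 ≥ N + 1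
    set K : ℤ := j + k0 with hK
    have hKN : (N : ℤ) + 1 ≤ K := by
      rw [hK]
      have : (j.natAbs : ℤ) ≥ -j := by omega
      omega
    set k : ℕ := K.toNat - 1 with hk
    have hkN : N ≤ k := by omega
    have hkK : ((k : ℝ) + 1) = (K : ℝ) := by
      have h1 : (k : ℤ) + 1 = K := by omega
      push_cast [← h1]
      ring
    set M : Fin n → ℤ := fun i => m0 i - m1 i with hM
    have hcoord : ∀ i, |(K : ℝ) * α i - M i - y i| < δ := by
      intro i
      have e1 := hpcoord i
      have e2 := hm0 i
      have hexp : (K : ℝ) * α i - M i - y i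
          = ((j : ℝ) * α i + m1 i - y i) + ((k0 : ℝ) * α i - m0 i) := by
        rw [hK, hM]
        push_cast
        ring
      rw [hexp]
      calc |((j : ℝ) * α i + m1 i - y i) + ((k0 : ℝ) * α i - m0 i)|
          ≤ |(j : ℝ) * α i + m1 i - y i| + |(k0 : ℝ) * α i - m0 i| := abs_add_le _ _
        _ < δ/2 + δ/2 := add_lt_add e1 e2
        _ = δ := by ring
    -- the fractional parts
    have hfract : ∀ i, Int.fract ((K : ℝ) * α i) = (K : ℝ) * α i - M i := by
      intro i
      have h1 := hcoord i
      rw [abs_lt] at h1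
      have hb := hybd i
      have hfloor : ⌊(K : ℝ) * α i⌋ = M i := by
        rw [Int.floor_eq_iff]
        constructor <;> push_cast <;> nlinarith [hb.1, hb.2, h1.1, h1.2]
      rw [Int.fract, hfloor]
    refine ⟨k, hkN, hball ?_⟩
    rw [Metric.mem_ball]
    rw [dist_pi_lt_iff hε]
    intro i
    have : u k i = (K : ℝ) * α i - M i := by
      rw [hu]
      simp only
      rw [hkK, hfract i]
    rw [Real.dist_eq, this]
    have h1 := hcoord i
    have h2 := hyx i
    rw [abs_lt] at h1
    rw [abs_le] at h2
    rw [abs_lt]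
    constructor <;> nlinarith
end

section
/- Let C be a subset of a strictly convex Banach space E, and let T₁, T₂, …, T_ℓ be nonexpansive mappings from C into E that have a common fixed point. Let λ₁, λ₂, …, λ_ℓ ∈ (0,1] with λ₁ + λ₂ + ⋯ + λ_ℓ = 1, and define S : C → E by Sx = λ₁T₁x + λ₂T₂x + ⋯ + λ_ℓT_ℓx. Then S is nonexpansive and F(S) = F(T₁) ∩ F(T₂) ∩ ⋯ ∩ F(T_ℓ). -/
/-- Bruck's lemma: in a strictly convex Banach space, a convex combination
`S = λ₁T₁ + ⋯ + λ_ℓT_ℓ` (with `λ_j ∈ (0,1]`, `Σλ_j = 1`) of nonexpansive mappings from `C`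
into `E` having a common fixed point is nonexpansive and `F(S) = F(T₁) ∩ ⋯ ∩ F(T_ℓ)`. -/
theorem bruck_convex_combination
    {E : Type*} [NormedAddCommGroup E] [NormedSpace ℝ E] [CompleteSpace E]
    [StrictConvexSpace ℝ E]
    (C : Set E) (ℓ : ℕ) (T : Fin ℓ → E → E)
    (hne : ∀ j, ∀ x ∈ C, ∀ y ∈ C, ‖T j x - T j y‖ ≤ ‖x - y‖)
    (hcfp : ∃ z ∈ C, ∀ j, T j z = z)
    (lam : Fin ℓ → ℝ) (hlam : ∀ j, lam j ∈ Set.Ioc (0 : ℝ) 1)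
    (hsum : ∑ j, lam j = 1)
    (S : E → E) (hS : ∀ x ∈ C, S x = ∑ j, lam j • T j x) :
    (∀ x ∈ C, ∀ y ∈ C, ‖S x - S y‖ ≤ ‖x - y‖) ∧
      {x ∈ C | S x = x} = ⋂ j, {x ∈ C | T j x = x} := by
  obtain ⟨z, hzC, hz⟩ := hcfp
  have hlpos : ∀ j, 0 < lam j := fun j => (hlam j).1
  have hnon : ∀ x ∈ C, ∀ y ∈ C, ‖S x - S y‖ ≤ ‖x - y‖ := by
    intro x hx y hy
    rw [hS x hx, hS y hy, ← Finset.sum_sub_distrib]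
    calc ‖∑ j, (lam j • T j x - lam j • T j y)‖
        ≤ ∑ j, ‖lam j • T j x - lam j • T j y‖ := norm_sum_le _ _
      _ ≤ ∑ j, lam j * ‖x - y‖ := by
          apply Finset.sum_le_sum; intro j _
          rw [← smul_sub, norm_smul, Real.norm_eq_abs, abs_of_pos (hlpos j)]
          exact mul_le_mul_of_nonneg_left (hne j x hx y hy) (hlpos j).le
      _ = ‖x - y‖ := by rw [← Finset.sum_mul, hsum, one_mul]
  have hlne : 0 < ℓ := by
    by_contra h
    interval_cases ℓ
    simp at hsum
  refine ⟨hnon, ?_⟩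
  ext x
  simp only [Set.mem_setOf_eq, Set.mem_iInter]
  constructor
  · rintro ⟨hxC, hSx⟩
    intro j
    refine ⟨hxC, ?_⟩
    by_cases hxz : x = z
    · rw [hxz, hz j]
    set v := x - z with hv
    have hvne : v ≠ 0 := sub_ne_zero.mpr hxz
    set u : Fin ℓ → E := fun j => T j x - z with hu
    have hub : ∀ i, ‖u i‖ ≤ ‖v‖ := by
      intro i
      have := hne i x hxC z hzC
      rwa [hz i] at this
    have hsumu : ∑ i, lam i • u i = v := by
      have : ∑ i, lam i • u i = (∑ i, lam i • T i x) - (∑ i, lam i) • z := by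
        simp [u, smul_sub, Finset.sum_sub_distrib, Finset.sum_smul]
      rw [this, hsum, one_smul, ← hS x hxC, hSx]
    -- each term has norm lam i * ‖v‖
    have hchain : ‖v‖ ≤ ∑ i, lam i * ‖u i‖ := by
      calc ‖v‖ = ‖∑ i, lam i • u i‖ := by rw [hsumu]
        _ ≤ ∑ i, ‖lam i • u i‖ := norm_sum_le _ _
        _ = ∑ i, lam i * ‖u i‖ := by
            apply Finset.sum_congr rfl; intro i _
            rw [norm_smul, Real.norm_eq_abs, abs_of_pos (hlpos i)]
    have hupper : ∑ i, lam i * ‖u i‖ ≤ ‖v‖ := by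
      calc ∑ i, lam i * ‖u i‖ ≤ ∑ i, lam i * ‖v‖ :=
            Finset.sum_le_sum fun i _ => mul_le_mul_of_nonneg_left (hub i) (hlpos i).le
        _ = ‖v‖ := by rw [← Finset.sum_mul, hsum, one_mul]
    have heq : ∑ i, lam i * ‖u i‖ = ‖v‖ := le_antisymm hupper hchain
    -- each ‖u i‖ = ‖v‖
    have hnormeq : ∀ i, ‖u i‖ = ‖v‖ := by
      intro i
      by_contra hne'
      have hlt : lam i * ‖u i‖ < lam i * ‖v‖ :=
        mul_lt_mul_of_pos_left (lt_of_le_of_ne (hub i) hne') (hlpos i)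
      have : ∑ k, lam k * ‖u k‖ < ∑ k, lam k * ‖v‖ :=
        Finset.sum_lt_sum (fun k _ => mul_le_mul_of_nonneg_left (hub k) (hlpos k).le)
          ⟨i, Finset.mem_univ i, hlt⟩
      rw [← Finset.sum_mul, hsum, one_mul, heq] at this
      exact lt_irrefl _ this
    -- norm sum equality: ‖∑ lam i • u i‖ = ∑ ‖lam i • u i‖
    have hnorms : ∀ i, ‖lam i • u i‖ = lam i * ‖v‖ := by
      intro i
      rw [norm_smul, Real.norm_eq_abs, abs_of_pos (hlpos i), hnormeq i]
    -- split off index j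
    set w : E := ∑ i ∈ Finset.univ.erase j, lam i • u i with hw
    have hsplit : lam j • u j + w = v := by
      rw [hw, ← hsumu]
      exact Finset.add_sum_erase _ (fun i => lam i • u i) (Finset.mem_univ j)
    have hwle : ‖w‖ ≤ ∑ i ∈ Finset.univ.erase j, lam i * ‖v‖ := by
      refine le_trans (norm_sum_le _ _) ?_
      apply Finset.sum_le_sum; intro i _; rw [hnorms i]
    have hsum_erase : lam j + ∑ i ∈ Finset.univ.erase j, lam i = 1 := by
      rw [Finset.add_sum_erase _ _ (Finset.mem_univ j), hsum]
    have htri : ‖lam j • u j‖ + ‖w‖ ≤ ‖v‖ := by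
      calc ‖lam j • u j‖ + ‖w‖ ≤ lam j * ‖v‖ + ∑ i ∈ Finset.univ.erase j, lam i * ‖v‖ := by
            rw [hnorms j]; exact add_le_add le_rfl hwle
        _ = (lam j + ∑ i ∈ Finset.univ.erase j, lam i) * ‖v‖ := by
            rw [add_mul, Finset.sum_mul]
        _ = ‖v‖ := by rw [hsum_erase, one_mul]
    have hray : SameRay ℝ (lam j • u j) w := by
      rw [sameRay_iff_norm_add]
      refine le_antisymm (norm_add_le _ _) ?_
      calc ‖lam j • u j‖ + ‖w‖ ≤ ‖v‖ := htri
        _ = ‖lam j • u j + w‖ := by rw [hsplit]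
    have hrayv : SameRay ℝ (lam j • u j) v := by
      rw [← hsplit]
      exact SameRay.add_right SameRay.rfl hray
    have hrayu : SameRay ℝ (u j) v := by
      have : SameRay ℝ ((lam j)⁻¹ • (lam j • u j)) v :=
        hrayv.nonneg_smul_left (inv_nonneg.mpr (hlpos j).le)
      rwa [inv_smul_smul₀ (hlpos j).ne'] at this
    have huv : u j = v := hrayu.eq_of_norm_eq (hnormeq j)
    have : T j x - z = x - z := huv
    exact sub_left_injective this
  · intro h
    have hxC : x ∈ C := (h ⟨0, hlne⟩).1
    refine ⟨hxC, ?_⟩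
    rw [hS x hxC]
    have : ∀ i, T i x = x := fun i => (h i).2
    simp only [this]
    rw [← Finset.sum_smul, hsum, one_smul]
end

section
/- Let E be a Banach space, let τ be a Hausdorff topology on E, and let {T(p) : p ∈ ℝ₊ⁿ} be an n-parameter τ-continuous semigroup of mappings on a subset C of E. Let p₁, p₂, …, pₙ ∈ ℝ₊ⁿ be linearly independent in the usual sense, let α₁, α₂, …, αₙ ∈ ℝ be such that {1, α₁, α₂, …, αₙ} is linearly independent over ℚ, and suppose p₀ := α₁p₁ + α₂p₂ + ⋯ + αₙpₙ ∈ ℝ₊ⁿ. Then ⋂_{p ∈ ℝ₊ⁿ} F(T(p)) = F(T(p₀)) ∩ F(T(p₁)) ∩ ⋯ ∩ F(T(pₙ)). -/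
open Filter Topology Submodule

variable {n : ℕ}

private def kronG (α : Fin n → ℝ) : AddSubgroup (Fin n → ℝ) where
  carrier := {v | ∃ (k : ℤ) (z : Fin n → ℤ), v = k • α + fun j => (z j : ℝ)}
  zero_mem' := ⟨0, 0, by funext j; simp⟩
  add_mem' := by
    rintro a b ⟨k₁, z₁, rfl⟩ ⟨k₂, z₂, rfl⟩
    refine ⟨k₁ + k₂, z₁ + z₂, ?_⟩
    funext j
    simp [add_smul]
    push_cast
    ring
  neg_mem' := by
    rintro a ⟨k, z, rfl⟩
    refine ⟨-k, -z, ?_⟩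
    funext j
    simp [neg_smul]
    push_cast
    ring

set_option maxHeartbeats 2000000 in
set_option synthInstance.maxHeartbeats 1000000 in
private lemma kron_dense (α : Fin n → ℝ)
    (hα : ∀ (ν₀ : ℤ) (ν : Fin n → ℤ), (ν₀ : ℝ) + ∑ i, (ν i : ℝ) * α i = 0 → ν₀ = 0 ∧ ν = 0) :
    Dense ((kronG α : Set (Fin n → ℝ))) := by
  set H := (kronG α).topologicalClosure with hHdef
  have hHclosed : IsClosed (H : Set (Fin n → ℝ)) := (kronG α).isClosed_topologicalClosure
  -- the subspace of directions fully contained in H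
  let V : Submodule ℝ (Fin n → ℝ) :=
    { carrier := {x | ∀ t : ℝ, t • x ∈ H}
      add_mem' := fun hx hy t => by
        simpa [smul_add] using H.add_mem (hx t) (hy t)
      zero_mem' := fun t => by simpa using H.zero_mem
      smul_mem' := fun c x hx t => by simpa [smul_smul] using hx (t * c) }
  have hVsub : ∀ x ∈ V, x ∈ H := fun x hx => by simpa using hx 1
  by_cases hV : V = ⊤
  · intro v
    have hv : v ∈ V := hV ▸ Submodule.mem_top
    exact hVsub v hv
  · exfalso
    obtain ⟨W, hVW⟩ := Submodule.exists_isCompl V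
    have hWbot : W ≠ ⊥ := by
      intro h
      exact hV (codisjoint_bot.mp (h ▸ hVW.codisjoint))
    let π : (Fin n → ℝ) →ₗ[ℝ] W := W.linearProjOfIsCompl V hVW.symm
    have hπW : ∀ w : W, π (w : Fin n → ℝ) = w :=
      fun w => Submodule.linearProjOfIsCompl_apply_left hVW.symm w
    have hπV : ∀ v : V, π (v : Fin n → ℝ) = 0 :=
      fun v => Submodule.linearProjOfIsCompl_apply_right hVW.symm v
    have hdecomp : ∀ x : Fin n → ℝ, x - (π x : Fin n → ℝ) ∈ V := by
      intro x
      have hx : x ∈ V ⊔ W := by rw [hVW.sup_eq_top]; trivial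
      obtain ⟨y, hy, z, hz, rfl⟩ := Submodule.mem_sup.mp hx
      have : π (y + z) = ⟨z, hz⟩ := by
        rw [map_add, hπV ⟨y, hy⟩, hπW ⟨z, hz⟩, zero_add]
      rw [this]
      simpa using hy
    have hπH : ∀ x ∈ H, (π x : Fin n → ℝ) ∈ H := by
      intro x hx
      have : (π x : Fin n → ℝ) = x - (x - (π x : Fin n → ℝ)) := by ring
      rw [this]
      exact H.sub_mem hx (hVsub _ (hdecomp x))
    -- the lattice
    let D : Submodule ℤ W :=
      { carrier := {w | (w : Fin n → ℝ) ∈ H}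
        add_mem' := fun hx hy => H.add_mem hx hy
        zero_mem' := by simpa using H.zero_mem
        smul_mem' := fun c x hx => by
          have := AddSubgroup.zsmul_mem H hx c
          simpa using this }
    -- span of D over ℝ is all of W
    have hDspan : Submodule.span ℝ (D : Set W) = ⊤ := by
      rw [Submodule.eq_top_iff']
      intro w
      -- (w : E) = v + d with v ∈ V and d ∈ span of D
      have heH : ∀ i, (fun j => if i = j then (1:ℝ) else 0) ∈ H := by
        intro i
        refine (kronG α).le_topologicalClosure ⟨0, fun j => if i = j then 1 else 0, ?_⟩
        funext j
        by_cases h : i = j <;> simp [h]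
      have hspanH : ∀ x : Fin n → ℝ, x ∈ Submodule.span ℝ (H : Set (Fin n → ℝ)) := by
        intro x
        rw [pi_eq_sum_univ x]
        exact Submodule.sum_mem _ fun i _ =>
          Submodule.smul_mem _ _ (Submodule.subset_span (heH i))
      have hle : Submodule.span ℝ (H : Set (Fin n → ℝ)) ≤
          V ⊔ Submodule.span ℝ (W.subtype '' (D : Set W)) := by
        rw [Submodule.span_le]
        intro h hh
        have h1 : h - (π h : Fin n → ℝ) ∈ V := hdecomp h
        have h2 : (π h : Fin n → ℝ) ∈ W.subtype '' (D : Set W) :=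
          ⟨π h, hπH h hh, rfl⟩
        have hsplit : h = (h - (π h : Fin n → ℝ)) + (π h : Fin n → ℝ) := by ring
        rw [hsplit]
        exact Submodule.add_mem _ (Submodule.mem_sup_left h1)
          (Submodule.mem_sup_right (Submodule.subset_span h2))
      have hw : (w : Fin n → ℝ) ∈ V ⊔ Submodule.span ℝ (W.subtype '' (D : Set W)) :=
        hle (hspanH w)
      obtain ⟨v, hv, s, hs, hvs⟩ := Submodule.mem_sup.mp hw
      have hsW : s ∈ W := by
        have : Submodule.span ℝ (W.subtype '' (D : Set W)) ≤ W := by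
          rw [Submodule.span_le]
          rintro _ ⟨d, _, rfl⟩
          exact (d : W).2
        exact this hs
      have hvW : v ∈ W := by
        have : v = (w : Fin n → ℝ) - s := by rw [← hvs]; ring
        rw [this]
        exact W.sub_mem w.2 hsW
      have hv0 : v = 0 := by
        have : v ∈ V ⊓ W := ⟨hv, hvW⟩
        rwa [hVW.inf_eq_bot, Submodule.mem_bot] at this
      have hws : (w : Fin n → ℝ) = s := by rw [← hvs, hv0, zero_add]
      have hsmem : (w : Fin n → ℝ) ∈
          (Submodule.span ℝ (D : Set W)).map W.subtype := by
        rw [Submodule.map_span]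
        rw [hws]; exact hs
      obtain ⟨u, hu, huw⟩ := hsmem
      have : u = w := Subtype.ext huw
      rwa [← this]
    -- D is discrete
    have hWclosed : IsClosed (W : Set (Fin n → ℝ)) := Submodule.closed_of_finiteDimensional W
    have hsep : ∃ ε > 0, ∀ d : W, d ∈ D → ‖d‖ < ε → d = 0 := by
      by_contra hc
      push_neg at hc
      choose d hdD hdn hd0 using fun m : ℕ => hc (1/(m+1)) (by positivity)
      have hnorm : ∀ m, ‖(d m : Fin n → ℝ)‖ ≠ 0 := fun m => by
        simpa using norm_ne_zero_iff.mpr (hd0 m)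
      let u : ℕ → (Fin n → ℝ) := fun m => ‖(d m : Fin n → ℝ)‖⁻¹ • ((d m : W) : Fin n → ℝ)
      have huS : ∀ m, u m ∈ Metric.sphere (0 : Fin n → ℝ) 1 := by
        intro m
        simp only [u, Metric.mem_sphere, dist_zero_right, norm_smul, norm_inv, norm_norm]
        rw [inv_mul_cancel₀ (hnorm m)]
      obtain ⟨ul, hul, φ, hφ, hconv⟩ :=
        tendsto_subseq_of_bounded Metric.isBounded_sphere huS
      have hul1 : ‖ul‖ = 1 := by
        rw [Metric.isClosed_sphere.closure_eq] at hul
        simpa using hul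
      have hulW : ul ∈ W := by
        refine hWclosed.mem_of_tendsto hconv (Filter.Eventually.of_forall fun m => ?_)
        exact W.smul_mem _ (d (φ m)).2
      have hdsmall : ∀ m, ‖(d m : Fin n → ℝ)‖ < 1/(m+1) := fun m => hdn m
      have hulV : ul ∈ V := by
        intro t
        have hmem : ∀ m : ℕ, (⌊t / ‖(d (φ m) : Fin n → ℝ)‖⌋ • ((d (φ m) : W) : Fin n → ℝ)) ∈ H :=
          fun m => AddSubgroup.zsmul_mem H (hdD (φ m)) _
        -- rewrite each term as scalar • u
        have hrw : ∀ m : ℕ, (⌊t / ‖(d (φ m) : Fin n → ℝ)‖⌋ • ((d (φ m) : W) : Fin n → ℝ))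
            = ((⌊t / ‖(d (φ m) : Fin n → ℝ)‖⌋ : ℝ) * ‖(d (φ m) : Fin n → ℝ)‖) • u (φ m) := by
          intro m
          rw [mul_smul, ← Int.cast_smul_eq_zsmul ℝ]
          congr 1
          rw [smul_inv_smul₀ (hnorm (φ m))]
        have hsc : Filter.Tendsto
            (fun m => (⌊t / ‖(d (φ m) : Fin n → ℝ)‖⌋ : ℝ) * ‖(d (φ m) : Fin n → ℝ)‖)
            Filter.atTop (nhds t) := by
          rw [← tendsto_sub_nhds_zero_iff]
          refine squeeze_zero_norm ?_ tendsto_one_div_add_atTop_nhds_zero_nat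
          · intro m
            set s := ‖(d (φ m) : Fin n → ℝ)‖ with hs
            have hspos : 0 < s := lt_of_le_of_ne (norm_nonneg _) (Ne.symm (hnorm (φ m)))
            have h1 : |(⌊t / s⌋ : ℝ) - t / s| ≤ 1 := by
              rw [abs_sub_le_iff]
              constructor
              · linarith [Int.floor_le (t / s)]
              · linarith [Int.lt_floor_add_one (t / s)]
            have h2 : (⌊t / s⌋ : ℝ) * s - t = ((⌊t / s⌋ : ℝ) - t / s) * s := by
              field_simp
            rw [h2, norm_mul, Real.norm_eq_abs, Real.norm_eq_abs, abs_of_pos hspos]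
            calc |(⌊t / s⌋ : ℝ) - t / s| * s ≤ 1 * s := by
                  exact mul_le_mul_of_nonneg_right h1 hspos.le
              _ = s := one_mul s
              _ ≤ 1/(m+1) := by
                  refine le_trans (le_of_lt (hdsmall (φ m))) ?_
                  · 
                    apply one_div_le_one_div_of_le (by positivity)
                    have : (m : ℝ) ≤ φ m := by exact_mod_cast hφ.le_apply
                    linarith
        have hfin : Filter.Tendsto
            (fun m : ℕ => (⌊t / ‖(d (φ m) : Fin n → ℝ)‖⌋ • ((d (φ m) : W) : Fin n → ℝ)))
            Filter.atTop (nhds (t • ul)) :=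
          Filter.Tendsto.congr (fun m => (hrw m).symm) (hsc.smul hconv)
        exact hHclosed.mem_of_tendsto hfin (Filter.Eventually.of_forall hmem)
      have : ul ∈ V ⊓ W := ⟨hulV, hulW⟩
      rw [hVW.inf_eq_bot, Submodule.mem_bot] at this
      rw [this] at hul1
      simp at hul1
    obtain ⟨ε, hε, hsepε⟩ := hsep
    haveI hDdisc : DiscreteTopology D := by
      apply discreteTopology_of_isOpen_singleton_zero
      have hset : ({0} : Set D) = (Subtype.val ⁻¹' (Metric.ball (0 : W) ε)) := by
        ext dd
        simp only [Set.mem_singleton_iff, Set.mem_preimage, Metric.mem_ball, dist_zero_right]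
        constructor
        · rintro rfl; simpa using hε
        · intro hlt
          exact Subtype.ext (hsepε _ dd.2 hlt)
      rw [hset]
      exact Metric.isOpen_ball.preimage continuous_subtype_val
    haveI : IsZLattice ℝ D := ⟨hDspan⟩
    haveI := ZLattice.module_finite ℝ D
    haveI := ZLattice.module_free ℝ D
    let b := Module.Free.chooseBasis ℤ D
    let b' := b.ofZLatticeBasis ℝ D
    -- α and the standard basis vectors are in H
    have hαH : α ∈ H := (kronG α).le_topologicalClosure ⟨1, 0, by funext j; simp⟩
    have heH' : ∀ i, (fun j => if i = j then (1:ℝ) else 0) ∈ H := by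
      intro i
      refine (kronG α).le_topologicalClosure ⟨0, fun j => if i = j then 1 else 0, ?_⟩
      funext j
      by_cases h : i = j <;> simp [h]
    let aD : D := ⟨π α, hπH α hαH⟩
    let eD : Fin n → D := fun i => ⟨π (fun j => if i = j then (1:ℝ) else 0), hπH _ (heH' i)⟩
    -- the linear relation
    have hrel : ((aD : D) : W) = ∑ i, α i • ((eD i : D) : W) := by
      show π α = ∑ i, α i • π (fun j => if i = j then (1:ℝ) else 0)
      conv_lhs => rw [pi_eq_sum_univ α]
      rw [map_sum]
      simp only [map_smul]
    -- integrality of coordinates and the rational relation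
    have hz : (∀ r, b.repr aD r = 0) ∧ (∀ i r, b.repr (eD i) r = 0) := by
      have key : ∀ r, (∀ i, b.repr (eD i) r = 0) ∧ b.repr aD r = 0 := by
        intro r
        have h1 : b'.repr ((aD : W)) r = ∑ i, α i * b'.repr ((eD i : W)) r := by
          rw [hrel, map_sum, Finsupp.finset_sum_apply]
          refine Finset.sum_congr rfl fun i _ => ?_
          rw [map_smul, Finsupp.smul_apply, smul_eq_mul]
        have h2 : ((b.repr aD r : ℤ) : ℝ) = ∑ i, ((b.repr (eD i) r : ℤ) : ℝ) * α i := by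
          rw [← Module.Basis.ofZLatticeBasis_repr_apply, h1]
          refine Finset.sum_congr rfl fun i _ => ?_
          rw [← Module.Basis.ofZLatticeBasis_repr_apply, mul_comm]
        have h3 : ((-(b.repr aD r) : ℤ) : ℝ) + ∑ i, ((b.repr (eD i) r : ℤ) : ℝ) * α i = 0 := by
          push_cast
          push_cast at h2
          linarith
        obtain ⟨h4, h5⟩ := hα _ _ h3
        refine ⟨fun i => ?_, by omega⟩
        exact congrFun h5 i
      exact ⟨fun r => (key r).2, fun i r => (key r).1 i⟩
    have haD0 : π α = 0 := by
      have : aD = 0 := by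
        apply b.repr.injective
        ext r
        simp [hz.1 r]
      exact congrArg Subtype.val this
    have heD0 : ∀ i, π (fun j => if i = j then (1:ℝ) else 0) = 0 := by
      intro i
      have : eD i = 0 := by
        apply b.repr.injective
        ext r
        simp [hz.2 i r]
      exact congrArg Subtype.val this
    -- the projection kills all of G, hence all of H
    have hπcont : Continuous (fun x : Fin n → ℝ => ((π x : W) : Fin n → ℝ)) :=
      continuous_subtype_val.comp π.continuous_of_finiteDimensional
    have hfG : ∀ g ∈ kronG α, ((π g : W) : Fin n → ℝ) = 0 := by
      rintro g ⟨k, z, rfl⟩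
      rw [map_add]
      have e1 : π (k • α) = 0 := by rw [map_zsmul, haD0, smul_zero]
      have e2 : π (fun j => ((z j : ℝ))) = 0 := by
        rw [pi_eq_sum_univ (fun j => ((z j : ℝ))), map_sum]
        refine Finset.sum_eq_zero fun i _ => ?_
        rw [map_smul, heD0 i, smul_zero]
      rw [e1, e2, add_zero]
      rfl
    have hD0 : ∀ w : W, w ∈ D → w = 0 := by
      intro w hw
      have hwH : (w : Fin n → ℝ) ∈ closure ((kronG α : Set (Fin n → ℝ))) := hw
      have hmem2 : ((π ((w : Fin n → ℝ)) : W) : Fin n → ℝ) ∈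
          closure ((fun x : Fin n → ℝ => ((π x : W) : Fin n → ℝ)) '' (kronG α : Set (Fin n → ℝ))) :=
        image_closure_subset_closure_image hπcont ⟨(w : Fin n → ℝ), hwH, rfl⟩
      have himg : ((fun x : Fin n → ℝ => ((π x : W) : Fin n → ℝ)) '' (kronG α : Set (Fin n → ℝ)))
          ⊆ {0} := by
        rintro _ ⟨g, hg, rfl⟩
        exact hfG g hg
      have h0 : ((π ((w : Fin n → ℝ)) : W) : Fin n → ℝ) = 0 := by
        have := (closure_minimal himg isClosed_singleton) hmem2
        simpa using this
      rw [hπW w] at h0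
      exact Subtype.ext h0
    apply hWbot
    have htop : (⊤ : Submodule ℝ W) ≤ ⊥ := by
      rw [← hDspan]
      refine Submodule.span_le.mpr fun w hw => ?_
      simp [hD0 w hw]
    rw [Submodule.eq_bot_iff]
    intro x hx
    have hx0 : (⟨x, hx⟩ : W) = 0 := by simpa using htop (Submodule.mem_top (x := (⟨x, hx⟩ : W)))
    exact congrArg Subtype.val hx0

private lemma kron_pigeon (α : Fin n → ℝ) {ε : ℝ} (hε : 0 < ε) :
    ∃ d : ℕ, 1 ≤ d ∧ ∃ w : Fin n → ℤ, ∀ j, |(d : ℝ) * α j + w j| < ε := by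
  obtain ⟨M, hM⟩ := exists_nat_gt (1/ε)
  have hM0 : 0 < M := by
    rcases Nat.eq_zero_or_pos M with h | h
    · exfalso
      rw [h] at hM
      have : 0 < 1/ε := by positivity
      simp at hM
      linarith
    · exact h
  have hMR : (0:ℝ) < M := by exact_mod_cast hM0
  have hMε : 1/(M:ℝ) < ε := by
    rw [div_lt_iff₀ hMR]
    have h1 : 1 = (1/ε) * ε := by field_simp
    calc (1:ℝ) = (1/ε) * ε := h1
      _ < M * ε := by exact mul_lt_mul_of_pos_right hM hε
      _ = ε * M := mul_comm _ _
  let F : ℕ → (Fin n → Fin M) := fun k j =>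
    ⟨⌊Int.fract ((k : ℝ) * α j) * M⌋₊, by
      rw [Nat.floor_lt (mul_nonneg (Int.fract_nonneg _) hMR.le)]
      calc Int.fract ((k : ℝ) * α j) * M < 1 * M :=
            mul_lt_mul_of_pos_right (Int.fract_lt_one _) hMR
        _ = M := one_mul _⟩
  have key : ∀ k₁ k₂ : ℕ, k₁ < k₂ → F k₁ = F k₂ →
      ∃ d : ℕ, 1 ≤ d ∧ ∃ w : Fin n → ℤ, ∀ j, |(d : ℝ) * α j + w j| < ε := by
    intro k₁ k₂ hlt heq
    refine ⟨k₂ - k₁, by omega, fun j => ⌊(k₁:ℝ) * α j⌋ - ⌊(k₂:ℝ) * α j⌋, ?_⟩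
    intro j
    have heqj : (⌊Int.fract ((k₁ : ℝ) * α j) * M⌋₊ : ℝ) = (⌊Int.fract ((k₂ : ℝ) * α j) * M⌋₊ : ℝ) := by
      have := congrFun heq j
      have h2 : ⌊Int.fract ((k₁ : ℝ) * α j) * M⌋₊ = ⌊Int.fract ((k₂ : ℝ) * α j) * M⌋₊ :=
        congrArg Fin.val this
      exact_mod_cast h2
    have hb1 : (⌊Int.fract ((k₁ : ℝ) * α j) * M⌋₊ : ℝ) ≤ Int.fract ((k₁ : ℝ) * α j) * M :=
      Nat.floor_le (mul_nonneg (Int.fract_nonneg _) hMR.le)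
    have hb1' : Int.fract ((k₁ : ℝ) * α j) * M < (⌊Int.fract ((k₁ : ℝ) * α j) * M⌋₊ : ℝ) + 1 :=
      Nat.lt_floor_add_one _
    have hb2 : (⌊Int.fract ((k₂ : ℝ) * α j) * M⌋₊ : ℝ) ≤ Int.fract ((k₂ : ℝ) * α j) * M :=
      Nat.floor_le (mul_nonneg (Int.fract_nonneg _) hMR.le)
    have hb2' : Int.fract ((k₂ : ℝ) * α j) * M < (⌊Int.fract ((k₂ : ℝ) * α j) * M⌋₊ : ℝ) + 1 :=
      Nat.lt_floor_add_one _
    have hfr : |Int.fract ((k₂:ℝ) * α j) - Int.fract ((k₁:ℝ) * α j)| < 1/M := by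
      rw [abs_sub_lt_iff]
      constructor
      · rw [lt_div_iff₀ hMR]
        nlinarith [heqj, hb1, hb1', hb2, hb2']
      · rw [lt_div_iff₀ hMR]
        nlinarith [heqj, hb1, hb1', hb2, hb2']
    have hdval : ((k₂ - k₁ : ℕ) : ℝ) * α j + ((⌊(k₁:ℝ) * α j⌋ - ⌊(k₂:ℝ) * α j⌋ : ℤ) : ℝ)
        = Int.fract ((k₂:ℝ) * α j) - Int.fract ((k₁:ℝ) * α j) := by
      rw [Nat.cast_sub hlt.le]
      rw [Int.fract, Int.fract]
      push_cast
      ring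
    rw [hdval]
    exact lt_trans hfr hMε
  obtain ⟨k₁, k₂, hne, hFeq⟩ := Finite.exists_ne_map_eq_of_infinite F
  rcases hne.lt_or_gt with h | h
  · exact key _ _ h hFeq
  · exact key _ _ h hFeq.symm

private lemma kron_nat (α : Fin n → ℝ)
    (hα : ∀ (ν₀ : ℤ) (ν : Fin n → ℤ), (ν₀ : ℝ) + ∑ i, (ν i : ℝ) * α i = 0 → ν₀ = 0 ∧ ν = 0)
    (t : Fin n → ℝ) {ε : ℝ} (hε : 0 < ε) :
    ∃ (k : ℕ) (z : Fin n → ℤ), 1 ≤ k ∧ ∀ j, |(k : ℝ) * α j + z j - t j| < ε := by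
  have hd := kron_dense α hα
  have ht : t ∈ closure ((kronG α : Set (Fin n → ℝ))) := hd t
  rw [Metric.mem_closure_iff] at ht
  obtain ⟨g, hg, hdist⟩ := ht (ε/2) (by positivity)
  obtain ⟨k, z, rfl⟩ := hg
  have hj : ∀ j, |(k:ℝ) * α j + z j - t j| < ε/2 := by
    intro j
    have h1 := dist_le_pi_dist ((k • α + fun j => ((z j : ℝ)))) t j
    have h2 : dist ((k • α + fun j => ((z j : ℝ))) j) (t j) < ε/2 := by
      rw [dist_comm] at hdist
      exact lt_of_le_of_lt h1 hdist
    rw [Real.dist_eq] at h2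
    have h3 : ((k • α + fun j => ((z j : ℝ))) j) = (k:ℝ) * α j + z j := by
      simp [zsmul_eq_mul]
    rwa [h3] at h2
  rcases le_or_gt 1 k with hk | hk
  · refine ⟨k.toNat, z, by omega, fun j => ?_⟩
    have : ((k.toNat : ℕ) : ℝ) = (k : ℝ) := by
      exact_mod_cast congrArg (Int.cast : ℤ → ℝ) (Int.toNat_of_nonneg (by omega))
    rw [this]
    exact lt_trans (hj j) (by linarith)
  · set r : ℕ := (1 - k).toNat with hrdef
    have hrk : (r : ℤ) = 1 - k := Int.toNat_of_nonneg (by omega)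
    have hr1 : 1 ≤ r := by omega
    have hrR : (0:ℝ) < r := by
      have : (0:ℕ) < r := hr1
      exact_mod_cast this
    obtain ⟨d, hd1, w, hw⟩ := kron_pigeon α (ε := ε/(2*r)) (by positivity)
    refine ⟨(k + r * d).toNat, fun j => z j + r * w j, ?_, ?_⟩
    · have : (1:ℤ) ≤ k + r * d := by nlinarith [hrk, hd1, hk]
      omega
    · intro j
      have hcast : (((k + (r:ℤ) * d).toNat : ℕ) : ℝ) = (k:ℝ) + (r:ℝ) * d := by
        have h1 : (0:ℤ) ≤ k + r * d := by nlinarith [hrk, hd1, hk]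
        have := Int.toNat_of_nonneg h1
        exact_mod_cast congrArg (Int.cast : ℤ → ℝ) this
      rw [hcast]
      have hsplit : ((k:ℝ) + (r:ℝ) * d) * α j + ((z j + r * w j : ℤ) : ℝ) - t j
          = ((k:ℝ) * α j + z j - t j) + (r:ℝ) * ((d:ℝ) * α j + w j) := by
        push_cast
        ring
      rw [hsplit]
      calc |((k:ℝ) * α j + z j - t j) + (r:ℝ) * ((d:ℝ) * α j + w j)|
          ≤ |(k:ℝ) * α j + z j - t j| + |(r:ℝ) * ((d:ℝ) * α j + w j)| := abs_add_le _ _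
        _ < ε/2 + ε/2 := by
            apply add_lt_add (hj j)
            rw [abs_mul, abs_of_pos hrR]
            have h4 := hw j
            calc (r:ℝ) * |(d:ℝ) * α j + w j| < (r:ℝ) * (ε/(2*r)) :=
                  mul_lt_mul_of_pos_left h4 hrR
              _ = ε/2 := by field_simp
        _ = ε := by ring

private lemma tendsto_const_of_top {E : Type*} (τ : TopologicalSpace E) (x : E) :
    Filter.Tendsto (fun _ : ℕ => x) Filter.atTop (@nhds E τ x) := by
  letI := τ
  exact tendsto_const_nhds

private lemma tendsto_unique_of_t2 {E : Type*} (τ : TopologicalSpace E) (hτ : @T2Space E τ)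
    {f : ℕ → E} {a b : E} (ha : Filter.Tendsto f Filter.atTop (@nhds E τ a))
    (hb : Filter.Tendsto f Filter.atTop (@nhds E τ b)) : a = b := by
  letI := τ
  exact tendsto_nhds_unique ha hb

/-- main theorem: for an n-parameter τ-continuous semigroup of mappings,
with `p₁, …, pₙ ∈ ℝ₊ⁿ` linearly independent in the usual sense, `{1, α₁, …, αₙ}` linearly
independent over ℚ, and `p₀ = α₁p₁ + ⋯ + αₙpₙ ∈ ℝ₊ⁿ`, one has
`⋂_{p ∈ ℝ₊ⁿ} F(T(p)) = F(T(p₀)) ∩ F(T(p₁)) ∩ ⋯ ∩ F(T(pₙ))`. -/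
theorem common_fixed_points_n_parameter
    {n : ℕ} {E : Type*} [NormedAddCommGroup E] [NormedSpace ℝ E] [CompleteSpace E]
    (τ : TopologicalSpace E) (hτ : @T2Space E τ)
    (C : Set E) (T : (Fin n → ℝ) → E → E)
    (hmaps : ∀ p : Fin n → ℝ, (∀ i, 0 ≤ p i) → ∀ x ∈ C, T p x ∈ C)
    (hsemi : ∀ p q : Fin n → ℝ, (∀ i, 0 ≤ p i) → (∀ i, 0 ≤ q i) →
      ∀ x ∈ C, T (p + q) x = T p (T q x))
    (hcont : ∀ x ∈ C,
      @ContinuousOn (Fin n → ℝ) E _ τ (fun p => T p x) {p | ∀ i, 0 ≤ p i})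
    (p : Fin n → Fin n → ℝ) (hp : ∀ j i, 0 ≤ p j i)
    (hli : ∀ lam : Fin n → ℝ, ∑ j, lam j • p j = 0 → lam = 0)
    (α : Fin n → ℝ)
    (hα : ∀ (ν₀ : ℤ) (ν : Fin n → ℤ),
      (ν₀ : ℝ) + ∑ i, (ν i : ℝ) * α i = 0 → ν₀ = 0 ∧ ν = 0)
    (p₀ : Fin n → ℝ) (hp₀ : p₀ = ∑ j, α j • p j) (hp₀pos : ∀ i, 0 ≤ p₀ i) :
    (⋂ q ∈ {q : Fin n → ℝ | ∀ i, 0 ≤ q i}, {x ∈ C | T q x = x})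
      = {x ∈ C | T p₀ x = x} ∩ ⋂ j, {x ∈ C | T (p j) x = x} := by
  ext x
  simp only [Set.mem_iInter, Set.mem_inter_iff, Set.mem_setOf_eq]
  constructor
  · intro h
    exact ⟨h p₀ hp₀pos, fun j => h (p j) (hp j)⟩
  · rintro ⟨⟨hxC, hx0⟩, hxj⟩
    intro q hq
    refine ⟨hxC, ?_⟩
    have hfixj : ∀ j, T (p j) x = x := fun j => (hxj j).2
    by_cases hn : n = 0
    · subst hn
      have : q = p₀ := Subsingleton.elim q p₀
      rw [this]
      exact hx0
    haveI : Nonempty (Fin n) := ⟨⟨0, by omega⟩⟩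
    have hli' : LinearIndependent ℝ p :=
      Fintype.linearIndependent_iff.mpr fun g hg i => congrFun (hli g hg) i
    let B : Module.Basis (Fin n) ℝ (Fin n → ℝ) :=
      basisOfLinearIndependentOfCardEqFinrank hli'
        (by simp [Module.finrank_fintype_fun_eq_card])
    have hB : ∀ j, B j = p j := fun j =>
      congrFun (coe_basisOfLinearIndependentOfCardEqFinrank hli' _) j
    set t : Fin n → ℝ := fun j => B.repr q j with ht
    have hq_eq : q = ∑ j, t j • p j := by
      conv_lhs => rw [← B.sum_repr q]
      exact Finset.sum_congr rfl fun j _ => by rw [hB j]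
    set Fix : Set (Fin n → ℝ) := {v | (∀ i, 0 ≤ v i) ∧ T v x = x} with hFixdef
    have hFadd : ∀ v ∈ Fix, ∀ w ∈ Fix, v + w ∈ Fix := by
      rintro v ⟨hv1, hv2⟩ w ⟨hw1, hw2⟩
      refine ⟨fun i => add_nonneg (hv1 i) (hw1 i), ?_⟩
      rw [hsemi v w hv1 hw1 x hxC, hw2, hv2]
    have hF0 : p₀ ∈ Fix := ⟨hp₀pos, hx0⟩
    have hFj : ∀ j, p j ∈ Fix := fun j => ⟨hp j, hfixj j⟩
    have hFadd' : ∀ v ∈ Fix, ∀ w, (w = 0 ∨ w ∈ Fix) → v + w ∈ Fix := by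
      rintro v hv w (rfl | hw)
      · simpa using hv
      · exact hFadd v hv w hw
    have hA0add : ∀ v w : Fin n → ℝ, (v = 0 ∨ v ∈ Fix) → (w = 0 ∨ w ∈ Fix) →
        (v + w = 0 ∨ v + w ∈ Fix) := by
      rintro v w (rfl | hv) hw
      · simpa using hw
      · exact Or.inr (hFadd' v hv w hw)
    have hA0smul : ∀ (m : ℕ) (v : Fin n → ℝ), (v = 0 ∨ v ∈ Fix) →
        ((m : ℝ) • v = 0 ∨ (m : ℝ) • v ∈ Fix) := by
      intro m
      induction m with
      | zero => intro v _; left; simp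
      | succ m ih =>
        intro v hv
        have : ((m + 1 : ℕ) : ℝ) • v = (m : ℝ) • v + v := by
          push_cast
          rw [add_smul, one_smul]
        rw [this]
        exact hA0add _ _ (ih v hv) hv
    have hA0sum : ∀ (a : Fin n → ℕ),
        ((∑ j, (a j : ℝ) • p j) = 0 ∨ (∑ j, (a j : ℝ) • p j) ∈ Fix) :=
      fun a => Finset.sum_induction _ (fun v => v = 0 ∨ v ∈ Fix) hA0add (Or.inl rfl)
        (fun j _ => hA0smul (a j) (p j) (Or.inr (hFj j)))
    -- the key approximation step
    have key : ∀ ε : ℝ, 0 < ε → ∃ c : Fin n → ℝ,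
        (∀ j, t j ≤ c j ∧ c j ≤ t j + ε) ∧ (∑ j, c j • p j) ∈ Fix := by
      intro ε hε
      obtain ⟨k, z, hk1, hkz⟩ := kron_nat α hα (fun j => t j + ε/2) (ε := ε/2) (by positivity)
      set c : Fin n → ℝ := fun j => (k : ℝ) * α j + z j with hc
      have hcb : ∀ j, t j < c j ∧ c j < t j + ε := by
        intro j
        have h1 := hkz j
        rw [abs_lt] at h1
        constructor <;> [skip; skip] <;> · simp only [hc] at * ; linarith [h1.1, h1.2]
      set a : Fin n → ℕ := fun j => (z j).toNat with ha
      set m : Fin n → ℕ := fun j => (-(z j)).toNat with hm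
      have hzam : ∀ j, (a j : ℝ) = (z j : ℝ) + (m j : ℝ) := by
        intro j
        have h2 := Int.toNat_sub_toNat_neg (z j)
        have : ((z j).toNat : ℝ) - ((-(z j)).toNat : ℝ) = ((z j : ℤ) : ℝ) := by
          exact_mod_cast congrArg (Int.cast : ℤ → ℝ) h2
        simp only [ha, hm]
        linarith
      set total : Fin n → ℝ := p₀ + (((k - 1 : ℕ) : ℝ) • p₀ + ∑ j, (a j : ℝ) • p j)
        with htotal
      have htotalFix : total ∈ Fix :=
        hFadd' p₀ hF0 _ (hA0add _ _ (hA0smul (k-1) p₀ (Or.inr hF0)) (hA0sum a))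
      have hiden : total = (∑ j, c j • p j) + ∑ j, (m j : ℝ) • p j := by
        rw [htotal, hp₀, Finset.smul_sum, ← Finset.sum_add_distrib,
          ← Finset.sum_add_distrib, ← Finset.sum_add_distrib]
        refine Finset.sum_congr rfl fun j _ => ?_
        rw [smul_smul, ← add_smul, ← add_smul, ← add_smul]
        congr 1
        have hkc : ((k - 1 : ℕ) : ℝ) = (k : ℝ) - 1 := by
          push_cast [Nat.cast_sub hk1]
          ring
        rw [hkc, hzam j]
        simp only [hc]
        ring
      have hcone : ∀ i, 0 ≤ (∑ j, c j • p j) i := by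
        intro i
        have hsum : (∑ j, c j • p j) i = ∑ j, c j * p j i := by
          rw [Finset.sum_apply]
          exact Finset.sum_congr rfl fun j _ => rfl
        have hsum2 : q i = ∑ j, t j * p j i := by
          conv_lhs => rw [hq_eq]
          rw [Finset.sum_apply]
          exact Finset.sum_congr rfl fun j _ => rfl
        have hdecomp : (∑ j, c j • p j) i = q i + ∑ j, (c j - t j) * p j i := by
          rw [hsum, hsum2, ← Finset.sum_add_distrib]
          exact Finset.sum_congr rfl fun j _ => by ring
        rw [hdecomp]
        exact add_nonneg (hq i) (Finset.sum_nonneg fun j _ =>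
          mul_nonneg (by linarith [(hcb j).1]) (hp j i))
      refine ⟨c, fun j => ⟨(hcb j).1.le, (hcb j).2.le⟩, ?_⟩
      rcases hA0sum m with hm0 | hmF
      · rw [hiden, hm0, add_zero] at htotalFix
        exact htotalFix
      · refine ⟨hcone, ?_⟩
        have hs := hsemi (∑ j, c j • p j) (∑ j, (m j : ℝ) • p j) hcone hmF.1 x hxC
        rw [← hiden, htotalFix.2, hmF.2] at hs
        exact hs.symm
    -- build the approximating sequence and pass to the limit
    have hseq : ∀ ν : ℕ, ∃ c : Fin n → ℝ,
        (∀ j, t j ≤ c j ∧ c j ≤ t j + 1/(ν+1)) ∧ (∑ j, c j • p j) ∈ Fix :=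
      fun ν => key _ (by positivity)
    choose c hcb hcFix using hseq
    set qq : ℕ → (Fin n → ℝ) := fun ν => ∑ j, c ν j • p j with hqq
    have hqq_tendsto : Filter.Tendsto qq Filter.atTop (nhds q) := by
      rw [← tendsto_sub_nhds_zero_iff]
      have hlim : Filter.Tendsto (fun ν : ℕ => (1/(ν+1 : ℝ)) * ∑ j, ‖p j‖)
          Filter.atTop (nhds 0) := by
        have := tendsto_one_div_add_atTop_nhds_zero_nat.mul_const (∑ j, ‖p j‖)
        simpa using this
      have hbound : ∀ ν : ℕ, ‖qq ν - q‖ ≤ (1/(ν+1 : ℝ)) * ∑ j, ‖p j‖ := by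
        intro ν
        have hdiff : qq ν - q = ∑ j, (c ν j - t j) • p j := by
          rw [hqq]
          conv_lhs => rw [hq_eq]
          rw [← Finset.sum_sub_distrib]
          exact Finset.sum_congr rfl fun j _ => by rw [sub_smul]
        rw [hdiff]
        calc ‖∑ j, (c ν j - t j) • p j‖ ≤ ∑ j, ‖(c ν j - t j) • p j‖ :=
              norm_sum_le _ _
          _ ≤ ∑ j, (1/(ν+1 : ℝ)) * ‖p j‖ := by
              refine Finset.sum_le_sum fun j _ => ?_
              rw [norm_smul, Real.norm_eq_abs]
              refine mul_le_mul_of_nonneg_right ?_ (norm_nonneg _)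
              rw [abs_le]
              have hpos : (0:ℝ) ≤ 1/((ν:ℝ)+1) := by positivity
              constructor
              · linarith [(hcb ν j).1]
              · linarith [(hcb ν j).2]
          _ = (1/(ν+1 : ℝ)) * ∑ j, ‖p j‖ := by rw [Finset.mul_sum]
      exact squeeze_zero_norm hbound hlim
    have h1 : Filter.Tendsto qq Filter.atTop
        (nhdsWithin q {p : Fin n → ℝ | ∀ i, 0 ≤ p i}) :=
      tendsto_nhdsWithin_iff.mpr ⟨hqq_tendsto,
        Filter.Eventually.of_forall fun ν => (hcFix ν).1⟩
    have hq_cw : Filter.Tendsto (fun pp => T pp x)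
        (nhdsWithin q {p : Fin n → ℝ | ∀ i, 0 ≤ p i}) (@nhds E τ (T q x)) :=
      hcont x hxC q hq
    have h2 : Filter.Tendsto (fun ν => T (qq ν) x) Filter.atTop (@nhds E τ (T q x)) :=
      hq_cw.comp h1
    have h3 : Filter.Tendsto (fun ν => T (qq ν) x) Filter.atTop (@nhds E τ x) := by
      have hconst : (fun ν => T (qq ν) x) = fun _ => x := funext fun ν => (hcFix ν).2
      rw [hconst]
      exact tendsto_const_of_top τ x
    exact tendsto_unique_of_t2 τ hτ h2 h3
end

section
/- Let {T(p) : p ∈ ℝ₊ⁿ} be an n-parameter τ-continuous semigroup of mappings on a subset C of a Banach space E (τ a Hausdorff topology on E). Let p₁, …, pₙ ∈ ℝ₊ⁿ be linearly independent in the usual sense, let α₁, …, αₙ ∈ ℝ be such that {1, α₁, …, αₙ} is linearly independent over ℚ, suppose p₀ := α₁p₁ + ⋯ + αₙpₙ ∈ ℝ₊ⁿ, and let z ∈ C satisfy T(p₀)z = T(p₁)z = ⋯ = T(pₙ)z = z. Then for every (λ₁, λ₂, …, λₙ) ∈ [0,1)ⁿ, one has T(λ₁p₁ + λ₂p₂ +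 ⋯ + λₙpₙ)z = z. -/
open Filter Topology Submodule

namespace KronAux

variable {n : ℕ}

/-- If a closed additive subgroup of ℝⁿ contains no line with direction in `W`,
then its elements in `W` are isolated from 0. -/
lemma exists_isolation (G : AddSubgroup (Fin n → ℝ)) (hGc : IsClosed (G : Set (Fin n → ℝ)))
    (W : Submodule ℝ (Fin n → ℝ))
    (hline : ∀ u : Fin n → ℝ, (∀ t : ℝ, t • u ∈ G) → u ∈ W → u = 0) :
    ∃ ε > (0:ℝ), ∀ x ∈ G, x ∈ W → ‖x‖ < ε → x = 0 := by
  by_contra h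
  push_neg at h
  have hchoice : ∀ k : ℕ, ∃ x : Fin n → ℝ, x ∈ G ∧ x ∈ W ∧ ‖x‖ < 1/(k+1) ∧ x ≠ 0 := by
    intro k
    obtain ⟨x, hxG, hxW, hxn, hxne⟩ := h (1/(k+1)) (by positivity)
    exact ⟨x, hxG, hxW, hxn, hxne⟩
  choose x hxG hxW hxn hxne using hchoice
  set u : ℕ → Fin n → ℝ := fun k => ‖x k‖⁻¹ • x k with hu
  have hxpos : ∀ k, (0:ℝ) < ‖x k‖ := fun k => norm_pos_iff.mpr (hxne k)
  have hunorm : ∀ k, ‖u k‖ = 1 := by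
    intro k
    rw [hu]
    simp [norm_smul, abs_of_pos (inv_pos.mpr (hxpos k)), inv_mul_cancel₀ (ne_of_gt (hxpos k))]
  have husphere : ∀ k, u k ∈ Metric.sphere (0 : Fin n → ℝ) 1 := by
    intro k; simpa [Metric.mem_sphere, dist_eq_norm] using hunorm k
  obtain ⟨v, hvs, φ, hφmono, hφtend⟩ :=
    (isCompact_sphere (0 : Fin n → ℝ) 1).tendsto_subseq husphere
  -- the norms tend to 0
  have hxn0 : Tendsto (fun k => ‖x (φ k)‖) atTop (𝓝 0) := by
    apply squeeze_zero (fun k => (hxpos (φ k)).le)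
      (fun k => (hxn (φ k)).le.trans (one_div_le_one_div_of_le (by positivity : (0:ℝ) < (k:ℝ)+1)
        (by exact_mod_cast Nat.add_le_add_right hφmono.le_apply 1 : ((k:ℝ)+1) ≤ (φ k:ℝ)+1)))
    exact tendsto_one_div_add_atTop_nhds_zero_nat
  have hlinev : ∀ t : ℝ, t • v ∈ G := by
    intro t
    set c : ℕ → ℤ := fun k => ⌊t / ‖x (φ k)‖⌋ with hc
    have hmem : ∀ k, ((c k : ℝ)) • x (φ k) ∈ G := by
      intro k
      have := AddSubgroup.zsmul_mem G (hxG (φ k)) (c k)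
      rwa [← Int.cast_smul_eq_zsmul ℝ] at this
    have hrw : ∀ k, ((c k : ℝ)) • x (φ k) = ((c k : ℝ) * ‖x (φ k)‖) • u (φ k) := by
      intro k
      rw [hu, smul_smul, mul_assoc, mul_inv_cancel₀ (ne_of_gt (hxpos (φ k))), mul_one]
    have hs : Tendsto (fun k => (c k : ℝ) * ‖x (φ k)‖) atTop (𝓝 t) := by
      have hdist : ∀ k, |(c k : ℝ) * ‖x (φ k)‖ - t| ≤ ‖x (φ k)‖ := by
        intro k
        have h1 : (c k : ℝ) ≤ t / ‖x (φ k)‖ := Int.floor_le _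
        have h2 : t / ‖x (φ k)‖ < (c k : ℝ) + 1 := Int.lt_floor_add_one _
        have h1' : (c k : ℝ) * ‖x (φ k)‖ ≤ t := (le_div_iff₀ (hxpos (φ k))).1 h1
        have h2' : t < ((c k : ℝ) + 1) * ‖x (φ k)‖ := (div_lt_iff₀ (hxpos (φ k))).1 h2
        rw [abs_le]
        constructor <;> nlinarith [hxpos (φ k)]
      rw [tendsto_iff_dist_tendsto_zero]
      simpa [Real.dist_eq] using squeeze_zero (fun k => abs_nonneg _) hdist hxn0
    have htend : Tendsto (fun k => ((c k : ℝ)) • x (φ k)) atTop (𝓝 (t • v)) := by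
      simp_rw [hrw]
      exact hs.smul hφtend
    exact hGc.mem_of_tendsto htend (Eventually.of_forall hmem)
  have hvW : v ∈ W := by
    have hWc : IsClosed (W : Set (Fin n → ℝ)) := Submodule.closed_of_finiteDimensional W
    refine hWc.mem_of_tendsto hφtend (Eventually.of_forall fun k => ?_)
    exact Submodule.smul_mem W _ (hxW (φ k))
  have := hline v hlinev hvW
  rw [this] at hvs
  simp at hvs

end KronAux

namespace KronAux

open Module

lemma dense_intSpan (α : Fin n → ℝ)
    (hα : ∀ (ν₀ : ℤ) (ν : Fin n → ℤ),
      (ν₀ : ℝ) + ∑ i, (ν i : ℝ) * α i = 0 → ν₀ = 0 ∧ ν = 0) :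
    Dense ((span ℤ (insert α (Set.range fun i => Pi.single i (1:ℝ))) :
      Submodule ℤ (Fin n → ℝ)) : Set (Fin n → ℝ)) := by
  classical
  by_contra hdense
  set H : Submodule ℤ (Fin n → ℝ) :=
    span ℤ (insert α (Set.range fun i => Pi.single i (1:ℝ))) with hH
  set G : AddSubgroup (Fin n → ℝ) := H.toAddSubgroup.topologicalClosure with hG
  have hGclosed : IsClosed (G : Set (Fin n → ℝ)) :=
    AddSubgroup.isClosed_topologicalClosure _
  have hHG : ∀ s ∈ (insert α (Set.range fun i => Pi.single i (1:ℝ)) : Set (Fin n → ℝ)),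
      s ∈ G := fun s hs => subset_closure (subset_span hs)
  have hαG : (α : Fin n → ℝ) ∈ G := hHG α (Set.mem_insert _ _)
  have hsingleG : ∀ i, Pi.single i (1:ℝ) ∈ G :=
    fun i => hHG _ (Set.mem_insert_iff.mpr (Or.inr ⟨i, rfl⟩))
  -- The key step: produce a nonzero functional φ with φ(G) ⊆ ℤ.
  -- First: any functional integral on G must be zero.
  have hmain : ∀ φ : (Fin n → ℝ) →ₗ[ℝ] ℝ, (∀ g ∈ G, ∃ c : ℤ, φ g = (c : ℝ)) → φ = 0 := by
    intro φ hφint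
    have hdecomp : ∀ x : Fin n → ℝ, x = ∑ i, x i • (Pi.single i (1:ℝ) : Fin n → ℝ) := by
      intro x
      ext j
      rw [Finset.sum_apply]
      simp [Pi.single_apply]
    obtain ⟨c₀, hc₀⟩ := hφint α hαG
    choose c hc using fun i => hφint (Pi.single i (1:ℝ)) (hsingleG i)
    have hφα : φ α = ∑ i, α i * (c i : ℝ) := by
      conv_lhs => rw [hdecomp α]
      rw [map_sum]
      refine Finset.sum_congr rfl fun i _ => ?_
      rw [map_smul, smul_eq_mul, hc i]
    have heq : ((-c₀ : ℤ) : ℝ) + ∑ i, ((c i : ℝ)) * α i = 0 := by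
      push_cast
      rw [← hc₀, hφα]
      have : ∑ i, (c i : ℝ) * α i = ∑ i, α i * (c i : ℝ) :=
        Finset.sum_congr rfl fun i _ => mul_comm _ _
      linarith [this]
    obtain ⟨-, hcz⟩ := hα (-c₀) c heq
    have hczero : ∀ i, φ (Pi.single i (1:ℝ)) = 0 := by
      intro i
      rw [hc i]
      have : c i = 0 := congrFun hcz i
      simp [this]
    refine LinearMap.ext fun x => ?_
    conv_lhs => rw [hdecomp x]
    rw [map_sum]
    simp [hczero]
  -- the subspace of directions of lines inside G
  set V : Submodule ℝ (Fin n → ℝ) :=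
    { carrier := {x | ∀ t : ℝ, t • x ∈ G}
      add_mem' := fun {a b} ha hb t => by
        rw [smul_add]; exact G.add_mem (ha t) (hb t)
      zero_mem' := fun t => by rw [smul_zero]; exact G.zero_mem
      smul_mem' := fun c a ha t => by
        rw [smul_smul]; exact ha (t * c) } with hVdef
  have hVmem : ∀ x : Fin n → ℝ, x ∈ V ↔ ∀ t : ℝ, t • x ∈ G := fun x => Iff.rfl
  have hVG : ∀ x ∈ V, x ∈ G := fun x hx => by simpa using (hVmem x).1 hx 1
  have hVtop : V ≠ ⊤ := by
    intro hVt
    apply hdense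
    rw [dense_iff_closure_eq]
    apply Set.eq_univ_of_forall
    intro x
    exact hVG x (hVt ▸ Submodule.mem_top)
  obtain ⟨W, hW⟩ := Submodule.exists_isCompl V
  set Λ : Submodule ℤ (Fin n → ℝ) :=
    (AddSubgroup.toIntSubmodule G) ⊓ (W.restrictScalars ℤ) with hΛdef
  have hΛmem : ∀ x : Fin n → ℝ, x ∈ Λ ↔ x ∈ G ∧ x ∈ W := by
    intro x
    simp only [hΛdef, Submodule.mem_inf, Submodule.restrictScalars_mem]
    exact and_congr .rfl .rfl
  set U : Submodule ℝ (Fin n → ℝ) := span ℝ (Λ : Set (Fin n → ℝ)) with hUdef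
  have hUW : U ≤ W := span_le.mpr fun x hx => ((hΛmem x).1 hx).2
  have hΛU : ∀ x ∈ Λ, x ∈ U := fun x hx => subset_span hx
  -- isolation of Λ
  have hiso : ∃ ε > (0:ℝ), ∀ x ∈ G, x ∈ W → ‖x‖ < ε → x = 0 := by
    refine exists_isolation G hGclosed W fun u hu huW => ?_
    have : u ∈ V ⊓ W := ⟨hu, huW⟩
    rwa [hW.inf_eq_bot, Submodule.mem_bot] at this
  -- decomposition of elements of G
  have hGdecomp : ∀ g ∈ G, ∃ v ∈ V, ∃ w, w ∈ Λ ∧ v + w = g := by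
    intro g hg
    obtain ⟨v, w, hv, hw, hvw⟩ := Submodule.codisjoint_iff_exists_add_eq.mp hW.codisjoint g
    have hwG : w ∈ G := by
      have hvG : v ∈ G := hVG v hv
      have : w = g - v := by rw [← hvw]; ring
      rw [this]; exact G.sub_mem hg hvG
    exact ⟨v, hv, w, (hΛmem w).2 ⟨hwG, hw⟩, hvw⟩
  -- produce the functional
  have hφ : ∃ φ : (Fin n → ℝ) →ₗ[ℝ] ℝ, φ ≠ 0 ∧ ∀ g ∈ G, ∃ c : ℤ, φ g = (c : ℝ) := by
    by_cases hsup : V ⊔ U = ⊤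
    · -- lattice case
      have hdisj : Disjoint V U := hW.disjoint.mono_right hUW
      have hcompl2 : IsCompl V U := ⟨hdisj, codisjoint_iff.mpr hsup⟩
      set L' : Submodule ℤ ↥U := Λ.comap ((U.subtype).restrictScalars ℤ) with hL'def
      have hL'mem : ∀ x : ↥U, x ∈ L' ↔ (x : Fin n → ℝ) ∈ Λ := fun x => Iff.rfl
      haveI hdisc : DiscreteTopology ↥L' := by
        obtain ⟨ε, hε, hiso'⟩ := hiso
        rw [discreteTopology_iff_isOpen_singleton_zero]
        have hset : ({0} : Set ↥L') =
            (fun x : ↥L' => ((x : ↥U) : Fin n → ℝ)) ⁻¹' Metric.ball 0 ε := by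
          ext x
          simp only [Set.mem_singleton_iff, Set.mem_preimage, Metric.mem_ball,
            dist_zero_right]
          constructor
          · rintro rfl; simpa using hε
          · intro hx
            have hxΛ := (hL'mem x).1 x.2
            have := hiso' _ ((hΛmem _).1 hxΛ).1 ((hΛmem _).1 hxΛ).2 hx
            exact Subtype.ext (Subtype.ext this)
        rw [hset]
        exact (Metric.isOpen_ball).preimage
          (continuous_subtype_val.comp continuous_subtype_val)
      have himage : U.subtype '' (L' : Set ↥U) = (Λ : Set (Fin n → ℝ)) := by
        ext y
        constructor
        · rintro ⟨x, hx, rfl⟩; exact hx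
        · intro hy
          exact ⟨⟨y, hΛU y hy⟩, hy, rfl⟩
      have hspan : span ℝ (L' : Set ↥U) = ⊤ := by
        apply Submodule.map_injective_of_injective U.injective_subtype
        rw [Submodule.map_span, Submodule.map_top, Submodule.range_subtype, himage]
      haveI : IsZLattice ℝ L' := ⟨hspan⟩
      haveI := ZLattice.module_free ℝ L'
      haveI := ZLattice.module_finite ℝ L'
      set b := Module.Free.chooseBasis ℤ ↥L' with hbdef
      set bR := b.ofZLatticeBasis ℝ L' with hbRdef
      haveI : Nonempty (Module.Free.ChooseBasisIndex ℤ ↥L') := by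
        by_contra hempty
        rw [not_nonempty_iff] at hempty
        have hU0 : U = ⊥ := by
          have : Module.finrank ℝ ↥U = 0 := by
            rw [finrank_eq_card_basis bR]
            exact Fintype.card_eq_zero
          exact Submodule.finrank_eq_zero.mp this
        apply hVtop
        rw [← hsup, hU0, sup_bot_eq]
      set i₀ := Classical.arbitrary (Module.Free.ChooseBasisIndex ℤ ↥L') with hi₀
      set proj := U.projectionOnto V hcompl2.symm with hproj
      refine ⟨(bR.coord i₀).comp proj, ?_, ?_⟩
      · intro h0
        have h1 : ((bR.coord i₀).comp proj) ((bR i₀ : ↥U) : Fin n → ℝ) = 1 := by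
          simp only [LinearMap.comp_apply, hproj]
          rw [Submodule.projectionOnto_apply_left hcompl2.symm (bR i₀)]
          simp [Basis.coord_apply]
        rw [h0] at h1
        simp at h1
      · intro g hg
        obtain ⟨v, hv, w, hwΛ, hvw⟩ := hGdecomp g hg
        have hwU : w ∈ U := hΛU w hwΛ
        have hwL' : (⟨w, hwU⟩ : ↥U) ∈ L' := (hL'mem ⟨w, hwU⟩).2 hwΛ
        refine ⟨b.repr ⟨⟨w, hwU⟩, hwL'⟩ i₀, ?_⟩
        have hprojg : proj g = ⟨w, hwU⟩ := by
          rw [← hvw, map_add, hproj]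
          rw [Submodule.projectionOnto_apply_of_mem_right hcompl2.symm hv]
          rw [Submodule.projectionOnto_apply_left hcompl2.symm ⟨w, hwU⟩]
          simp
        simp only [LinearMap.comp_apply, hprojg, Basis.coord_apply]
        exact_mod_cast Basis.ofZLatticeBasis_repr_apply ℝ L' b ⟨⟨w, hwU⟩, hwL'⟩ i₀
    · -- degenerate case: a functional vanishing on V ⊔ U
      obtain ⟨φ, hφ0, hφbot⟩ :=
        Submodule.exists_dual_map_eq_bot_of_lt_top (p := V ⊔ U)
          (lt_top_iff_ne_top.mpr hsup) inferInstance
      refine ⟨φ, hφ0, fun g hg => ⟨0, ?_⟩⟩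
      obtain ⟨v, hv, w, hwΛ, hvw⟩ := hGdecomp g hg
      have hgVU : g ∈ V ⊔ U := by
        rw [← hvw]
        exact Submodule.add_mem _ (Submodule.mem_sup_left hv)
          (Submodule.mem_sup_right (hΛU w hwΛ))
      have : φ g ∈ Submodule.map φ (V ⊔ U) := Submodule.mem_map_of_mem hgVU
      rw [hφbot] at this
      simpa using this
  obtain ⟨φ, hφ0, hφint⟩ := hφ
  exact hφ0 (hmain φ hφint)

end KronAux

namespace KronAux

lemma exists_small_pos (α : Fin n → ℝ) (δ : ℝ) (hδ : 0 < δ) :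
    ∃ q : ℕ, 1 ≤ q ∧ ∃ k : Fin n → ℤ, ∀ i, |(q:ℝ) * α i + (k i : ℝ)| < δ := by
  set u : ℕ → Fin n → ℝ := fun m => fun i => Int.fract ((m:ℝ) * α i) with hu
  have humem : ∀ m, u m ∈ Metric.closedBall (0 : Fin n → ℝ) 1 := by
    intro m
    rw [Metric.mem_closedBall, dist_zero_right]
    rw [pi_norm_le_iff_of_nonneg (by norm_num)]
    intro i
    rw [Real.norm_eq_abs, abs_of_nonneg (Int.fract_nonneg _)]
    exact (Int.fract_lt_one _).le
  obtain ⟨v, -, φ, hφ, htend⟩ :=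
    (isCompact_closedBall (0 : Fin n → ℝ) 1).tendsto_subseq humem
  rw [Metric.tendsto_atTop] at htend
  obtain ⟨N, hN⟩ := htend (δ/2) (by positivity)
  set a := φ N with ha
  set b := φ (N+1) with hb
  have hab : a < b := hφ (Nat.lt_succ_self N)
  have hdist : dist (u b) (u a) < δ :=
    (dist_triangle (u b) v (u a)).trans_lt
      (by rw [dist_comm v (u a)]
          have h1 := hN (N+1) (Nat.le_succ N)
          have h2 := hN N le_rfl
          calc dist (u b) v + dist (u a) v < δ/2 + δ/2 := by exact add_lt_add h1 h2
          _ = δ := by ring)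
  refine ⟨b - a, by omega, fun i => ⌊(a:ℝ) * α i⌋ - ⌊(b:ℝ) * α i⌋, fun i => ?_⟩
  have hcast : ((b - a : ℕ) : ℝ) = (b:ℝ) - (a:ℝ) := by
    push_cast [Nat.cast_sub hab.le]; ring
  have hval : ((b - a : ℕ) : ℝ) * α i + ((⌊(a:ℝ) * α i⌋ - ⌊(b:ℝ) * α i⌋ : ℤ) : ℝ)
      = u b i - u a i := by
    rw [hcast, hu]
    simp only [Int.fract]
    push_cast
    ring
  rw [hval]
  have := norm_le_pi_norm (u b - u a) i
  rw [← dist_eq_norm] at this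
  calc |u b i - u a i| = ‖(u b - u a) i‖ := by rw [Real.norm_eq_abs]; rfl
    _ ≤ dist (u b) (u a) := this
    _ < δ := hdist

lemma fract_approx (α : Fin n → ℝ)
    (hα : ∀ (ν₀ : ℤ) (ν : Fin n → ℤ),
      (ν₀ : ℝ) + ∑ i, (ν i : ℝ) * α i = 0 → ν₀ = 0 ∧ ν = 0)
    (lam : Fin n → ℝ) (hlam : ∀ i, lam i ∈ Set.Ioo (0:ℝ) 1) (ε : ℝ) (hε : 0 < ε) :
    ∃ m : ℕ, ∀ i, |Int.fract ((m:ℝ) * α i) - lam i| < ε := by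
  classical
  set F : Finset ℝ := insert ε (Finset.univ.image fun i => min (lam i) (1 - lam i)) with hF
  have hFne : F.Nonempty := ⟨ε, Finset.mem_insert_self _ _⟩
  set ε' : ℝ := F.min' hFne with hε'
  have hε'pos : 0 < ε' := by
    have hmem' : ε' ∈ insert ε (Finset.univ.image fun i => min (lam i) (1 - lam i)) := by
      rw [← hF]; exact F.min'_mem hFne
    rcases Finset.mem_insert.mp hmem' with h | h
    · linarith [h.ge, h.le]
    · obtain ⟨i, -, hi⟩ := Finset.mem_image.mp h
      have heq : ε' = min (lam i) (1 - lam i) := hi.symm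
      have hpos := lt_min (hlam i).1 (by linarith [(hlam i).2] : (0:ℝ) < 1 - lam i)
      linarith
  have hε'le : ε' ≤ ε := F.min'_le ε (Finset.mem_insert_self _ _)
  have hε'lam : ∀ i, ε' ≤ lam i := fun i =>
    (F.min'_le _ (Finset.mem_insert_of_mem
      (Finset.mem_image_of_mem _ (Finset.mem_univ i)))).trans (min_le_left _ _)
  have hε'lam' : ∀ i, ε' ≤ 1 - lam i := fun i =>
    (F.min'_le _ (Finset.mem_insert_of_mem
      (Finset.mem_image_of_mem _ (Finset.mem_univ i)))).trans (min_le_right _ _)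
  -- Step A: integer approximation from density
  have hdense := dense_intSpan α hα
  rw [Metric.dense_iff] at hdense
  obtain ⟨y, hyball, hymem⟩ := hdense lam (ε'/2) (by positivity)
  rw [SetLike.mem_coe, Submodule.mem_span_insert] at hymem
  obtain ⟨c, zvec, hz, hy⟩ := hymem
  rw [mem_span_range_iff_exists_fun] at hz
  obtain ⟨k, hk⟩ := hz
  have hyi : ∀ i, y i = (c:ℝ) * α i + (k i : ℝ) := by
    intro i
    have hzi : zvec i = (k i : ℝ) := by
      rw [← hk, Finset.sum_apply]
      have hterm : ∀ j, (k j • (Pi.single j (1:ℝ) : Fin n → ℝ)) i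
          = if i = j then (k j : ℝ) else 0 := by
        intro j
        rw [Pi.smul_apply, Pi.single_apply, zsmul_eq_mul, mul_ite, mul_one, mul_zero]
      rw [Finset.sum_congr rfl fun j _ => hterm j, Finset.sum_ite_eq]
      simp
    rw [hy, Pi.add_apply, Pi.smul_apply, zsmul_eq_mul, hzi]
  have hcomp : ∀ i, |(c:ℝ) * α i + (k i : ℝ) - lam i| < ε'/2 := by
    intro i
    have h1 : dist y lam < ε'/2 := Metric.mem_ball.mp hyball
    have h2 := norm_le_pi_norm (y - lam) i
    rw [dist_eq_norm] at h1
    have : |y i - lam i| ≤ ‖y - lam‖ := by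
      rw [← Real.norm_eq_abs]; exact h2
    rw [hyi i] at this
    linarith
  -- Step B: small positive combination
  set δ₂ : ℝ := ε' / (2 * (|c| + 1)) with hδ₂
  have hδ₂pos : 0 < δ₂ := by
    rw [hδ₂]
    have : (0:ℝ) < |c| + 1 := by positivity
    positivity
  obtain ⟨q, hq1, k', hk'⟩ := exists_small_pos α δ₂ hδ₂pos
  -- combine
  set M : ℤ := c + |c| * q with hM
  have hM0 : 0 ≤ M := by
    rw [hM]
    have h1 : (|c| : ℤ) * 1 ≤ |c| * q := by
      apply mul_le_mul_of_nonneg_left _ (abs_nonneg c)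
      exact_mod_cast hq1
    have := neg_abs_le c
    omega
  set m : ℕ := M.toNat with hm
  have hmM : (m : ℝ) = (M : ℝ) := by
    rw [hm]
    exact_mod_cast congrArg (Int.cast : ℤ → ℝ) (Int.toNat_of_nonneg hM0)
  set K : Fin n → ℤ := fun i => k i + |c| * k' i with hK
  have hbound : ∀ i, |(m:ℝ) * α i + (K i : ℝ) - lam i| < ε' := by
    intro i
    have hrw : (m:ℝ) * α i + (K i : ℝ) - lam i
        = ((c:ℝ) * α i + (k i : ℝ) - lam i) + (|c| : ℝ) * ((q:ℝ) * α i + (k' i : ℝ)) := by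
      rw [hmM, hM, hK]
      push_cast
      ring
    rw [hrw]
    have habs : |(|c| : ℝ) * ((q:ℝ) * α i + (k' i : ℝ))| < ε'/2 := by
      rw [abs_mul, abs_of_nonneg (by positivity : (0:ℝ) ≤ (|c| : ℝ))]
      calc (|c| : ℝ) * |(q:ℝ) * α i + (k' i : ℝ)| ≤ (|c| : ℝ) * δ₂ := by
            apply mul_le_mul_of_nonneg_left (hk' i).le (by positivity)
        _ < ε'/2 := by
            rw [hδ₂]
            push_cast
            set a : ℝ := |(c:ℝ)| with ha
            have ha0 : 0 ≤ a := abs_nonneg _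
            have h0 : (0:ℝ) < a + 1 := by linarith
            have key : a * (ε' / (2 * (a + 1))) = ε' * (a / (a + 1)) / 2 := by
              field_simp
            rw [key]
            have hlt : a / (a + 1) < 1 := (div_lt_one h0).mpr (by linarith)
            nlinarith [mul_lt_mul_of_pos_left hlt hε'pos]
    calc |((c:ℝ) * α i + (k i : ℝ) - lam i) + (|c| : ℝ) * ((q:ℝ) * α i + (k' i : ℝ))|
        ≤ |(c:ℝ) * α i + (k i : ℝ) - lam i| + |(|c| : ℝ) * ((q:ℝ) * α i + (k' i : ℝ))| :=
          abs_add_le _ _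
      _ < ε'/2 + ε'/2 := add_lt_add (hcomp i) habs
      _ = ε' := by ring
  refine ⟨m, fun i => ?_⟩
  have hx0 : 0 ≤ (m:ℝ) * α i + (K i : ℝ) := by
    have := hbound i
    rw [abs_lt] at this
    linarith [hε'lam i]
  have hx1 : (m:ℝ) * α i + (K i : ℝ) < 1 := by
    have := hbound i
    rw [abs_lt] at this
    linarith [hε'lam' i]
  have hfr : Int.fract ((m:ℝ) * α i) = (m:ℝ) * α i + (K i : ℝ) := by
    rw [← Int.fract_add_intCast ((m:ℝ) * α i) (K i)]
    exact Int.fract_eq_self.mpr ⟨hx0, hx1⟩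
  rw [hfr]
  exact lt_of_lt_of_le (hbound i) hε'le

end KronAux

open Filter in
/-- under the hypotheses of the main theorem, if `z` is a common fixed point
of `T(p₀), T(p₁), …, T(pₙ)`, then for every `(λ₁, …, λₙ) ∈ [0,1)ⁿ` one has
`T(λ₁p₁ + ⋯ + λₙpₙ)z = z`. -/
theorem fixed_point_unit_cube_combination
    {n : ℕ} {E : Type*} [NormedAddCommGroup E] [NormedSpace ℝ E] [CompleteSpace E]
    (τ : TopologicalSpace E) (hτ : @T2Space E τ)
    (C : Set E) (T : (Fin n → ℝ) → E → E)
    (hmaps : ∀ p : Fin n → ℝ, (∀ i, 0 ≤ p i) → ∀ x ∈ C, T p x ∈ C)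
    (hsemi : ∀ p q : Fin n → ℝ, (∀ i, 0 ≤ p i) → (∀ i, 0 ≤ q i) →
      ∀ x ∈ C, T (p + q) x = T p (T q x))
    (hcont : ∀ x ∈ C,
      @ContinuousOn (Fin n → ℝ) E _ τ (fun p => T p x) {p | ∀ i, 0 ≤ p i})
    (p : Fin n → Fin n → ℝ) (hp : ∀ j i, 0 ≤ p j i)
    (hli : ∀ lam : Fin n → ℝ, ∑ j, lam j • p j = 0 → lam = 0)
    (α : Fin n → ℝ)
    (hα : ∀ (ν₀ : ℤ) (ν : Fin n → ℤ),
      (ν₀ : ℝ) + ∑ i, (ν i : ℝ) * α i = 0 → ν₀ = 0 ∧ ν = 0)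
    (p₀ : Fin n → ℝ) (hp₀ : p₀ = ∑ j, α j • p j) (hp₀pos : ∀ i, 0 ≤ p₀ i)
    (z : E) (hz : z ∈ C) (hz₀ : T p₀ z = z) (hzp : ∀ j, T (p j) z = z) :
    ∀ lam : Fin n → ℝ, (∀ j, lam j ∈ Set.Ico (0 : ℝ) 1) →
      T (∑ j, lam j • p j) z = z := by

  classical
  -- nonnegativity of coordinate sums
  have hsum_nonneg : ∀ (c : Fin n → ℝ), (∀ j, 0 ≤ c j) → ∀ i, 0 ≤ (∑ j, c j • p j) i := by
    intro c hc i
    rw [Finset.sum_apply]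
    exact Finset.sum_nonneg fun j _ => by
      rw [Pi.smul_apply, smul_eq_mul]
      exact mul_nonneg (hc j) (hp j i)
  -- T 0 z = z
  have hT0 : T 0 z = z := by
    have h := hsemi 0 p₀ (fun i => le_refl 0) hp₀pos z hz
    rw [zero_add, hz₀] at h
    exact h.symm
  -- T (m • p₀) z = z
  have hmp₀nn : ∀ m : ℕ, ∀ i, 0 ≤ ((m:ℝ) • p₀) i := by
    intro m i
    rw [Pi.smul_apply, smul_eq_mul]
    exact mul_nonneg (Nat.cast_nonneg m) (hp₀pos i)
  have hS1 : ∀ m : ℕ, T ((m:ℝ) • p₀) z = z := by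
    intro m
    induction m with
    | zero => simpa using hT0
    | succ m ih =>
      have h := hsemi p₀ ((m:ℝ) • p₀) hp₀pos (hmp₀nn m) z hz
      have heq : (((m+1 : ℕ)):ℝ) • p₀ = p₀ + (m:ℝ) • p₀ := by
        push_cast
        rw [add_smul, one_smul, add_comm]
      rw [heq, h, ih, hz₀]
  -- T (∑ k_j p_j) z = z for natural k
  have hS2 : ∀ N : ℕ, ∀ k : Fin n → ℕ, (∑ j, k j) = N →
      T (∑ j, (k j : ℝ) • p j) z = z := by
    intro N
    induction N with
    | zero =>
      intro k hk
      have hk0 : ∀ j, k j = 0 := fun j =>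
        Finset.sum_eq_zero_iff.mp hk j (Finset.mem_univ j)
      have hzero : (∑ j, (k j : ℝ) • p j) = 0 :=
        Finset.sum_eq_zero fun j _ => by rw [hk0 j]; simp
      rw [hzero]; exact hT0
    | succ N ih =>
      intro k hk
      have hex : ∃ j₀, k j₀ ≠ 0 := by
        by_contra hno
        push_neg at hno
        rw [Finset.sum_eq_zero (fun j _ => hno j)] at hk
        omega
      obtain ⟨j₀, hj₀⟩ := hex
      set k' : Fin n → ℕ := Function.update k j₀ (k j₀ - 1) with hk'def
      have hsum' : (∑ j, k' j) = N := by
        rw [hk'def, Finset.sum_update_of_mem (Finset.mem_univ j₀)]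
        have herase := Finset.add_sum_erase Finset.univ k (Finset.mem_univ j₀)
        rw [Finset.sdiff_singleton_eq_erase]
        omega
      have hstep : (∑ j, (k j : ℝ) • p j) = p j₀ + ∑ j, (k' j : ℝ) • p j := by
        have hkj : ∀ j, (k j : ℝ) = (k' j : ℝ) + (if j = j₀ then 1 else 0) := by
          intro j
          by_cases h : j = j₀
          · subst h
            rw [hk'def, Function.update_self, if_pos rfl]
            have hge : 1 ≤ k j := Nat.one_le_iff_ne_zero.mpr hj₀
            push_cast [Nat.cast_sub hge]
            ring
          · rw [hk'def, Function.update_of_ne h, if_neg h, add_zero]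
        calc ∑ j, (k j : ℝ) • p j
            = ∑ j, (((k' j : ℝ) + (if j = j₀ then 1 else 0)) • p j) :=
              Finset.sum_congr rfl fun j _ => by rw [← hkj j]
          _ = (∑ j, (k' j : ℝ) • p j) + ∑ j, (if j = j₀ then (1:ℝ) else 0) • p j := by
              rw [← Finset.sum_add_distrib]
              exact Finset.sum_congr rfl fun j _ => add_smul _ _ _
          _ = (∑ j, (k' j : ℝ) • p j) + p j₀ := by
              congr 1
              have : ∀ j, (if j = j₀ then (1:ℝ) else 0) • p j
                  = if j = j₀ then p j else 0 := by
                intro j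
                by_cases h : j = j₀ <;> simp [h]
              rw [Finset.sum_congr rfl fun j _ => this j, Finset.sum_ite_eq']
              simp
          _ = p j₀ + ∑ j, (k' j : ℝ) • p j := add_comm _ _
      rw [hstep]
      have hnn : ∀ i, 0 ≤ (∑ j, (k' j : ℝ) • p j) i :=
        hsum_nonneg _ (fun j => Nat.cast_nonneg _)
      rw [hsemi (p j₀) (∑ j, (k' j : ℝ) • p j) (hp j₀) hnn z hz, ih k' hsum', hzp j₀]
  -- T (∑ fract(m α_j) p_j) z = z
  have hS3 : ∀ m : ℕ, T (∑ j, Int.fract ((m:ℝ) * α j) • p j) z = z := by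
    intro m
    set Fm : Fin n → ℝ := fun j => Int.fract ((m:ℝ) * α j) with hFm
    set kplus : Fin n → ℕ := fun j => (⌊(m:ℝ) * α j⌋).toNat with hkp
    set kminus : Fin n → ℕ := fun j => (-⌊(m:ℝ) * α j⌋).toNat with hkm
    have hAB : (m:ℝ) • p₀ + ∑ j, (kminus j : ℝ) • p j
        = (∑ j, Fm j • p j) + ∑ j, (kplus j : ℝ) • p j := by
      rw [hp₀, Finset.smul_sum]
      rw [← Finset.sum_add_distrib, ← Finset.sum_add_distrib]
      refine Finset.sum_congr rfl fun j _ => ?_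
      rw [smul_smul, ← add_smul, ← add_smul]
      congr 1
      have hsplit : (m:ℝ) * α j = Fm j + (⌊(m:ℝ) * α j⌋ : ℝ) := by
        rw [hFm]
        exact (Int.fract_add_floor ((m:ℝ) * α j)).symm
      have hZ : ((⌊(m:ℝ) * α j⌋).toNat : ℤ) = ⌊(m:ℝ) * α j⌋ + ((-⌊(m:ℝ) * α j⌋).toNat : ℤ) := by
        omega
      have hR : ((kplus j : ℕ) : ℝ) = (⌊(m:ℝ) * α j⌋ : ℝ) + ((kminus j : ℕ) : ℝ) := by
        rw [hkp, hkm]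
        exact_mod_cast congrArg (Int.cast : ℤ → ℝ) hZ
      rw [hsplit, hR]
      ring
    have hFnn : ∀ i, 0 ≤ (∑ j, Fm j • p j) i :=
      hsum_nonneg _ (fun j => Int.fract_nonneg _)
    have hkpnn : ∀ i, 0 ≤ (∑ j, ((kplus j : ℕ) : ℝ) • p j) i :=
      hsum_nonneg _ (fun j => Nat.cast_nonneg _)
    have hkmnn : ∀ i, 0 ≤ (∑ j, ((kminus j : ℕ) : ℝ) • p j) i :=
      hsum_nonneg _ (fun j => Nat.cast_nonneg _)
    have h1 := hsemi (∑ j, Fm j • p j) (∑ j, ((kplus j : ℕ) : ℝ) • p j) hFnn hkpnn z hz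
    rw [hS2 (∑ j, kplus j) kplus rfl] at h1
    have h2 := hsemi ((m:ℝ) • p₀) (∑ j, ((kminus j : ℕ) : ℝ) • p j) (hmp₀nn m) hkmnn z hz
    rw [hS2 (∑ j, kminus j) kminus rfl, hS1 m] at h2
    rw [← hAB, h2] at h1
    exact h1.symm
  -- closedness under limits
  have hclosed : ∀ (l : ℕ → Fin n → ℝ) (lam : Fin n → ℝ),
      (∀ k j, 0 ≤ l k j) → (∀ k, T (∑ j, l k j • p j) z = z) → (∀ j, 0 ≤ lam j) →
      Tendsto l atTop (nhds lam) → T (∑ j, lam j • p j) z = z := by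
    intro l lam hlnn hlz hlamnn hltend
    have hQmem : (∑ j, lam j • p j) ∈ {q : Fin n → ℝ | ∀ i, 0 ≤ q i} :=
      hsum_nonneg lam hlamnn
    have hcw := (hcont z hz) _ hQmem
    have hmap : Continuous (fun c : Fin n → ℝ => ∑ j, c j • p j) := by
      apply continuous_finset_sum
      intro j _
      exact (continuous_apply j).smul continuous_const
    have hqtend : Tendsto (fun k => ∑ j, l k j • p j) atTop
        (nhds (∑ j, lam j • p j)) := (hmap.tendsto lam).comp hltend
    have hqtendW : Tendsto (fun k => ∑ j, l k j • p j) atTop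
        (nhdsWithin (∑ j, lam j • p j) {q | ∀ i, 0 ≤ q i}) :=
      tendsto_nhdsWithin_of_tendsto_nhds_of_eventually_within _ hqtend
        (Eventually.of_forall fun k => hsum_nonneg (l k) (hlnn k))
    have hTtend : Tendsto (fun k => T (∑ j, l k j • p j) z) atTop
        (@nhds E τ (T (∑ j, lam j • p j) z)) := hcw.tendsto.comp hqtendW
    have hfun : (fun k => T (∑ j, l k j • p j) z) = fun _ : ℕ => z :=
      funext fun k => hlz k
    rw [hfun] at hTtend
    have hconst : Tendsto (fun _ : ℕ => z) atTop (@nhds E τ z) :=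
      @tendsto_const_nhds E τ ℕ z atTop
    exact @tendsto_nhds_unique E ℕ τ hτ _ atTop _ _ _ hTtend hconst
  -- interior points
  have hinterior : ∀ lam : Fin n → ℝ, (∀ j, lam j ∈ Set.Ioo (0:ℝ) 1) →
      T (∑ j, lam j • p j) z = z := by
    intro lam hlam
    have hchoice : ∀ k : ℕ, ∃ m : ℕ, ∀ i,
        |Int.fract ((m:ℝ) * α i) - lam i| < 1/(k+1) :=
      fun k => KronAux.fract_approx α hα lam hlam (1/(k+1)) (by positivity)
    choose mseq hmseq using hchoice
    apply hclosed (fun k j => Int.fract ((mseq k : ℝ) * α j)) lam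
      (fun k j => Int.fract_nonneg _) (fun k => hS3 (mseq k)) (fun j => (hlam j).1.le)
    rw [tendsto_pi_nhds]
    intro j
    rw [tendsto_iff_dist_tendsto_zero]
    apply squeeze_zero (fun k => dist_nonneg) (fun k => ?_)
      tendsto_one_div_add_atTop_nhds_zero_nat
    rw [Real.dist_eq]
    exact (hmseq k j).le
  -- conclusion
  intro lam hlam
  apply hclosed (fun k j => max (lam j) (1/(k+2))) lam
  · intro k j
    exact le_max_of_le_right (by positivity)
  · intro k
    apply hinterior
    intro j
    constructor
    · exact lt_of_lt_of_le (by positivity) (le_max_right _ _)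
    · apply max_lt (hlam j).2
      rw [div_lt_one (by positivity : (0:ℝ) < (k:ℝ)+2)]
      linarith [Nat.cast_nonneg (α := ℝ) k]
  · exact fun j => (hlam j).1
  · rw [tendsto_pi_nhds]
    intro j
    rw [tendsto_iff_dist_tendsto_zero]
    apply squeeze_zero (fun k => dist_nonneg) (fun k => ?_)
      tendsto_one_div_add_atTop_nhds_zero_nat
    have h1 : lam j ≤ max (lam j) (1/((k:ℝ)+2)) := le_max_left _ _
    have hk12 : 1/((k:ℝ)+2) ≤ 1/((k:ℝ)+1) :=
      one_div_le_one_div_of_le (by positivity) (by linarith)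
    have h2 : max (lam j) (1/((k:ℝ)+2)) ≤ lam j + 1/((k:ℝ)+1) := by
      apply max_le
      · have : (0:ℝ) < 1/((k:ℝ)+1) := by positivity
        linarith
      · have := (hlam j).1
        linarith
    rw [Real.dist_eq, abs_of_nonneg (by linarith : (0:ℝ) ≤ max (lam j) (1/((k:ℝ)+2)) - lam j)]
    linarith
end

section
/- Let {T(p) : p ∈ ℝ₊ⁿ} be an n-parameter τ-continuous semigroup of mappings on a subset C of a Banach space E (τ a Hausdorff topology on E). Let p₁, …, pₙ ∈ ℝ₊ⁿ be linearly independent in the usual sense, let α₁, …, αₙ ∈ ℝ be such that {1, α₁, …, αₙ} is linearly independent over ℚ, suppose p₀ := α₁p₁ + ⋯ + αₙpₙ ∈ ℝ₊ⁿ, and let z ∈ C satisfy T(p₀)z = T(p₁)z = ⋯ = T(pₙ)z = z. Then for every (λ₁, λ₂, …, λₙ) ∈ [0,∞)ⁿ, one has T(λ₁p₁ + λ₂p₂ + ⋯ + λₙpₙ)z = z. -/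
open Real Finset Filter


noncomputable def ee (x : ℝ) : ℂ := Complex.exp ((2 * π * x : ℝ) * Complex.I)

lemma ee_add (x y : ℝ) : ee (x + y) = ee x * ee y := by
  rw [ee, ee, ee, ← Complex.exp_add]
  congr 1
  push_cast
  ring

lemma ee_norm (x : ℝ) : ‖ee x‖ = 1 := by
  rw [ee]
  exact Complex.norm_exp_ofReal_mul_I _

lemma ee_ne_zero (x : ℝ) : ee x ≠ 0 := by
  intro h
  have := ee_norm x
  rw [h] at this
  simp at this

lemma ee_pow (x : ℝ) (k : ℕ) : ee x ^ k = ee (k * x) := by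
  rw [ee, ee, ← Complex.exp_nat_mul]
  congr 1
  push_cast
  ring

lemma ee_eq_one_iff (x : ℝ) : ee x = 1 ↔ ∃ k : ℤ, x = k := by
  rw [ee, Complex.exp_eq_one_iff]
  have hπ : (0:ℝ) < π := Real.pi_pos
  constructor
  · rintro ⟨k, hk⟩
    refine ⟨k, ?_⟩
    have hI : (Complex.I : ℂ) ≠ 0 := Complex.I_ne_zero
    have h2 : ((2 * π * x : ℝ) : ℂ) = ((k * (2 * π) : ℝ) : ℂ) :=
      mul_right_cancel₀ hI (by push_cast at hk ⊢; linear_combination hk)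
    have h3 : (2 * π * x : ℝ) = k * (2 * π) := by exact_mod_cast h2
    have h4 : (2*π) * x = (2*π) * k := by linarith
    exact mul_left_cancel₀ (by positivity) h4
  · rintro ⟨k, hk⟩
    exact ⟨k, by rw [hk]; push_cast; ring⟩

lemma ee_sum {ι : Type*} (s : Finset ι) (f : ι → ℝ) : ee (∑ i ∈ s, f i) = ∏ i ∈ s, ee (f i) := by
  classical
  induction s using Finset.induction with
  | empty => simp [ee]
  | insert _ _ h ih => rw [Finset.sum_insert h, Finset.prod_insert h, ee_add, ih]

lemma one_add_ee_norm (x : ℝ) : ‖1 + ee x‖ = 2 * |Real.cos (π * x)| := by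
  have hhalf : ee (x/2) = Complex.exp ((π * x : ℝ) * Complex.I) := by
    rw [ee]; norm_num; ring_nf
  have hsq : ee x = ee (x/2) * ee (x/2) := by rw [← ee_add]; ring_nf
  have hkey : (1 : ℂ) + ee x = ee (x/2) * (2 * Complex.cos ((π * x : ℝ))) := by
    rw [hsq, hhalf, Complex.cos, ← Complex.exp_add]
    set a := ((π * x : ℝ) : ℂ) * Complex.I with ha
    have h1 : Complex.exp a * Complex.exp (-a) = 1 := by rw [← Complex.exp_add]; simp
    have h2 : Complex.exp a * Complex.exp a = Complex.exp (a + a) := by rw [← Complex.exp_add]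
    have hneg : Complex.exp (-((π * x : ℝ) : ℂ) * Complex.I) = Complex.exp (-a) := by
      rw [ha]; ring_nf
    rw [hneg]
    calc (1 : ℂ) + Complex.exp (a + a)
        = Complex.exp a * Complex.exp a + Complex.exp a * Complex.exp (-a) := by
          rw [h1, h2]; ring
      _ = Complex.exp a * (2 * ((Complex.exp a + Complex.exp (-a)) / 2)) := by ring
  rw [hkey, norm_mul, ee_norm, one_mul, ← Complex.ofReal_cos]
  rw [show ((2:ℂ) * (Real.cos (π*x) : ℂ)) = ((2 * Real.cos (π*x) : ℝ) : ℂ) by push_cast; ring]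
  rw [Complex.norm_real, Real.norm_eq_abs, abs_mul]
  norm_num


lemma abs_cos_pi_mul_le {β ε' : ℝ} (hε0 : 0 < ε') (hε2 : ε' ≤ 1/2)
    (hd : ε' ≤ |β - round β|) : |Real.cos (π * β)| ≤ Real.cos (π * ε') := by
  have hπ : (0:ℝ) < π := Real.pi_pos
  set d : ℝ := β - round β with hdd
  have hd2 : |d| ≤ 1/2 := abs_sub_round β
  have h1 : Real.cos (π * β) = (-1)^(round β : ℤ) * Real.cos (π * d) := by
    have he : π * β = π * d + (round β : ℝ) * π := by rw [hdd]; ring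
    rw [he, Real.cos_add_int_mul_pi]
  have h2 : |Real.cos (π * β)| = |Real.cos (π * d)| := by
    rw [h1, abs_mul]
    have : |((-1 : ℝ)) ^ (round β)| = 1 := by
      rcases Int.even_or_odd (round β) with h | h
      · rw [h.neg_one_zpow]; simp
      · rw [Odd.neg_one_zpow h]; simp
    rw [this, one_mul]
  have h3 : |Real.cos (π * d)| = Real.cos (π * |d|) := by
    have hcabs : Real.cos (π * |d|) = Real.cos (π * d) := by
      rcases abs_cases d with ⟨h, _⟩ | ⟨h, _⟩
      · rw [h]
      · rw [h]; rw [show π * -d = -(π * d) by ring, Real.cos_neg]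
    rw [hcabs]
    have hnn : 0 ≤ Real.cos (π * d) := by
      apply Real.cos_nonneg_of_mem_Icc
      constructor
      · nlinarith [abs_nonneg d, neg_abs_le d]
      · nlinarith [le_abs_self d]
    rw [abs_of_nonneg hnn]
  rw [h2, h3]
  apply Real.cos_le_cos_of_nonneg_of_le_pi (by positivity) (by nlinarith) (by nlinarith)

set_option maxHeartbeats 2000000 in
lemma kron {n : ℕ} (θ : Fin n → ℝ)
    (hθ : ∀ (ν₀ : ℤ) (ν : Fin n → ℤ), (ν₀:ℝ) + ∑ i, (ν i:ℝ) * θ i = 0 → ν₀ = 0 ∧ ν = 0)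
    (a : Fin n → ℝ) {ε : ℝ} (hε : 0 < ε) :
    ∃ t : ℕ, ∀ j, |(t:ℝ) * θ j - a j - round ((t:ℝ) * θ j - a j)| < ε := by
  classical
  have hπ : (0:ℝ) < π := Real.pi_pos
  set ε' : ℝ := min ε (1/2) with hε'def
  have hε'0 : 0 < ε' := lt_min hε (by norm_num)
  have hε'2 : ε' ≤ 1/2 := min_le_right _ _
  have hε'ε : ε' ≤ ε := min_le_left _ _
  set c : ℝ := Real.cos (π * ε') with hcdef
  have hc0 : 0 ≤ c := by
    apply Real.cos_nonneg_of_mem_Icc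
    constructor <;> nlinarith
  have hc1 : c < 1 := by
    have h := Real.cos_lt_cos_of_nonneg_of_le_pi (x := 0) (y := π * ε') le_rfl
      (by nlinarith) (by positivity)
    rw [Real.cos_zero] at h
    exact h
  -- choose s
  obtain ⟨s, hs1, hsmall⟩ : ∃ s : ℕ, 1 ≤ s ∧ ((2*s+1:ℝ))^n * c^(2*s) < 1/2 := by
    have hsum : Summable (fun s : ℕ => (s:ℝ)^n * (c^2)^s) :=
      summable_pow_mul_geometric_of_norm_lt_one n
        (by rw [Real.norm_eq_abs, abs_of_nonneg (by positivity)]; nlinarith)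
    have htend := hsum.tendsto_atTop_zero
    have htend3 : Tendsto (fun s : ℕ => (3:ℝ)^n * ((s:ℝ)^n * (c^2)^s)) atTop (nhds 0) := by
      have := htend.const_mul ((3:ℝ)^n)
      simpa using this
    have hev : ∀ᶠ s : ℕ in atTop, (3:ℝ)^n * ((s:ℝ)^n * (c^2)^s) < 1/2 :=
      htend3.eventually_lt_const (by norm_num)
    obtain ⟨s, hs1, hs2⟩ := (hev.and (eventually_ge_atTop 1)).exists
    refine ⟨s, hs2, lt_of_le_of_lt ?_ hs1⟩
    have h1 : ((2*s+1:ℝ))^n ≤ (3:ℝ)^n * (s:ℝ)^n := by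
      rw [← mul_pow]
      apply pow_le_pow_left₀ (by positivity)
      push_cast
      have : (1:ℝ) ≤ (s:ℝ) := by exact_mod_cast hs2
      nlinarith
    have h2 : c^(2*s) = (c^2)^s := by rw [← pow_mul]
    rw [h2]
    calc ((2*s+1:ℝ))^n * (c^2)^s ≤ ((3:ℝ)^n * (s:ℝ)^n) * (c^2)^s := by
          apply mul_le_mul_of_nonneg_right h1 (by positivity)
      _ = (3:ℝ)^n * ((s:ℝ)^n * (c^2)^s) := by ring
  set P : ℕ := 2*s with hPdef
  set box : Finset (Fin n → ℕ) := Fintype.piFinset (fun _ => Finset.range (P+1)) with hbox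
  set m₀ : Fin n → ℕ := fun _ => s with hm₀def
  have hm₀ : m₀ ∈ box := by
    rw [hbox, Fintype.mem_piFinset]
    intro j
    simp [hm₀def, hPdef]
    omega
  set cc : (Fin n → ℕ) → ℝ := fun m => ∏ j, ((P.choose (m j) : ℝ)) with hcc
  set w : (Fin n → ℕ) → ℂ := fun m => ee (∑ j, (m j : ℝ) * θ j) with hw
  set dd : (Fin n → ℕ) → ℂ := fun m => ee (-∑ j, (m j : ℝ) * a j) with hdd
  set G : ℕ → ℂ := fun t => ∏ j, (1 + ee ((t:ℝ) * θ j - a j)) ^ P with hG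
  -- expansion
  have hexp : ∀ t : ℕ, G t = ∑ m ∈ box, (cc m : ℂ) * dd m * (w m)^t := by
    intro t
    have hfac : ∀ j, (1 + ee ((t:ℝ) * θ j - a j)) ^ P
        = ∑ r ∈ Finset.range (P+1), (P.choose r : ℂ) * ee ((r:ℝ) * ((t:ℝ)*θ j - a j)) := by
      intro j
      rw [add_comm (1:ℂ), add_pow]
      apply Finset.sum_congr rfl
      intro r _
      rw [one_pow, ee_pow]
      ring
    rw [hG]
    simp only [hfac]
    rw [Finset.prod_univ_sum]
    apply Finset.sum_congr rfl
    intro m hm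
    rw [Finset.prod_mul_distrib]
    have h1 : ∏ j, ee ((m j : ℝ) * ((t:ℝ)*θ j - a j))
        = ee (∑ j, (m j:ℝ) * ((t:ℝ)*θ j - a j)) := (ee_sum _ _).symm
    rw [h1]
    have h2 : (∑ j, (m j:ℝ) * ((t:ℝ)*θ j - a j))
        = (-∑ j, (m j : ℝ) * a j) + (t:ℝ) * (∑ j, (m j : ℝ) * θ j) := by
      rw [Finset.mul_sum, ← Finset.sum_neg_distrib, ← Finset.sum_add_distrib]
      apply Finset.sum_congr rfl
      intro j _
      ring
    rw [h2, ee_add, ← ee_pow]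
    rw [hcc, hdd, hw]
    push_cast
    ring
  -- frequencies
  set u : (Fin n → ℕ) → ℂ := fun m => ee (∑ j, ((m j : ℝ) - s) * θ j) with hudef
  have hwu : ∀ m : Fin n → ℕ, w m * ee (-∑ j, (s:ℝ) * θ j) = u m := by
    intro m
    rw [hw, hudef, ← ee_add]
    congr 1
    rw [← Finset.sum_neg_distrib, ← Finset.sum_add_distrib]
    apply Finset.sum_congr rfl
    intro j _
    ring
  have hunorm : ∀ m : Fin n → ℕ, ‖u m‖ = 1 := fun m => ee_norm _
  have hune : ∀ m ∈ box, m ≠ m₀ → u m ≠ 1 := by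
    intro m hm hmne h1
    rw [hudef] at h1
    obtain ⟨k, hk⟩ := (ee_eq_one_iff _).1 h1
    have := hθ (-k) (fun j => (m j : ℤ) - s) (by push_cast; rw [← hk]; ring)
    apply hmne
    funext j
    have := congrFun this.2 j
    simp only [Pi.zero_apply, sub_eq_zero] at this
    rw [hm₀def]
    exact_mod_cast this
  have hu0 : u m₀ = 1 := by
    have : (∑ j, ((m₀ j : ℝ) - s) * θ j) = 0 := by
      rw [hm₀def]
      simp
    rw [hudef]
    simp only [this]
    rw [show (0:ℝ) = ((0:ℤ):ℝ) by norm_num, ee_eq_one_iff]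
    exact ⟨0, by norm_num⟩
  -- positivity of central coefficient
  have hccpos : ∀ m : Fin n → ℕ, m ∈ box → 0 < cc m := by
    intro m hm
    rw [hcc]
    apply Finset.prod_pos
    intro j _
    have : m j ≤ P := by
      rw [hbox, Fintype.mem_piFinset] at hm
      have := hm j
      rw [Finset.mem_range] at this
      omega
    exact_mod_cast Nat.choose_pos this
  set K : ℝ := ∑ m ∈ box.erase m₀, cc m * (2 / ‖u m - 1‖) with hKdef
  have hK0 : 0 ≤ K := by
    apply Finset.sum_nonneg
    intro m hm
    apply mul_nonneg (le_of_lt (hccpos m (Finset.mem_of_mem_erase hm)))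
    positivity
  obtain ⟨N, hNgt⟩ := exists_nat_gt (2*K/(cc m₀))
  have hc₀pos : 0 < cc m₀ := hccpos m₀ hm₀
  have hKN : K < (N:ℝ) * cc m₀ / 2 := by
    rw [div_lt_iff₀ hc₀pos] at hNgt
    nlinarith
  -- the sum S_N
  set e₀ : ℂ := ee (-∑ j, (s:ℝ) * θ j) with he₀
  set SN : ℂ := ∑ t ∈ Finset.range N, G t * e₀^t with hSN
  have hSN2 : SN = ∑ m ∈ box, (cc m : ℂ) * dd m * (∑ t ∈ Finset.range N, (u m)^t) := by
    rw [hSN]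
    have : ∀ t ∈ Finset.range N, G t * e₀^t
        = ∑ m ∈ box, (cc m : ℂ) * dd m * (u m)^t := by
      intro t _
      rw [hexp t, Finset.sum_mul]
      apply Finset.sum_congr rfl
      intro m _
      rw [mul_assoc, ← mul_pow, hwu]
    rw [Finset.sum_congr rfl this, Finset.sum_comm]
    apply Finset.sum_congr rfl
    intro m _
    rw [← Finset.mul_sum]
  -- lower bound on ‖SN‖
  have hmain : (cc m₀ : ℂ) * dd m₀ * (∑ t ∈ Finset.range N, (u m₀)^t)
      = (cc m₀ : ℂ) * dd m₀ * N := by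
    rw [hu0]
    simp
  have hgeom : ∀ m ∈ box.erase m₀, ‖∑ t ∈ Finset.range N, (u m)^t‖ ≤ 2 / ‖u m - 1‖ := by
    intro m hm
    have hne : u m ≠ 1 := hune m (Finset.mem_of_mem_erase hm) (Finset.ne_of_mem_erase hm)
    rw [geom_sum_eq hne, norm_div]
    have hnum : ‖u m ^ N - 1‖ ≤ 2 := by
      calc ‖u m ^ N - 1‖ ≤ ‖u m ^ N‖ + ‖(1:ℂ)‖ := norm_sub_le _ _
        _ = 2 := by rw [norm_pow, hunorm]; norm_num
    have hden : 0 < ‖u m - 1‖ := by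
      rw [norm_pos_iff]
      exact sub_ne_zero.2 hne
    gcongr
  -- split off the main term
  have hsplit : SN = (cc m₀:ℂ) * dd m₀ * (N:ℂ)
      + ∑ m ∈ box.erase m₀, (cc m:ℂ) * dd m * (∑ t ∈ Finset.range N, (u m)^t) := by
    rw [hSN2, ← Finset.add_sum_erase box _ hm₀, hmain]
  have hddnorm : ∀ m : Fin n → ℕ, ‖dd m‖ = 1 := fun m => ee_norm _
  have hccnorm : ∀ m ∈ box, ‖((cc m : ℝ) : ℂ)‖ = cc m := by
    intro m hm
    rw [Complex.norm_real, Real.norm_eq_abs, abs_of_pos (hccpos m hm)]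
  have hrest : ‖∑ m ∈ box.erase m₀, (cc m:ℂ) * dd m * (∑ t ∈ Finset.range N, (u m)^t)‖ ≤ K := by
    apply (norm_sum_le _ _).trans
    rw [hKdef]
    apply Finset.sum_le_sum
    intro m hm
    rw [norm_mul, norm_mul, hccnorm m (Finset.mem_of_mem_erase hm), hddnorm, mul_one]
    exact mul_le_mul_of_nonneg_left (hgeom m hm) (le_of_lt (hccpos m (Finset.mem_of_mem_erase hm)))
  have hnormmain : ‖(cc m₀:ℂ) * dd m₀ * (N:ℂ)‖ = cc m₀ * N := by
    rw [norm_mul, norm_mul, hccnorm m₀ hm₀, hddnorm, mul_one]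
    congr 1
    rw [Complex.norm_natCast]
  have hlow : (N:ℝ) * cc m₀ - K ≤ ‖SN‖ := by
    rw [hsplit]
    set A := (cc m₀:ℂ) * dd m₀ * (N:ℂ)
    set B := ∑ m ∈ box.erase m₀, (cc m:ℂ) * dd m * (∑ t ∈ Finset.range N, (u m)^t)
    have h3 : ‖A‖ ≤ ‖A + B‖ + ‖B‖ := by
      have := norm_sub_le (A + B) B
      simpa using this
    have h4 : ‖A‖ = cc m₀ * N := hnormmain
    linarith
  have hupper : ‖SN‖ ≤ ∑ t ∈ Finset.range N, ‖G t‖ := by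
    rw [hSN]
    apply (norm_sum_le _ _).trans
    apply Finset.sum_le_sum
    intro t _
    rw [norm_mul, norm_pow, he₀, ee_norm]
    simp
  have hsumG : ∑ t ∈ Finset.range N, (cc m₀/2) < ∑ t ∈ Finset.range N, ‖G t‖ := by
    rw [Finset.sum_const, Finset.card_range, nsmul_eq_mul]
    nlinarith
  obtain ⟨t, ht, hGt⟩ := Finset.exists_lt_of_sum_lt hsumG
  refine ⟨t, fun j => ?_⟩
  by_contra hcon
  push_neg at hcon
  have hn1 : 0 < n := j.pos
  set β : Fin n → ℝ := fun j' => (t:ℝ) * θ j' - a j' with hβ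
  have hβc : |Real.cos (π * β j)| ≤ c := abs_cos_pi_mul_le hε'0 hε'2 (le_trans hε'ε hcon)
  have hGnorm : ‖G t‖ = ∏ j', ‖1 + ee (β j')‖^P := by
    rw [hG]
    rw [norm_prod]
    simp [norm_pow]
    rfl
  have hfle2 : ∀ j', ‖1 + ee (β j')‖ ≤ 2 := by
    intro j'
    calc ‖1 + ee (β j')‖ ≤ ‖(1:ℂ)‖ + ‖ee (β j')‖ := norm_add_le _ _
      _ = 2 := by rw [ee_norm]; norm_num
  set g : Fin n → ℝ := fun j' => if j' = j then (2*c)^P else 2^P with hg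
  have hgle : ∀ j' ∈ Finset.univ, ‖1 + ee (β j')‖^P ≤ g j' := by
    intro j' _
    by_cases hjj : j' = j
    · subst hjj
      have hgj : g j' = (2*c)^P := by simp [hg]
      rw [hgj]
      apply pow_le_pow_left₀ (norm_nonneg _)
      rw [one_add_ee_norm]
      nlinarith
    · have hgj : g j' = 2^P := by simp [hg, hjj]
      rw [hgj]
      exact pow_le_pow_left₀ (norm_nonneg _) (hfle2 j') P
  have hprodg : ∏ j', g j' = (2*c)^P * ((2:ℝ)^P)^(n-1) := by
    rw [← Finset.mul_prod_erase Finset.univ g (Finset.mem_univ j)]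
    congr 1
    · rw [hg]; simp
    · rw [Finset.prod_congr rfl (fun j' hj' => ?_), Finset.prod_const,
        Finset.card_erase_of_mem (Finset.mem_univ j), Finset.card_univ, Fintype.card_fin]
      rw [hg]
      simp [Finset.ne_of_mem_erase hj']
  have hband : ‖G t‖ ≤ (2:ℝ)^(P*n) * c^P := by
    rw [hGnorm]
    calc ∏ j', ‖1 + ee (β j')‖^P ≤ ∏ j', g j' :=
          Finset.prod_le_prod (fun j' _ => by positivity) hgle
      _ = (2*c)^P * ((2:ℝ)^P)^(n-1) := hprodg
      _ = (2:ℝ)^(P*n) * c^P := by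
          have hnn : n = (n-1) + 1 := (Nat.succ_pred_eq_of_pos hn1).symm
          have hPP : (2:ℝ)^P * (2:ℝ)^(P*(n-1)) = (2:ℝ)^(P*n) := by
            rw [← pow_add]
            congr 1
            conv_rhs => rw [hnn]
            rw [Nat.mul_succ]
            omega
          rw [mul_pow, ← pow_mul]
          calc (2:ℝ)^P * c^P * (2:ℝ)^(P*(n-1))
              = ((2:ℝ)^P * (2:ℝ)^(P*(n-1))) * c^P := by ring
            _ = (2:ℝ)^(P*n) * c^P := by rw [hPP]
  -- binomial bound
  have hbinnat : 2^P ≤ (2*s+1) * P.choose s := by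
    calc 2^P = ∑ i ∈ Finset.range (P+1), P.choose i := (Nat.sum_range_choose P).symm
      _ ≤ (P+1) • P.choose (P/2) :=
          Finset.sum_le_card_nsmul _ _ _ (fun i _ => Nat.choose_le_middle i P)
            |>.trans_eq (by rw [Finset.card_range])
      _ = (2*s+1) * P.choose s := by
          rw [smul_eq_mul, hPdef]
          congr 2
          omega
  have hbin : (2:ℝ)^P ≤ (2*(s:ℝ)+1) * (P.choose s : ℝ) := by exact_mod_cast hbinnat
  have hc₀eq : cc m₀ = ((P.choose s : ℝ))^n := by
    rw [hcc, hm₀def]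
    simp
  have hBpos : (0:ℝ) < 2*(s:ℝ)+1 := by positivity
  have h5 : ((2:ℝ)^P / (2*(s:ℝ)+1))^n ≤ cc m₀ := by
    rw [hc₀eq]
    apply pow_le_pow_left₀ (by positivity)
    rw [div_le_iff₀ hBpos]
    linarith
  have h6 : ((2:ℝ)^P / (2*(s:ℝ)+1))^n = (2:ℝ)^(P*n) / (2*(s:ℝ)+1)^n := by
    rw [div_pow, ← pow_mul]
  -- final contradiction
  have h2Pn : (0:ℝ) < (2:ℝ)^(P*n) := by positivity
  have hBn : (0:ℝ) < (2*(s:ℝ)+1)^n := by positivity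
  have h7 : (2:ℝ)^(P*n) / (2*(s:ℝ)+1)^n / 2 < (2:ℝ)^(P*n) * c^P := by
    calc (2:ℝ)^(P*n) / (2*(s:ℝ)+1)^n / 2 ≤ cc m₀ / 2 := by
          rw [← h6]
          linarith
      _ < ‖G t‖ := hGt
      _ ≤ (2:ℝ)^(P*n) * c^P := hband
  have h8 : (1:ℝ)/2 < (2*(s:ℝ)+1)^n * c^P := by
    rw [div_div] at h7
    rw [div_lt_iff₀ (by positivity)] at h7
    have h9 : (2:ℝ)^(P*n) * 1 < (2:ℝ)^(P*n) * (((2*(s:ℝ)+1)^n * c^P) * 2) := by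
      calc (2:ℝ)^(P*n) * 1 = (2:ℝ)^(P*n) := by ring
        _ < (2:ℝ)^(P*n) * c ^ P * ((2*(s:ℝ)+1)^n * 2) := h7
        _ = (2:ℝ)^(P*n) * (((2*(s:ℝ)+1)^n * c^P) * 2) := by ring
    have := lt_of_mul_lt_mul_left h9 h2Pn.le
    linarith
  have hsmall' : (2*(s:ℝ)+1)^n * c^P < 1/2 := by
    have : ((2*(s:ℕ):ℝ)+1) = 2*(s:ℝ)+1 := by push_cast; ring
    calc (2*(s:ℝ)+1)^n * c^P = ((2*s:ℕ)+1:ℝ)^n * c^(2*s) := by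
          rw [hPdef]; push_cast; ring
      _ < 1/2 := by exact_mod_cast hsmall
  linarith

set_option maxHeartbeats 1000000 in
/-- under the hypotheses of the main theorem, if `z` is a common fixed point
of `T(p₀), T(p₁), …, T(pₙ)`, then for every `(λ₁, …, λₙ) ∈ [0,∞)ⁿ` one has
`T(λ₁p₁ + ⋯ + λₙpₙ)z = z`. -/
theorem fixed_point_nonneg_combination
    {n : ℕ} {E : Type*} [NormedAddCommGroup E] [NormedSpace ℝ E] [CompleteSpace E]
    (τ : TopologicalSpace E) (hτ : @T2Space E τ)
    (C : Set E) (T : (Fin n → ℝ) → E → E)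
    (hmaps : ∀ p : Fin n → ℝ, (∀ i, 0 ≤ p i) → ∀ x ∈ C, T p x ∈ C)
    (hsemi : ∀ p q : Fin n → ℝ, (∀ i, 0 ≤ p i) → (∀ i, 0 ≤ q i) →
      ∀ x ∈ C, T (p + q) x = T p (T q x))
    (hcont : ∀ x ∈ C,
      @ContinuousOn (Fin n → ℝ) E _ τ (fun p => T p x) {p | ∀ i, 0 ≤ p i})
    (p : Fin n → Fin n → ℝ) (hp : ∀ j i, 0 ≤ p j i)
    (hli : ∀ lam : Fin n → ℝ, ∑ j, lam j • p j = 0 → lam = 0)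
    (α : Fin n → ℝ)
    (hα : ∀ (ν₀ : ℤ) (ν : Fin n → ℤ),
      (ν₀ : ℝ) + ∑ i, (ν i : ℝ) * α i = 0 → ν₀ = 0 ∧ ν = 0)
    (p₀ : Fin n → ℝ) (hp₀ : p₀ = ∑ j, α j • p j) (hp₀pos : ∀ i, 0 ≤ p₀ i)
    (z : E) (hz : z ∈ C) (hz₀ : T p₀ z = z) (hzp : ∀ j, T (p j) z = z) :
    ∀ lam : Fin n → ℝ, (∀ j, 0 ≤ lam j) →
      T (∑ j, lam j • p j) z = z := by
  classical
  intro lam hlam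
  set F : (Fin n → ℝ) → Prop := fun q => (∀ i, 0 ≤ q i) ∧ T q z = z with hF
  have hF1 : ∀ q r, F q → F r → F (q + r) := by
    rintro q r ⟨hq0, hqz⟩ ⟨hr0, hrz⟩
    refine ⟨fun i => add_nonneg (hq0 i) (hr0 i), ?_⟩
    rw [hsemi q r hq0 hr0 z hz, hrz, hqz]
  have hF3 : ∀ q r, (∀ i, 0 ≤ q i) → F r → F (q + r) → F q := by
    rintro q r hq0 ⟨hr0, hrz⟩ ⟨-, hqrz⟩
    refine ⟨hq0, ?_⟩
    rw [hsemi q r hq0 hr0 z hz, hrz] at hqrz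
    exact hqrz
  have hFp0 : F p₀ := ⟨hp₀pos, hz₀⟩
  have hFpj : ∀ j, F (p j) := fun j => ⟨hp j, hzp j⟩
  set v : ℕ → (Fin n → ℕ) → (Fin n → ℝ) :=
    fun k m => (k:ℝ) • p₀ + ∑ j, ((m j : ℝ)) • p j with hv
  have hF5 : ∀ (tot k : ℕ) (m : Fin n → ℕ), k + ∑ j, m j = tot → 1 ≤ tot → F (v k m) := by
    intro tot
    induction tot using Nat.strong_induction_on with
    | _ tot ih =>
      intro k m htot h1
      rcases Nat.eq_zero_or_pos k with hk0 | hkpos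
      · -- k = 0
        subst hk0
        have hsum : 1 ≤ ∑ j, m j := by omega
        have hex : ∃ j, m j ≠ 0 := by
          by_contra hall
          push_neg at hall
          rw [Finset.sum_congr rfl (fun j _ => hall j)] at hsum
          simp at hsum
        obtain ⟨j, hj⟩ := hex
        set m' : Fin n → ℕ := Function.update m j (m j - 1) with hm'
        have hm'j : m' j = m j - 1 := Function.update_self _ _ _
        have hm'ne : ∀ l, l ≠ j → m' l = m l := fun l hl => Function.update_of_ne hl _ _
        have e1 : ∑ l, m' l = (m j - 1) + ∑ l ∈ Finset.univ \ {j}, m l := by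
          rw [hm']
          exact Finset.sum_update_of_mem (Finset.mem_univ j) m (m j - 1)
        have e2 : ∑ l, m l = m j + ∑ l ∈ Finset.univ \ {j}, m l := by
          rw [← Finset.sum_erase_add _ m (Finset.mem_univ j), Finset.erase_eq]
          omega
        have hsum' : ∑ l, m' l + 1 = ∑ l, m l := by omega
        have hsplitm : ∑ l, ((m l : ℝ)) • p l
            = ((m j : ℝ)) • p j + ∑ l ∈ Finset.univ.erase j, ((m l : ℝ)) • p l :=
          (Finset.add_sum_erase _ (fun l => ((m l : ℝ)) • p l) (Finset.mem_univ j)).symm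
        have hsplitm' : ∑ l, ((m' l : ℝ)) • p l
            = ((m j - 1 : ℕ) : ℝ) • p j + ∑ l ∈ Finset.univ.erase j, ((m l : ℝ)) • p l := by
          rw [← hm'j,
            Finset.add_sum_erase _ (fun l => ((m' l : ℝ)) • p l) (Finset.mem_univ j)
              |>.symm.trans rfl]
          congr 1
          exact Finset.sum_congr rfl
            (fun l hl => by rw [hm'ne l (Finset.ne_of_mem_erase hl)])
        have hdecomp : v 0 m = p j + v 0 m' := by
          simp only [hv]
          simp only [Nat.cast_zero, zero_smul, zero_add]
          rw [hsplitm, hsplitm']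
          have hcast : ((m j : ℝ)) = 1 + ((m j - 1 : ℕ) : ℝ) := by
            have h1j : (1:ℕ) ≤ m j := Nat.one_le_iff_ne_zero.2 hj
            push_cast [Nat.cast_sub h1j]
            ring
          rw [hcast, add_smul, one_smul]
          abel
        rcases Nat.eq_zero_or_pos (∑ l, m' l) with hz' | hpos'
        · have hm'0 : ∀ l, (m' l : ℝ) = 0 := by
            intro l
            have := (Finset.sum_eq_zero_iff.1 hz') l (Finset.mem_univ l)
            exact_mod_cast this
          have : v 0 m = p j := by
            rw [hdecomp]
            simp only [hv, Nat.cast_zero, zero_smul, zero_add]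
            rw [Finset.sum_congr rfl (fun l _ => by rw [hm'0 l, zero_smul])]
            simp
          rw [this]
          exact hFpj j
        · have hrest : F (v 0 m') := by
            apply ih (0 + ∑ l, m' l) (by omega) 0 m' rfl (by omega)
          rw [hdecomp]
          exact hF1 _ _ (hFpj j) hrest
      · -- k ≥ 1
        have hdecomp : v k m = p₀ + v (k-1) m := by
          simp only [hv]
          have hcast : ((k : ℝ)) = 1 + ((k - 1 : ℕ) : ℝ) := by
            push_cast [Nat.cast_sub hkpos]
            ring
          rw [hcast, add_smul, one_smul]
          abel
        rcases Nat.eq_zero_or_pos ((k-1) + ∑ l, m l) with hz' | hpos'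
        · have hm0 : ∀ l, (m l : ℝ) = 0 := by
            intro l
            have h0 : ∑ l, m l = 0 := by omega
            have := (Finset.sum_eq_zero_iff.1 h0) l (Finset.mem_univ l)
            exact_mod_cast this
          have hk1 : k = 1 := by omega
          have : v k m = p₀ := by
            rw [hdecomp, hk1]
            simp only [hv, Nat.sub_self, Nat.cast_zero, zero_smul, zero_add]
            rw [Finset.sum_congr rfl (fun l _ => by rw [hm0 l, zero_smul])]
            simp
          rw [this]
          exact hFp0
        · have hrest : F (v (k-1) m) := by
            apply ih ((k-1) + ∑ l, m l) (by omega) (k-1) m rfl (by omega)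
          rw [hdecomp]
          exact hF1 _ _ hFp0 hrest
  -- step: F for integer shifts
  have hF6 : ∀ (k : ℕ) (m : Fin n → ℤ), (∀ j, 0 ≤ (k:ℝ) * α j + (m j:ℝ)) →
      F (∑ j, ((k:ℝ) * α j + (m j:ℝ)) • p j) := by
    intro k m hs
    set q : Fin n → ℝ := ∑ j, ((k:ℝ) * α j + (m j:ℝ)) • p j with hq
    have hqeq : q = (k:ℝ) • p₀ + ∑ j, ((m j:ℝ)) • p j := by
      rw [hq, hp₀, Finset.smul_sum, ← Finset.sum_add_distrib]
      apply Finset.sum_congr rfl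
      intro j _
      rw [smul_smul, ← add_smul]
    set M : ℕ := (Finset.univ.sup fun j => (-(m j)).toNat) + 1 with hM
    have hMj : ∀ j, 0 ≤ m j + M := by
      intro j
      have h1 : (-(m j)).toNat ≤ Finset.univ.sup fun j => (-(m j)).toNat :=
        Finset.le_sup (f := fun j => (-(m j)).toNat) (Finset.mem_univ j)
      omega
    set r : Fin n → ℝ := v 1 (fun _ => M) with hr
    have hFr : F r := by
      apply hF5 (1 + ∑ _j : Fin n, M) 1 _ rfl (by omega)
    have hc1 : ∀ j : Fin n, (((m j + M).toNat : ℝ)) = (m j : ℝ) + (M:ℝ) := by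
      intro j
      have h0 := Int.toNat_of_nonneg (hMj j)
      have h2 : (((m j + M).toNat : ℤ) : ℝ) = ((m j + M : ℤ) : ℝ) := by
        rw [h0]
      push_cast at h2 ⊢
      linarith
    have hqr : q + r = v (k+1) (fun j => (m j + M).toNat) := by
      simp only [hqeq, hr, hv]
      have h5 : ∑ j, (((m j + (M:ℤ)).toNat : ℝ)) • p j
          = (∑ j, ((m j:ℝ)) • p j) + ∑ j, ((M:ℝ)) • p j := by
        rw [← Finset.sum_add_distrib]
        apply Finset.sum_congr rfl
        intro j _
        rw [hc1 j, add_smul]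
      rw [h5]
      push_cast
      module
    apply hF3 q r ?_ hFr ?_
    · intro i
      rw [hq, Finset.sum_apply]
      apply Finset.sum_nonneg
      intro j _
      have : ((( (k:ℝ) * α j + (m j:ℝ))) • p j) i = ((k:ℝ) * α j + (m j:ℝ)) * p j i := rfl
      rw [this]
      exact mul_nonneg (hs j) (hp j i)
    · rw [hqr]
      apply hF5 ((k+1) + ∑ j, (m j + M).toNat) (k+1) _ rfl (by omega)
  -- approximation sequence
  have happrox : ∀ i : ℕ, ∃ sv : Fin n → ℝ, F (∑ j, sv j • p j) ∧
      ∀ j, lam j ≤ sv j ∧ sv j < lam j + 1/(i+1) := by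
    intro i
    have hhalf : (0:ℝ) < 1/(i+1)/2 := by positivity
    obtain ⟨t, ht⟩ := kron α hα (fun j => lam j + 1/(i+1)/2) hhalf
    set mm : Fin n → ℤ := fun j => -(round ((t:ℝ) * α j - (lam j + 1/(i+1)/2))) with hmm
    set sv : Fin n → ℝ := fun j => (t:ℝ) * α j + (mm j : ℝ) with hsv
    have hsvb : ∀ j, lam j ≤ sv j ∧ sv j < lam j + 1/(i+1) := by
      intro j
      have h := ht j
      rw [abs_lt] at h
      have : sv j = (t:ℝ) * α j - (lam j + 1/(i+1)/2)
          - round ((t:ℝ) * α j - (lam j + 1/(i+1)/2)) + (lam j + 1/(i+1)/2) := by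
        rw [hsv, hmm]
        push_cast
        ring
      constructor
      · rw [this]; linarith [h.1]
      · rw [this]; linarith [h.2]
    refine ⟨sv, ?_, hsvb⟩
    exact hF6 t mm (fun j => le_trans (hlam j) (hsvb j).1)
  choose sv hsvF hsvb using happrox
  set q : Fin n → ℝ := ∑ j, lam j • p j with hqdef
  -- convergence
  have htendsv : Tendsto sv atTop (nhds lam) := by
    rw [tendsto_pi_nhds]
    intro j
    have hub : Tendsto (fun i : ℕ => lam j + 1/((i:ℝ)+1)) atTop (nhds (lam j)) := by
      have h0 : Tendsto (fun i : ℕ => 1/((i:ℝ)+1)) atTop (nhds 0) :=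
        tendsto_one_div_add_atTop_nhds_zero_nat
      have := h0.const_add (lam j)
      simpa using this
    apply tendsto_of_tendsto_of_tendsto_of_le_of_le tendsto_const_nhds hub
    · intro i; exact (hsvb i j).1
    · intro i; exact le_of_lt (hsvb i j).2
  have hgcont : Continuous (fun x : Fin n → ℝ => ∑ j, x j • p j) := by
    apply continuous_finset_sum
    intro j _
    exact (continuous_apply j).smul continuous_const
  have hQt : Tendsto (fun i => ∑ j, sv i j • p j) atTop (nhds q) :=
    (hgcont.tendsto lam).comp htendsv
  have hq0 : ∀ i2, 0 ≤ q i2 := by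
    intro i2
    rw [hqdef, Finset.sum_apply]
    apply Finset.sum_nonneg
    intro j _
    exact mul_nonneg (hlam j) (hp j i2)
  have hco := hcont z hz q hq0
  have h1 : Tendsto (fun i => ∑ j, sv i j • p j) atTop
      (nhdsWithin q {r : Fin n → ℝ | ∀ i, 0 ≤ r i}) :=
    tendsto_nhdsWithin_of_tendsto_nhds_of_eventually_within _ hQt
      (Filter.Eventually.of_forall (fun i => (hsvF i).1))
  have h2 : Tendsto ((fun r => T r z) ∘ (fun i => ∑ j, sv i j • p j)) atTop
      (@nhds E τ (T q z)) := Filter.Tendsto.comp hco h1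
  have h3 : ((fun r => T r z) ∘ (fun i => ∑ j, sv i j • p j)) = fun _ => z :=
    funext fun i => (hsvF i).2
  rw [h3] at h2
  have h4 : Tendsto (fun _ : ℕ => z) atTop (@nhds E τ z) :=
    @tendsto_const_nhds E τ ℕ z atTop
  exact @tendsto_nhds_unique E ℕ τ hτ _ atTop _ _ atTop_neBot h2 h4
end

section
/- Let E be a Banach space, let τ be a Hausdorff topology on E, and let {T(p) : p ∈ ℝ₊ⁿ} be an n-parameter τ-continuous semigroup of mappings on a subset C of E. For 1 ≤ k ≤ n let α_k be the square root of the k-th prime number, and put p₀ = α₁e₁ + α₂e₂ + ⋯ + αₙeₙ ∈ ℝ₊ⁿ, where e_k is the k-th standard basis vector of ℝⁿ. Then ⋂_{p ∈ ℝ₊ⁿ} F(T(p)) = F(T(p₀)) ∩ F(T(e₁)) ∩ F(T(e₂)) ∩ ⋯ ∩ F(T(eₙ)). -/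
open Real Finset

noncomputable def Rg : ℕ → Subring ℝ := fun j => Nat.rec ⊥ (fun j R =>
  { carrier := {x : ℝ | ∃ a ∈ R, ∃ b ∈ R, x = a + b * √(Nat.nth Nat.Prime j)}
    zero_mem' := ⟨0, zero_mem R, 0, zero_mem R, by ring⟩
    one_mem' := ⟨1, one_mem R, 0, zero_mem R, by ring⟩
    add_mem' := by
      rintro x y ⟨a, ha, b, hb, rfl⟩ ⟨cc, hc, dd, hd, rfl⟩
      exact ⟨a + cc, add_mem ha hc, b + dd, add_mem hb hd, by ring⟩
    neg_mem' := by
      rintro x ⟨a, ha, b, hb, rfl⟩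
      exact ⟨-a, neg_mem ha, -b, neg_mem hb, by ring⟩
    mul_mem' := by
      rintro x y ⟨a, ha, b, hb, rfl⟩ ⟨cc, hc, dd, hd, rfl⟩
      have sq : √(Nat.nth Nat.Prime j) * √(Nat.nth Nat.Prime j) = (Nat.nth Nat.Prime j : ℝ) :=
        Real.mul_self_sqrt (Nat.cast_nonneg _)
      refine ⟨a * cc + b * dd * (Nat.nth Nat.Prime j : ℝ),
        add_mem (mul_mem ha hc) (mul_mem (mul_mem hb hd) (natCast_mem R _)),
        a * dd + b * cc, add_mem (mul_mem ha hd) (mul_mem hb hc), ?_⟩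
      linear_combination (b * dd) * sq }) j

lemma Rg_succ_mem {j : ℕ} {x : ℝ} :
    x ∈ Rg (j + 1) ↔ ∃ a ∈ Rg j, ∃ b ∈ Rg j, x = a + b * √(Nat.nth Nat.Prime j) :=
  Iff.rfl

lemma Rg_mono {j : ℕ} : Rg j ≤ Rg (j + 1) := fun x hx =>
  Rg_succ_mem.mpr ⟨x, hx, 0, zero_mem _, by ring⟩

lemma sqrt_nth_prime_mem {i j : ℕ} (h : i < j) : √(Nat.nth Nat.Prime i) ∈ Rg j := by
  induction j with
  | zero => omega
  | succ j ih =>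
    rcases Nat.lt_succ_iff_lt_or_eq.mp h with h | rfl
    · exact Rg_mono (ih h)
    · exact Rg_succ_mem.mpr ⟨0, zero_mem _, 1, one_mem _, by ring⟩

lemma nth_prime_prime (i : ℕ) : (Nat.nth Nat.Prime i).Prime :=
  Nat.nth_mem_of_infinite Nat.infinite_setOf_prime i

lemma Rg_key : ∀ j : ℕ, ∀ d : ℕ, Squarefree d → 1 < d →
    (∀ i, i < j → ¬ (Nat.nth Nat.Prime i ∣ d)) →
    ∀ b ∈ Rg j, ∀ a ∈ Rg j, b * √d = a → b = 0 := by
  intro j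
  induction j with
  | zero =>
    intro d hsf hd1 _ b hb a ha hba
    rcases Subring.mem_bot.mp hb with ⟨B, rfl⟩
    rcases Subring.mem_bot.mp ha with ⟨A, rfl⟩
    by_contra hB
    have hB0 : B ≠ 0 := by exact_mod_cast hB
    have hns : ¬ IsSquare d := by
      rintro ⟨r, rfl⟩
      have : IsUnit r := hsf r (dvd_refl _)
      rw [Nat.isUnit_iff] at this
      subst this
      omega
    have hirr : Irrational (√(d : ℕ)) := irrational_sqrt_natCast_iff.mpr hns
    refine hirr ⟨(A : ℚ) / (B : ℚ), ?_⟩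
    have : √(d:ℕ) = (A : ℝ) / (B : ℝ) := by
      field_simp at hba ⊢
      linarith [hba]
    rw [this]
    push_cast
    ring
  | succ j ih =>
    intro d hsf hd1 hdvd b hb a ha hba
    set q : ℕ := Nat.nth Nat.Prime j with hqdef
    have hq : q.Prime := nth_prime_prime j
    have sqq : √q * √q = (q : ℝ) := Real.mul_self_sqrt (Nat.cast_nonneg _)
    have sdd : √d * √d = (d : ℝ) := Real.mul_self_sqrt (Nat.cast_nonneg _)
    have IHq : ∀ b' ∈ Rg j, ∀ a' ∈ Rg j, b' * √q = a' → b' = 0 := by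
      refine ih q hq.squarefree hq.one_lt ?_
      intro i hij hdq
      have : Nat.nth Nat.Prime i = q :=
        (Nat.prime_dvd_prime_iff_eq (nth_prime_prime i) hq).mp hdq
      exact absurd (Nat.nth_injective Nat.infinite_setOf_prime this) (Nat.ne_of_lt hij)
    have IHd : ∀ b' ∈ Rg j, ∀ a' ∈ Rg j, b' * √d = a' → b' = 0 :=
      ih d hsf hd1 (fun i hij => hdvd i (Nat.lt_succ_of_lt hij))
    rcases Rg_succ_mem.mp hb with ⟨b₁, hb₁, b₂, hb₂, rfl⟩
    rcases Rg_succ_mem.mp ha with ⟨a₁, ha₁, a₂, ha₂, rfl⟩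
    by_contra hbne
    by_cases hc : b₁ - b₂ * √q = 0
    · have hb₂0 : b₂ = 0 := IHq b₂ hb₂ b₁ hb₁ (by linarith)
      rw [hb₂0] at hc
      simp at hc
      rw [hb₂0, hc] at hbne
      simp at hbne
    · -- conjugate trick
      set r : ℝ := b₁ ^ 2 - b₂ ^ 2 * q with hrdef
      have hrmem : r ∈ Rg j := by
        exact sub_mem (pow_mem hb₁ 2) (mul_mem (pow_mem hb₂ 2) (natCast_mem _ _))
      have hrfactor : (b₁ + b₂ * √q) * (b₁ - b₂ * √q) = r := by
        rw [hrdef]; linear_combination (-(b₂ ^ 2)) * sqq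
      have hr0 : r ≠ 0 := by
        rw [← hrfactor]; exact mul_ne_zero hbne hc
      set s : ℝ := a₁ * b₁ - a₂ * b₂ * q with hsdef
      set t : ℝ := a₂ * b₁ - a₁ * b₂ with htdef
      have hsmem : s ∈ Rg j := sub_mem (mul_mem ha₁ hb₁)
        (mul_mem (mul_mem ha₂ hb₂) (natCast_mem _ _))
      have htmem : t ∈ Rg j := sub_mem (mul_mem ha₂ hb₁) (mul_mem ha₁ hb₂)
      have key : √d * r = s + t * √q := by
        rw [hrdef, hsdef, htdef]
        linear_combination (b₁ - b₂ * √q) * hba + (b₂ ^ 2 * √d - a₂ * b₂) * sqq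
      have key2 : (2 * s * t) * √q = d * r ^ 2 - s ^ 2 - t ^ 2 * q := by
        linear_combination (-(√d * r + s + t * √q)) * key + r ^ 2 * sdd - t ^ 2 * sqq
      have hst : 2 * s * t = 0 :=
        IHq _ (mul_mem (mul_mem (intCast_mem _ 2) hsmem) htmem)
          _ (sub_mem (sub_mem (mul_mem (natCast_mem _ d) (pow_mem hrmem 2)) (pow_mem hsmem 2))
              (mul_mem (pow_mem htmem 2) (natCast_mem _ _))) key2
      have hst' : s = 0 ∨ t = 0 := by
        rcases mul_eq_zero.mp hst with h | h
        · rcases mul_eq_zero.mp h with h | h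
          · norm_num at h
          · exact Or.inl h
        · exact Or.inr h
      rcases hst' with hs0 | ht0
      · -- s = 0 : √d * r = t * √q, multiply by √q
        have hdq : r * √((d * q : ℕ) : ℝ) = t * q := by
          have hsp : √((d * q : ℕ) : ℝ) = √d * √q := by
            push_cast
            exact Real.sqrt_mul (Nat.cast_nonneg _) _
          rw [hsp]
          linear_combination √q * key + √q * hs0 + t * sqq
        have hqd : ¬ q ∣ d := hdvd j (Nat.lt_succ_self j)
        have hco : Nat.Coprime d q := Nat.coprime_comm.mp (hq.coprime_iff_not_dvd.mpr hqd)
        have hsfdq : Squarefree (d * q) := (Nat.squarefree_mul hco).mpr ⟨hsf, hq.prime.squarefree⟩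
        have hdq1 : 1 < d * q := lt_of_lt_of_le hd1 (Nat.le_mul_of_pos_right d hq.pos)
        have hdvddq : ∀ i, i < j → ¬ (Nat.nth Nat.Prime i ∣ d * q) := by
          intro i hij hdvd'
          rcases (Nat.Prime.dvd_mul (nth_prime_prime i)).mp hdvd' with h | h
          · exact hdvd i (Nat.lt_succ_of_lt hij) h
          · have : Nat.nth Nat.Prime i = q :=
              (Nat.prime_dvd_prime_iff_eq (nth_prime_prime i) hq).mp h
            exact absurd (Nat.nth_injective Nat.infinite_setOf_prime this) (Nat.ne_of_lt hij)
        exact hr0 (ih (d * q) hsfdq hdq1 hdvddq r hrmem (t * q)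
          (mul_mem htmem (natCast_mem _ _)) hdq)
      · -- t = 0 : √d * r = s
        exact hr0 (IHd r hrmem s hsmem (by linear_combination key + √q * ht0))

lemma nth_prime_not_dvd {i j : ℕ} (h : i ≠ j) :
    ¬ Nat.nth Nat.Prime i ∣ Nat.nth Nat.Prime j := by
  intro hd
  exact h (Nat.nth_injective Nat.infinite_setOf_prime
    ((Nat.prime_dvd_prime_iff_eq (nth_prime_prime i) (nth_prime_prime j)).mp hd))

lemma sqrt_prime_indep (N : ℕ) (k : ℕ → ℤ) (c : ℤ)
    (h : (c : ℝ) + ∑ i ∈ Finset.range N, (k i : ℝ) * √(Nat.nth Nat.Prime i) = 0) :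
    ∀ i < N, k i = 0 := by
  induction N generalizing c with
  | zero => intro i hi; omega
  | succ N ih =>
    rw [Finset.sum_range_succ] at h
    have hsum : (c : ℝ) + ∑ i ∈ Finset.range N, (k i : ℝ) * √(Nat.nth Nat.Prime i) ∈ Rg N :=
      add_mem (intCast_mem _ _) (Subring.sum_mem _ fun i hi =>
        mul_mem (intCast_mem _ _) (sqrt_nth_prime_mem (Finset.mem_range.mp hi)))
    have hkN : (k N : ℝ) = 0 :=
      Rg_key N (Nat.nth Nat.Prime N) (nth_prime_prime N).prime.squarefree
        (nth_prime_prime N).one_lt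
        (fun i hi => nth_prime_not_dvd (Nat.ne_of_lt hi))
        (k N) (intCast_mem _ _)
        (-((c : ℝ) + ∑ i ∈ Finset.range N, (k i : ℝ) * √(Nat.nth Nat.Prime i)))
        (neg_mem hsum) (by linarith)
    have hkN' : k N = 0 := by exact_mod_cast hkN
    intro i hi
    rcases Nat.lt_succ_iff_lt_or_eq.mp hi with hi' | rfl
    · exact ih c (by rw [hkN] at h; simpa using h) i hi'
    · exact hkN'


open Filter Topology Submodule

theorem dense_group_eq_top {n : ℕ} (H : AddSubgroup (Fin n → ℝ))
    (hcl : IsClosed (H : Set (Fin n → ℝ)))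
    (hfun : ∀ f : (Fin n → ℝ) →ₗ[ℝ] ℝ, f ≠ 0 → ∃ h ∈ H, ∀ m : ℤ, f h ≠ (m : ℝ)) :
    H = ⊤ := by
  classical
  let V : Submodule ℝ (Fin n → ℝ) :=
    { carrier := {v | ∀ t : ℝ, t • v ∈ H}
      add_mem' := fun hv hw t => by simpa [smul_add] using H.add_mem (hv t) (hw t)
      zero_mem' := fun t => by simpa using H.zero_mem
      smul_mem' := fun c v hv t => by simpa [smul_smul] using hv (t * c) }
  have hVH : (V : Set (Fin n → ℝ)) ⊆ H := fun v hv => by simpa using hv 1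
  by_cases hspan : Submodule.span ℝ (H : Set (Fin n → ℝ)) = ⊤
  swap
  · exfalso
    obtain ⟨f, hf0, hfbot⟩ :=
      Submodule.exists_dual_map_eq_bot_of_lt_top (lt_top_iff_ne_top.mpr hspan) inferInstance
    obtain ⟨h, hh, hne⟩ := hfun f hf0
    refine hne 0 ?_
    have : f h ∈ Submodule.map f (Submodule.span ℝ (H : Set (Fin n → ℝ))) :=
      Submodule.mem_map_of_mem (Submodule.subset_span hh)
    rw [hfbot] at this
    simpa using this
  by_cases hV : V = ⊤
  · ext x
    simp only [AddSubgroup.mem_top, iff_true]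
    exact hVH (hV ▸ Submodule.mem_top)
  · exfalso
    obtain ⟨W, hW⟩ := Submodule.exists_isCompl V
    set proj := Submodule.linearProjOfIsCompl W V hW.symm with hprojdef
    -- h - proj h ∈ V for any h
    have hker : ∀ h : Fin n → ℝ, h - ↑(proj h) ∈ V := by
      intro h
      have h1 : ((Submodule.linearProjOfIsCompl W V hW.symm) (↑(proj h) : Fin n → ℝ)) = proj h :=
        Submodule.linearProjOfIsCompl_apply_left hW.symm (proj h)
      have h2 : proj (h - ↑(proj h)) = 0 := by
        rw [map_sub]
        rw [hprojdef] at h1 ⊢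
        rw [h1, sub_self]
      exact (Submodule.linearProjOfIsCompl_apply_eq_zero_iff hW.symm).mp h2
    have hprojH : ∀ h ∈ H, (↑(proj h) : Fin n → ℝ) ∈ H := by
      intro h hh
      have : h - (h - ↑(proj h)) = ↑(proj h) := by ring
      rw [← this]
      exact AddSubgroup.sub_mem H hh (hVH (hker h))
    -- the lattice
    let L : Submodule ℤ ↥W :=
      { carrier := {w : ↥W | (w : Fin n → ℝ) ∈ H}
        add_mem' := fun ha hb => by
          simpa using H.add_mem ha hb
        zero_mem' := by simpa using H.zero_mem
        smul_mem' := fun c w hw => by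
          have : ((c • w : ↥W) : Fin n → ℝ) = c • (w : Fin n → ℝ) := rfl
          rw [Set.mem_setOf_eq, this]
          exact AddSubgroup.zsmul_mem H hw c }
    -- discreteness
    have key : ∃ ε > 0, ∀ w : ↥W, (w : Fin n → ℝ) ∈ H → ‖w‖ < ε → w = 0 := by
      by_contra hno
      push_neg at hno
      have hseq : ∀ j : ℕ, ∃ w : ↥W, ((w : Fin n → ℝ) ∈ H) ∧ ‖w‖ < (j + 1 : ℝ)⁻¹ ∧ w ≠ 0 := by
        intro j
        obtain ⟨w, h1, h2, h3⟩ := hno ((j + 1 : ℝ)⁻¹) (by positivity)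
        exact ⟨w, h1, h2, h3⟩
      choose w hwH hwn hw0 using hseq
      set x : ℕ → (Fin n → ℝ) := fun j => (w j : Fin n → ℝ) with hxdef
      have hx0 : ∀ j, x j ≠ 0 := by
        intro j hx
        exact hw0 j (Subtype.coe_injective (by simpa [hxdef] using hx))
      have hxn : ∀ j, ‖x j‖ = ‖w j‖ := fun j => rfl
      have hxpos : ∀ j, 0 < ‖x j‖ := fun j => norm_pos_iff.mpr (hx0 j)
      set u : ℕ → (Fin n → ℝ) := fun j => ‖x j‖⁻¹ • x j with hudef
      have humem : ∀ j, u j ∈ Metric.sphere (0 : Fin n → ℝ) 1 := by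
        intro j
        simp only [Metric.mem_sphere, dist_zero_right, hudef, norm_smul, norm_inv, norm_norm]
        exact inv_mul_cancel₀ (hxpos j).ne'
      obtain ⟨u₀, hu₀mem, φ, hφ, hconv⟩ :=
        (isCompact_sphere (0 : Fin n → ℝ) 1).tendsto_subseq humem
      have hu₀n : ‖u₀‖ = 1 := by simpa using hu₀mem
      have hu₀W : u₀ ∈ W := by
        have hWc : IsClosed (W : Set (Fin n → ℝ)) := Submodule.closed_of_finiteDimensional W
        refine hWc.mem_of_tendsto hconv (Filter.Eventually.of_forall fun j => ?_)
        exact Submodule.smul_mem W _ (w (φ j)).2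
      have hu₀V : u₀ ∈ V := by
        intro t
        have hz : ∀ j : ℕ, (⌊t / ‖x (φ j)‖⌋ : ℝ) • x (φ j) ∈ H := by
          intro j
          have : (⌊t / ‖x (φ j)‖⌋ : ℝ) • x (φ j) = (⌊t / ‖x (φ j)‖⌋ : ℤ) • x (φ j) := by
            rw [Int.cast_smul_eq_zsmul]
          rw [this]
          exact AddSubgroup.zsmul_mem H (hwH (φ j)) _
        have hz2 : Filter.Tendsto (fun j : ℕ => (⌊t / ‖x (φ j)‖⌋ : ℝ) • x (φ j)) atTop
            (nhds (t • u₀)) := by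
          rw [tendsto_iff_norm_sub_tendsto_zero]
          have hbound : ∀ j : ℕ,
              ‖(⌊t / ‖x (φ j)‖⌋ : ℝ) • x (φ j) - t • u₀‖
                ≤ (j + 1 : ℝ)⁻¹ + |t| * ‖u (φ j) - u₀‖ := by
            intro j
            have h1 : (⌊t / ‖x (φ j)‖⌋ : ℝ) • x (φ j) - t • u₀
                = ((⌊t / ‖x (φ j)‖⌋ : ℝ) - t / ‖x (φ j)‖) • x (φ j)
                  + t • (u (φ j) - u₀) := by
              simp only [hudef]
              rw [div_eq_mul_inv]
              module
            rw [h1]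
            refine le_trans (norm_add_le _ _) ?_
            gcongr
            · have h2 : ‖((⌊t / ‖x (φ j)‖⌋ : ℝ) - t / ‖x (φ j)‖) • x (φ j)‖
                  = |(⌊t / ‖x (φ j)‖⌋ : ℝ) - t / ‖x (φ j)‖| * ‖x (φ j)‖ := by
                rw [norm_smul, Real.norm_eq_abs]
              rw [h2]
              have h3 : |(⌊t / ‖x (φ j)‖⌋ : ℝ) - t / ‖x (φ j)‖| ≤ 1 := by
                rw [abs_sub_comm, Int.self_sub_floor, abs_of_nonneg (Int.fract_nonneg _)]
                exact (Int.fract_lt_one _).le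
              calc |(⌊t / ‖x (φ j)‖⌋ : ℝ) - t / ‖x (φ j)‖| * ‖x (φ j)‖
                  ≤ 1 * ‖x (φ j)‖ := by gcongr
                _ = ‖x (φ j)‖ := one_mul _
                _ ≤ (j + 1 : ℝ)⁻¹ := by
                    rw [hxn]
                    refine le_trans (hwn (φ j)).le ?_
                    have hj : (j : ℝ) ≤ (φ j : ℝ) := by exact_mod_cast hφ.le_apply
                    have h0 : (0:ℝ) < (j:ℝ) + 1 := by positivity
                    exact inv_anti₀ h0 (by linarith)
            · rw [norm_smul, Real.norm_eq_abs]
          refine squeeze_zero_norm (fun j => by simpa using hbound j) ?_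
          have l1 : Filter.Tendsto (fun j : ℕ => (j + 1 : ℝ)⁻¹) atTop (nhds 0) := by
            simpa [one_div] using tendsto_one_div_add_atTop_nhds_zero_nat (𝕜 := ℝ)
          have l2 : Filter.Tendsto (fun j : ℕ => |t| * ‖u (φ j) - u₀‖) atTop (nhds 0) := by
            have := (tendsto_iff_norm_sub_tendsto_zero.mp hconv).const_mul |t|
            simpa using this
          simpa using l1.add l2
        exact hcl.mem_of_tendsto hz2 (Filter.Eventually.of_forall hz)
      have : u₀ = 0 := by
        have := hW.disjoint
        exact (Submodule.disjoint_def.mp this) u₀ hu₀V hu₀W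
      rw [this] at hu₀n
      simp at hu₀n
    obtain ⟨ε, hε, hdisc⟩ := key
    haveI : DiscreteTopology ↥L := by
      rw [discreteTopology_iff_isOpen_singleton_zero]
      have hset : ({0} : Set ↥L) = (Subtype.val) ⁻¹' (Metric.ball (0 : ↥W) ε) := by
        ext v
        simp only [Set.mem_singleton_iff, Set.mem_preimage, Metric.mem_ball, dist_zero_right]
        constructor
        · rintro rfl; simpa using hε
        · intro hv; exact Subtype.ext (hdisc _ v.2 hv)
      rw [hset]
      exact Metric.isOpen_ball.preimage continuous_subtype_val
    have hspanL : Submodule.span ℝ (L : Set ↥W) = ⊤ := by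
      apply Submodule.map_injective_of_injective (Submodule.injective_subtype W)
      rw [Submodule.map_span, Submodule.map_top, Submodule.range_subtype]
      have himg : W.subtype '' (L : Set ↥W) = (H : Set (Fin n → ℝ)) ∩ (W : Set (Fin n → ℝ)) := by
        ext y
        constructor
        · rintro ⟨v, hv, rfl⟩; exact ⟨hv, v.2⟩
        · rintro ⟨hyH, hyW⟩; exact ⟨⟨y, hyW⟩, hyH, rfl⟩
      rw [himg]
      set M := Submodule.span ℝ ((H : Set (Fin n → ℝ)) ∩ (W : Set (Fin n → ℝ))) with hM
      have hMW : M ≤ W := Submodule.span_le.mpr (fun y hy => hy.2)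
      have hsup : M ⊔ V = ⊤ := by
        rw [eq_top_iff, ← hspan]
        refine Submodule.span_le.mpr ?_
        intro h hh
        have h1 : (↑(proj h) : Fin n → ℝ) ∈ M :=
          Submodule.subset_span ⟨hprojH h hh, (proj h).2⟩
        have h2 : h - ↑(proj h) ∈ V := hker h
        have h3 : h = ↑(proj h) + (h - ↑(proj h)) := by ring
        rw [SetLike.mem_coe, h3]
        exact Submodule.add_mem _ (Submodule.mem_sup_left h1) (Submodule.mem_sup_right h2)
      have hmod : (M ⊔ V) ⊓ W = M ⊔ (V ⊓ W) := sup_inf_assoc_of_le V hMW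
      rw [hsup, top_inf_eq, hW.inf_eq_bot, sup_bot_eq] at hmod
      exact hmod.symm
    haveI : IsZLattice ℝ L := ⟨hspanL⟩
    have hWbot : W ≠ ⊥ := by
      intro hbot
      apply hV
      have h2 := hW.sup_eq_top
      rw [hbot, sup_bot_eq] at h2
      exact h2
    haveI : Nontrivial ↥W := Submodule.nontrivial_iff_ne_bot.mpr hWbot
    let b := Module.Free.chooseBasis ℤ ↥L
    let b' := Module.Basis.ofZLatticeBasis ℝ L b
    haveI : Nonempty (Module.Free.ChooseBasisIndex ℤ ↥L) := b'.index_nonempty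
    let i₀ := Classical.arbitrary (Module.Free.ChooseBasisIndex ℤ ↥L)
    let f : (Fin n → ℝ) →ₗ[ℝ] ℝ := (b'.coord i₀).comp proj
    have hf1 : f ↑(b' i₀) = 1 := by
      simp only [f, LinearMap.comp_apply]
      rw [hprojdef, Submodule.linearProjOfIsCompl, Submodule.projectionOnto_apply_left hW.symm (b' i₀)]
      simp [Module.Basis.coord_apply]
    have hf0 : f ≠ 0 := by
      intro hzero
      rw [hzero] at hf1
      simp at hf1
    obtain ⟨h, hh, hne⟩ := hfun f hf0
    have hwL : proj h ∈ L := hprojH h hh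
    refine hne (b.repr ⟨proj h, hwL⟩ i₀) ?_
    have hfh : f h = b'.repr (proj h) i₀ := by simp [f, Module.Basis.coord_apply]
    rw [hfh]
    exact_mod_cast Module.Basis.ofZLatticeBasis_repr_apply ℝ L b ⟨proj h, hwL⟩ i₀


set_option maxHeartbeats 1000000 in
/-- with `α_k` the square root of the k-th prime and
`p₀ = α₁e₁ + ⋯ + αₙeₙ`, for an n-parameter τ-continuous semigroup of mappings,
`⋂_{p ∈ ℝ₊ⁿ} F(T(p)) = F(T(p₀)) ∩ F(T(e₁)) ∩ ⋯ ∩ F(T(eₙ))`. -/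
theorem common_fixed_points_prime_roots
    {n : ℕ} {E : Type*} [NormedAddCommGroup E] [NormedSpace ℝ E] [CompleteSpace E]
    (τ : TopologicalSpace E) (hτ : @T2Space E τ)
    (C : Set E) (T : (Fin n → ℝ) → E → E)
    (hmaps : ∀ p : Fin n → ℝ, (∀ i, 0 ≤ p i) → ∀ x ∈ C, T p x ∈ C)
    (hsemi : ∀ p q : Fin n → ℝ, (∀ i, 0 ≤ p i) → (∀ i, 0 ≤ q i) →
      ∀ x ∈ C, T (p + q) x = T p (T q x))
    (hcont : ∀ x ∈ C,
      @ContinuousOn (Fin n → ℝ) E _ τ (fun p => T p x) {p | ∀ i, 0 ≤ p i})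
    (p₀ : Fin n → ℝ)
    (hp₀ : p₀ = ∑ k : Fin n,
      Real.sqrt (Nat.nth Nat.Prime k) • (Pi.single k 1 : Fin n → ℝ)) :
    (⋂ p ∈ {p : Fin n → ℝ | ∀ i, 0 ≤ p i}, {x ∈ C | T p x = x})
      = {x ∈ C | T p₀ x = x}
        ∩ ⋂ k : Fin n, {x ∈ C | T (Pi.single k 1 : Fin n → ℝ) x = x} := by
  have hp₀i : ∀ i, p₀ i = Real.sqrt (Nat.nth Nat.Prime i) := by
    intro i
    rw [hp₀]
    rw [Finset.sum_apply]
    simp only [Pi.smul_apply, Pi.single_apply, smul_eq_mul]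
    rw [Finset.sum_eq_single i]
    · simp
    · intro k _ hk
      simp [Ne.symm hk]
    · simp
  have hp₀nn : ∀ i, 0 ≤ p₀ i := fun i => by rw [hp₀i]; exact Real.sqrt_nonneg _
  have hednn : ∀ k i, (0:ℝ) ≤ (Pi.single k 1 : Fin n → ℝ) i := by
    intro k i
    rw [Pi.single_apply]
    split <;> norm_num
  apply Set.Subset.antisymm
  · intro x hx
    simp only [Set.mem_iInter] at hx
    exact ⟨hx p₀ hp₀nn, Set.mem_iInter.mpr fun k => hx _ (hednn k)⟩
  · intro x hx
    obtain ⟨⟨hxC, hxp₀⟩, hxe⟩ := hx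
    have hxek : ∀ k, T (Pi.single k 1 : Fin n → ℝ) x = x := by
      intro k
      have := Set.mem_iInter.mp hxe k
      exact this.2
    have hPi_decomp : ∀ v : Fin n → ℝ, v = ∑ k : Fin n, v k • (Pi.single k 1 : Fin n → ℝ) := by
      intro v
      funext i
      rw [Finset.sum_apply]
      simp only [Pi.smul_apply, Pi.single_apply, smul_eq_mul]
      rw [Finset.sum_eq_single i]
      · simp
      · intro k _ hk
        simp [Ne.symm hk]
      · simp
    have hmain : ∀ p : Fin n → ℝ, (∀ i, 0 ≤ p i) → T p x = x := by
      have hT0 : T 0 x = x := by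
        have h := hsemi 0 p₀ (fun i => le_refl 0) hp₀nn x hxC
        rw [zero_add, hxp₀] at h
        exact h.symm
      set S : Set (Fin n → ℝ) := {p | (∀ i, 0 ≤ p i) ∧ T p x = x} with hSdef
      have hS0 : (0 : Fin n → ℝ) ∈ S := ⟨fun i => le_refl 0, hT0⟩
      have hSadd : ∀ p ∈ S, ∀ q ∈ S, p + q ∈ S := by
        rintro p ⟨hp1, hp2⟩ q ⟨hq1, hq2⟩
        refine ⟨fun i => add_nonneg (hp1 i) (hq1 i), ?_⟩
        rw [hsemi p q hp1 hq1 x hxC, hq2, hp2]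
      have hSsub : ∀ p ∈ S, ∀ q : Fin n → ℝ, (∀ i, 0 ≤ q i) → p + q ∈ S → q ∈ S := by
        rintro p ⟨hp1, hp2⟩ q hq1 ⟨_, hpq2⟩
        refine ⟨hq1, ?_⟩
        have h1 : T (q + p) x = T q (T p x) := hsemi q p hq1 hp1 x hxC
        rw [add_comm q p, hpq2, hp2] at h1
        exact h1.symm
      have hSe : ∀ k, (Pi.single k 1 : Fin n → ℝ) ∈ S := fun k => ⟨hednn k, hxek k⟩
      have hSp₀ : p₀ ∈ S := ⟨hp₀nn, hxp₀⟩
      have hSnsmul : ∀ (m : ℕ), ∀ p ∈ S, m • p ∈ S := by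
        intro m
        induction m with
        | zero => intro p _; simpa using hS0
        | succ m ih =>
          intro p hp
          rw [succ_nsmul]
          exact hSadd _ (ih p hp) _ hp
      have hSnat : ∀ a : Fin n → ℕ, (fun i => (a i : ℝ)) ∈ S := by
        intro a
        have hrepr : (fun i => (a i : ℝ)) = ∑ k : Fin n, (a k) • (Pi.single k 1 : Fin n → ℝ) := by
          funext i
          rw [Finset.sum_apply]
          simp only [Pi.smul_apply, Pi.single_apply]
          rw [Finset.sum_eq_single i]
          · simp
          · intro k _ hk
            simp [Ne.symm hk]
          · simp
        rw [hrepr]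
        exact Finset.sum_induction _ (· ∈ S) (fun u v hu hv => hSadd u hu v hv) hS0
          (fun k _ => hSnsmul (a k) _ (hSe k))
      have hSkey : ∀ (m : ℤ) (a : Fin n → ℤ), (∀ i, 0 ≤ (m:ℝ) * p₀ i + (a i : ℝ)) →
          (fun i => (m:ℝ) * p₀ i + (a i : ℝ)) ∈ S := by
        intro m a hg
        rcases le_or_gt 0 m with hm | hm
        · have hmcast : ((m.toNat : ℕ) : ℝ) = (m : ℝ) := by
            exact_mod_cast congrArg (Int.cast : ℤ → ℝ) (Int.toNat_of_nonneg hm)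
          have h1 : (fun i => (((-(a i)).toNat : ℕ) : ℝ)) + (fun i => (m:ℝ) * p₀ i + (a i : ℝ))
              = m.toNat • p₀ + (fun i => (((a i).toNat : ℕ) : ℝ)) := by
            funext i
            have hsm : (m.toNat • p₀) i = ((m.toNat : ℕ) : ℝ) * p₀ i := by
              rw [Pi.smul_apply, nsmul_eq_mul]
            have h3 : ((a i).toNat : ℝ) - ((-(a i)).toNat : ℝ) = (a i : ℝ) := by
              exact_mod_cast congrArg (Int.cast : ℤ → ℝ) (Int.toNat_sub_toNat_neg (a i))
            simp only [Pi.add_apply]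
            rw [hsm, hmcast]
            linarith
          refine hSsub _ (hSnat fun i => (-(a i)).toNat) _ hg ?_
          rw [h1]
          exact hSadd _ (hSnsmul m.toNat p₀ hSp₀) _ (hSnat fun i => (a i).toNat)
        · have hmcast : (((-m).toNat : ℕ) : ℝ) = -(m : ℝ) := by
            have := Int.toNat_of_nonneg (by omega : (0:ℤ) ≤ -m)
            exact_mod_cast congrArg (Int.cast : ℤ → ℝ) this
          have hann : ∀ i, 0 ≤ a i := by
            intro i
            have h2 := hg i
            have h3 : (m:ℝ) * p₀ i ≤ 0 :=
              mul_nonpos_of_nonpos_of_nonneg (by exact_mod_cast hm.le) (hp₀nn i)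
            have : (0:ℝ) ≤ (a i : ℝ) := by linarith
            exact_mod_cast this
          have h1 : ((-m).toNat • p₀) + (fun i => (m:ℝ) * p₀ i + (a i : ℝ))
              = (fun i => (((a i).toNat : ℕ) : ℝ)) := by
            funext i
            have hsm : ((-m).toNat • p₀) i = (((-m).toNat : ℕ) : ℝ) * p₀ i := by
              rw [Pi.smul_apply, nsmul_eq_mul]
            have h3 : (((a i).toNat : ℕ) : ℝ) = (a i : ℝ) := by
              exact_mod_cast congrArg (Int.cast : ℤ → ℝ) (Int.toNat_of_nonneg (hann i))
            simp only [Pi.add_apply]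
            rw [hsm, hmcast, h3]
            ring
          refine hSsub _ (hSnsmul (-m).toNat p₀ hSp₀) _ hg ?_
          rw [h1]
          exact hSnat _
      have hPclosed : IsClosed {p : Fin n → ℝ | ∀ i, 0 ≤ p i} := by
        have hP : {p : Fin n → ℝ | ∀ i, 0 ≤ p i} = ⋂ i, {p : Fin n → ℝ | 0 ≤ p i} := by
          ext p; simp
        rw [hP]
        exact isClosed_iInter fun i => isClosed_le continuous_const (continuous_apply i)
      have hSclosed : IsClosed S := by
        have h1 : S = {p : Fin n → ℝ | ∀ i, 0 ≤ p i} ∩ (fun p => T p x) ⁻¹' {x} := by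
          ext p
          simp only [hSdef, Set.mem_setOf_eq, Set.mem_inter_iff, Set.mem_preimage,
            Set.mem_singleton_iff]
        rw [h1]
        haveI ht1 : @T1Space E τ := @T2Space.t1Space E τ hτ
        exact @ContinuousOn.preimage_isClosed_of_isClosed (Fin n → ℝ) E _ τ _ _ _
          (hcont x hxC) hPclosed (@isClosed_singleton E τ ht1 x)
      set Hgen : Set (Fin n → ℝ) :=
        {p₀} ∪ Set.range (fun k => (Pi.single k 1 : Fin n → ℝ)) with hHgen
      set H : AddSubgroup (Fin n → ℝ) := AddSubgroup.closure Hgen with hHdef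
      have hrep : ∀ h ∈ H, ∃ (m : ℤ) (a : Fin n → ℤ),
          h = fun i => (m:ℝ) * p₀ i + (a i : ℝ) := by
        intro h hh
        refine AddSubgroup.closure_induction ?_ ?_ ?_ ?_ hh
        · rintro y (rfl | ⟨k, rfl⟩)
          · exact ⟨1, 0, by funext i; simp⟩
          · refine ⟨0, fun i => if i = k then 1 else 0, ?_⟩
            funext i
            simp only [Pi.single_apply, Int.cast_zero, zero_mul, zero_add]
            split <;> simp
        · exact ⟨0, 0, by funext i; simp⟩
        · rintro y z - - ⟨my, ay, rfl⟩ ⟨mz, az, rfl⟩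
          exact ⟨my + mz, ay + az, by funext i; simp only [Pi.add_apply]; push_cast; ring⟩
        · rintro y - ⟨my, ay, rfl⟩
          exact ⟨-my, -ay, by funext i; simp only [Pi.neg_apply]; push_cast; ring⟩
      have hD : H.topologicalClosure = ⊤ := by
        apply dense_group_eq_top
        · exact AddSubgroup.isClosed_topologicalClosure H
        · intro f hf0
          by_contra hcon
          push_neg at hcon
          have hek : ∀ k, ∃ c : ℤ, f (Pi.single k 1 : Fin n → ℝ) = c := fun k =>
            hcon _ (H.le_topologicalClosure (AddSubgroup.subset_closure (Or.inr ⟨k, rfl⟩)))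
          choose c hc using hek
          obtain ⟨c₀, hc₀⟩ :=
            hcon p₀ (H.le_topologicalClosure (AddSubgroup.subset_closure (Or.inl rfl)))
          have hfp : f p₀ = ∑ k : Fin n, p₀ k * f (Pi.single k 1 : Fin n → ℝ) := by
            conv_lhs => rw [hPi_decomp p₀]
            rw [map_sum]
            refine Finset.sum_congr rfl fun k _ => ?_
            rw [map_smul, smul_eq_mul]
          set kk : ℕ → ℤ := fun i => if h : i < n then c ⟨i, h⟩ else 0 with hkk
          have hrel : ((-c₀ : ℤ) : ℝ)
              + ∑ i ∈ Finset.range n, (kk i : ℝ) * Real.sqrt (Nat.nth Nat.Prime i) = 0 := by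
            have hsum : ∑ i ∈ Finset.range n, (kk i : ℝ) * Real.sqrt (Nat.nth Nat.Prime i)
                = ∑ k : Fin n, (c k : ℝ) * Real.sqrt (Nat.nth Nat.Prime (k : ℕ)) := by
              rw [← Fin.sum_univ_eq_sum_range]
              refine Finset.sum_congr rfl fun k _ => ?_
              rw [hkk]
              simp [k.2]
            rw [hsum]
            have : ∑ k : Fin n, (c k : ℝ) * Real.sqrt (Nat.nth Nat.Prime (k : ℕ)) = f p₀ := by
              rw [hfp]
              refine Finset.sum_congr rfl fun k _ => ?_
              rw [hc k, hp₀i k, mul_comm]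
            rw [this, hc₀]
            push_cast
            ring
          have hall := sqrt_prime_indep n kk (-c₀) hrel
          have hck : ∀ k : Fin n, c k = 0 := by
            intro k
            have h2 := hall k k.2
            rw [hkk] at h2
            simpa [k.2] using h2
          apply hf0
          apply LinearMap.ext
          intro v
          rw [hPi_decomp v, map_sum]
          simp only [map_smul, smul_eq_mul, LinearMap.zero_apply]
          refine Finset.sum_eq_zero fun k _ => ?_
          rw [hc k, hck k]
          simp
      intro p hp
      rcases Nat.eq_zero_or_pos n with hn | hn
      · haveI : IsEmpty (Fin n) := by rw [hn]; infer_instance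
        have hpp : p = p₀ := funext fun i => isEmptyElim i
        rw [hpp]
        exact hxp₀
      · haveI : Nonempty (Fin n) := ⟨⟨0, hn⟩⟩
        have hpS : p ∈ S := by
          rw [← hSclosed.closure_eq]
          rw [Metric.mem_closure_iff]
          intro ε hε
          have hy : (p + fun _ => ε/2) ∈ closure (H : Set (Fin n → ℝ)) := by
            have h2 : (p + fun _ => ε/2) ∈ H.topologicalClosure := by
              rw [hD]; exact AddSubgroup.mem_top _
            exact h2
          rw [Metric.mem_closure_iff] at hy
          obtain ⟨g, hgH, hgd⟩ := hy (ε/2) (by positivity)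
          obtain ⟨m, a, rfl⟩ := hrep g hgH
          have hgnn : ∀ i, 0 ≤ (m:ℝ) * p₀ i + (a i : ℝ) := by
            intro i
            have h3 := dist_le_pi_dist (p + fun _ => ε/2)
              (fun i => (m:ℝ) * p₀ i + (a i : ℝ)) i
            have h4 : |p i + ε/2 - ((m:ℝ) * p₀ i + (a i : ℝ))| < ε/2 := by
              rw [Real.dist_eq] at h3
              exact lt_of_le_of_lt h3 hgd
            have h5 := (abs_lt.mp h4).2
            have h6 := hp i
            linarith
          refine ⟨_, hSkey m a hgnn, ?_⟩
          have h5 : dist p (p + fun _ => ε/2) = ε/2 := by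
            rw [dist_eq_norm]
            have : p - (p + fun _ => ε/2) = fun _ : Fin n => -(ε/2) := by
              funext i; simp
            rw [this]
            rw [pi_norm_const]
            rw [Real.norm_eq_abs, abs_neg, abs_of_pos (by positivity)]
          calc dist p (fun i => (m:ℝ) * p₀ i + (a i : ℝ))
              ≤ dist p (p + fun _ => ε/2)
                + dist (p + fun _ => ε/2) (fun i => (m:ℝ) * p₀ i + (a i : ℝ)) :=
                dist_triangle _ _ _
            _ < ε/2 + ε/2 := by rw [h5]; linarith
            _ = ε := by ring
        exact hpS.2
    refine Set.mem_iInter₂.mpr fun p hp => ⟨hxC, hmain p hp⟩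
end
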